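/- arXiv:math/0605678 — 11 statements merged into one kernel-verified Lean document; each statement's English description precedes it below -/
import Mathlib

section
/- Let H ⊆ ℂ be an open half-plane whose boundary contains the origin, and let f ∈ ℂ[z₁,…,zₙ] be H-stable, i.e. f(z₁,…,zₙ) ≠ 0 whenever zᵢ ∈ H for all i. Then either ∂f/∂z₁ is the zero polynomial or ∂f/∂z₁ is H-stable. -/
/-!
Write `f = ∑ₖ Pₖ(z₂,…,zₙ) z₁ᵏ` with leading coefficient `P_d`. For `y ∈ Hⁿ`, the univariate
polynomial `f(·, y)` has no roots in `H`, so by Gauss–Lucas neither does its derivative, provided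
it is not constant; this is where `P_d(y) ≠ 0` is needed. That holds by Hurwitz's theorem:
`t ^ d f(t⁻¹, y)` is zero-free for small `t` with `t⁻¹ ∈ H`, and tends to `P_d(y)` as `t → 0`;
Hurwitz's theorem in turn follows from the minimum modulus principle on a small circle.
-/

open MvPolynomial Metric Filter Topology

namespace Polynomial

theorem eval_derivative_ne_zero_of_convex_compl {φ : ℂ[X]} (hφ : 0 < φ.degree) {S : Set ℂ}
    (hS : Convex ℝ Sᶜ) (h : ∀ z ∈ S, φ.eval z ≠ 0) {z : ℂ} (hz : z ∈ S) :
    φ.derivative.eval z ≠ 0 := by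
  intro hz0
  have hφ' : φ.derivative ≠ 0 :=
    derivative_ne_zero.mpr (natDegree_pos_iff_degree_pos.mpr hφ).ne'
  have hroots : φ.rootSet ℂ ⊆ Sᶜ := fun x hx hxS =>
    h x hxS (by simpa using (mem_rootSet.mp hx).2)
  exact convexHull_min hroots hS
    (rootSet_derivative_subset_convexHull_rootSet hφ (mem_rootSet.mpr ⟨hφ', by simpa⟩)) hz

end Polynomial

theorem convex_compl_setOf_re_mul_pos (w : ℂ) : Convex ℝ {s : ℂ | 0 < (w * s).re}ᶜ := by
  simp only [Set.compl_ofPred, not_lt]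
  refine convex_halfSpace_le ⟨fun x y => ?_, fun c x => ?_⟩ 0
  · simp [mul_add]
  · simp [Complex.real_smul, mul_left_comm w]

theorem Complex.exists_mem_sphere_norm_le_of_forall_ne_zero {g : ℂ → ℂ} {c : ℂ} {r : ℝ}
    (hr : 0 < r) (hg : DifferentiableOn ℂ g (closedBall c r))
    (hg0 : ∀ x ∈ closedBall c r, g x ≠ 0) : ∃ x ∈ sphere c r, ‖g x‖ ≤ ‖g c‖ := by
  have hd : DiffContOnCl ℂ g⁻¹ (ball c r) :=
    DifferentiableOn.diffContOnCl (by rw [closure_ball c hr.ne']; exact hg.inv hg0)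
  obtain ⟨x, hx, hmax⟩ := exists_mem_frontier_isMaxOn_norm isBounded_ball (nonempty_ball.2 hr) hd
  rw [frontier_ball c hr.ne'] at hx
  rw [closure_ball c hr.ne'] at hmax
  refine ⟨x, hx, ?_⟩
  have hc := hmax (mem_closedBall_self hr.le)
  simp only [Set.mem_ofPred_eq, Function.comp, Pi.inv_apply, norm_inv] at hc
  exact (inv_le_inv₀ (norm_pos_iff.2 (hg0 c (mem_closedBall_self hr.le)))
    (norm_pos_iff.2 (hg0 x (sphere_subset_closedBall hx)))).mp hc

theorem eventuallyEq_zero_of_tendstoUniformlyOn {α : Type*} {l : Filter α} [l.NeBot]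
    {F : α → ℂ → ℂ} {Γ : ℂ → ℂ} {c : ℂ} {s : Set ℂ} (hs : s ∈ 𝓝 c)
    (hF : ∀ᶠ t in l, DifferentiableOn ℂ (F t) s) (hF0 : ∀ᶠ t in l, ∀ x ∈ s, F t x ≠ 0)
    (hlim : TendstoUniformlyOn F Γ l s) (hΓ : AnalyticAt ℂ Γ c) (hΓc : Γ c = 0) :
    Γ =ᶠ[𝓝 c] 0 := by
  refine hΓ.eventually_eq_zero_or_eventually_ne_zero.resolve_right fun hne => ?_
  obtain ⟨r, hr, hsub⟩ : ∃ r > 0,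
      closedBall c r ⊆ s ∩ {x | ContinuousAt Γ x ∧ (x ≠ c → Γ x ≠ 0)} :=
    nhds_basis_closedBall.mem_iff.mp <| inter_mem hs <|
      (hΓ.eventually_analyticAt.mono fun x hx => hx.continuousAt).and
        (eventually_nhdsWithin_iff.mp hne)
  obtain ⟨x₀, hx₀, hmin⟩ := (isCompact_sphere c r).exists_isMinOn
    (NormedSpace.sphere_nonempty.2 hr.le)
    (fun x hx => (hsub (sphere_subset_closedBall hx)).2.1.continuousWithinAt.norm)
  have hm : 0 < ‖Γ x₀‖ := norm_pos_iff.2 <|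
    (hsub (sphere_subset_closedBall hx₀)).2.2 (ne_of_mem_sphere hx₀ hr.ne')
  obtain ⟨t, hFt, hFt0, hclose⟩ := (hF.and (hF0.and
    (Metric.tendstoUniformlyOn_iff.mp hlim _ (half_pos hm)))).exists
  have hball : closedBall c r ⊆ s := fun x hx => (hsub hx).1
  obtain ⟨x₁, hx₁, hle⟩ := Complex.exists_mem_sphere_norm_le_of_forall_ne_zero hr
    (hFt.mono hball) (fun x hx => hFt0 x (hball hx))
  have hc := hclose c (hball (mem_closedBall_self hr.le))
  have hx₁' := hclose x₁ (hball (sphere_subset_closedBall hx₁))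
  rw [hΓc, dist_zero_left] at hc
  rw [dist_eq_norm] at hx₁'
  have := hmin hx₁
  simp only [Set.mem_ofPred_eq] at this
  linarith [norm_sub_norm_le (Γ x₁) (F t x₁)]

theorem IsCompact.tendstoUniformlyOn_of_continuous {α β E : Type*} [TopologicalSpace α]
    [TopologicalSpace β] [UniformSpace E] {F : α → β → E} {K : Set β} (hK : IsCompact K)
    (hF : Continuous (Function.uncurry F)) (q : α) : TendstoUniformlyOn F (F q) (𝓝 q) K := by
  intro u hu
  obtain ⟨v, hv, hvu⟩ := hK.mem_uniformity_of_prod hF.continuousOn (Set.mem_univ q)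
    (symm_le_uniformity hu)
  rw [nhdsWithin_univ] at hv
  exact mem_of_superset hv fun p hp x hx => hvu p hp x hx

namespace MvPolynomial

variable {n : ℕ}

theorem finSuccEquiv_pderiv_zero {R : Type*} [CommSemiring R] (f : MvPolynomial (Fin (n + 1)) R) :
    finSuccEquiv R n (pderiv 0 f) = Polynomial.derivative (finSuccEquiv R n f) := by
  induction f using MvPolynomial.induction_on with
  | C a => simp [finSuccEquiv_apply]
  | add p q hp hq => simp [map_add, hp, hq]
  | mul_X p i hp =>
    rw [pderiv_mul, map_add, map_mul, map_mul, hp, map_mul, Polynomial.derivative_mul]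
    induction i using Fin.cases with
    | zero => simp [finSuccEquiv_X_zero]
    | succ j => simp [pderiv_X_of_ne (Fin.succ_ne_zero j), finSuccEquiv_X_succ]

variable {K : Type*} [Field K]

noncomputable def finSuccReverse (f : MvPolynomial (Fin (n + 1)) K) :
    MvPolynomial (Fin (n + 1)) K :=
  (finSuccEquiv K n).symm (finSuccEquiv K n f).reverse

theorem eval_cons_zero_finSuccReverse (f : MvPolynomial (Fin (n + 1)) K) (y : Fin n → K) :
    eval (Fin.cons 0 y) (finSuccReverse f) = eval y (finSuccEquiv K n f).leadingCoeff := by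
  rw [eval_eq_eval_mv_eval', finSuccReverse, AlgEquiv.apply_symm_apply, Polynomial.eval_map,
    Polynomial.eval₂_at_zero, Polynomial.coeff_zero_reverse]

theorem eval_cons_finSuccReverse (f : MvPolynomial (Fin (n + 1)) K) {t : K} (ht : t ≠ 0)
    (y : Fin n → K) :
    eval (Fin.cons t y) (finSuccReverse f) =
      t ^ (finSuccEquiv K n f).natDegree * eval (Fin.cons t⁻¹ y) f := by
  have := invertibleOfNonzero (inv_ne_zero ht)
  have h := Polynomial.eval₂_reverse_mul_pow (eval y) t⁻¹ (finSuccEquiv K n f)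
  rw [invOf_eq_inv, inv_inv] at h
  rw [eval_eq_eval_mv_eval', eval_eq_eval_mv_eval', finSuccReverse, AlgEquiv.apply_symm_apply,
    Polynomial.eval_map, Polynomial.eval_map, ← h, mul_left_comm, ← mul_pow, mul_inv_cancel₀ ht,
    one_pow, mul_one]

theorem analyticAt_eval_cons_add_smul (p : MvPolynomial (Fin (n + 1)) ℂ) (t : ℂ)
    (y v : Fin n → ℂ) (x : ℂ) :
    AnalyticAt ℂ (fun x : ℂ => eval (Fin.cons t (y + x • v)) p) x := by
  simp_rw [← coe_aeval_eq_eval]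
  refine AnalyticAt.aeval_mvPolynomial (fun i => ?_) p
  induction i using Fin.cases with
  | zero => simpa using analyticAt_const
  | succ j => simp only [Fin.cons_succ, Pi.add_apply, Pi.smul_apply, smul_eq_mul]; fun_prop

theorem continuous_eval_cons_add_smul (p : MvPolynomial (Fin (n + 1)) ℂ) (y v : Fin n → ℂ) :
    Continuous fun tx : ℂ × ℂ => eval (Fin.cons tx.1 (y + tx.2 • v)) p := by
  have : Continuous fun tx : ℂ × ℂ => y + tx.2 • v := by fun_prop
  exact (continuous_eval p).comp (continuous_fst.finCons (A := fun _ => ℂ) this)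

theorem eval_leadingCoeff_finSuccEquiv_ne_zero {w : ℂ} (hw : w ≠ 0) {U : Set (Fin n → ℂ)}
    (hU : IsOpen U) {f : MvPolynomial (Fin (n + 1)) ℂ} (hf0 : f ≠ 0)
    (hf : ∀ s, 0 < (w * s).re → ∀ y ∈ U, eval (Fin.cons s y) f ≠ 0) {y : Fin n → ℂ}
    (hy : y ∈ U) : eval y (finSuccEquiv ℂ n f).leadingCoeff ≠ 0 := by
  intro hy0
  obtain ⟨y', hy'⟩ : ∃ y', eval y' (finSuccEquiv ℂ n f).leadingCoeff ≠ 0 := by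
    by_contra! h
    refine hf0 ((map_eq_zero_iff _ (finSuccEquiv ℂ n).injective).mp ?_)
    exact Polynomial.leadingCoeff_eq_zero.mp (MvPolynomial.funext fun y' => by simpa using h y')
  -- For `t ≠ 0`, `F t x = t ^ d * f(t⁻¹, y + x • (y' - y))`, while `F 0` is the leading
  -- coefficient along the line through `y` and `y'`.
  set F : ℂ → ℂ → ℂ := fun t x => eval (Fin.cons t (y + x • (y' - y))) (finSuccReverse f)
  have hF0 : ∀ x, F 0 x = eval (y + x • (y' - y)) (finSuccEquiv ℂ n f).leadingCoeff :=
    fun x => eval_cons_zero_finSuccReverse f _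
  obtain ⟨r, hr, hball⟩ : ∃ r > 0, closedBall (0 : ℂ) r ⊆ {x | y + x • (y' - y) ∈ U} := by
    refine nhds_basis_closedBall.mem_iff.mp ((Continuous.tendsto' ?_ 0 y (by simp)).eventually
      (hU.mem_nhds hy))
    fun_prop
  set l := Filter.map (fun ε : ℝ => (ε : ℂ) * w) (𝓝[>] 0)
  have hlim : TendstoUniformlyOn F (F 0) l (closedBall 0 r) := fun u hu =>
    (Continuous.tendsto' (by fun_prop) 0 0 (by simp)).mono_left nhdsWithin_le_nhds
      ((isCompact_closedBall 0 r).tendstoUniformlyOn_of_continuous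
        (continuous_eval_cons_add_smul _ y (y' - y)) 0 u hu)
  have hFne : ∀ᶠ t in l, ∀ x ∈ closedBall 0 r, F t x ≠ 0 := by
    refine Filter.eventually_map.mpr ?_
    filter_upwards [self_mem_nhdsWithin] with ε (hε : 0 < ε) x hx
    have ht : (ε : ℂ) * w ≠ 0 := mul_ne_zero (by exact_mod_cast hε.ne') hw
    refine (eval_cons_finSuccReverse f ht _).trans_ne
      (mul_ne_zero (pow_ne_zero _ ht) (hf _ ?_ _ (hball hx)))
    rw [mul_inv, mul_left_comm, mul_inv_cancel₀ hw, mul_one, ← Complex.ofReal_inv,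
      Complex.ofReal_re]
    positivity
  have hlocal : F 0 =ᶠ[𝓝 0] 0 := eventuallyEq_zero_of_tendstoUniformlyOn
    (closedBall_mem_nhds 0 hr)
    (Eventually.of_forall fun t x _ =>
      (analyticAt_eval_cons_add_smul _ t y _ x).differentiableAt.differentiableWithinAt)
    hFne hlim (analyticAt_eval_cons_add_smul _ 0 y _ 0) (by simpa [hF0] using hy0)
  have := AnalyticOnNhd.eqOn_zero_of_preconnected_of_eventuallyEq_zero (f := F 0)
    (fun x _ => analyticAt_eval_cons_add_smul _ 0 y _ x) isPreconnected_univ (Set.mem_univ 0)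
    hlocal (Set.mem_univ 1)
  exact hy' (by simpa [hF0] using this)

end MvPolynomial

/-- If `f ∈ ℂ[z₁,…,zₙ]` is `H`-stable for an open half-plane
`H = {z | 0 < (w * z).re}` (with `w ≠ 0`) whose boundary contains the origin,
then `∂f/∂z₁` is either identically zero or `H`-stable. -/
theorem stmt_0 {n : ℕ} (w : ℂ) (hw : w ≠ 0) (f : MvPolynomial (Fin (n + 1)) ℂ)
    (hf : ∀ z : Fin (n + 1) → ℂ, (∀ i, 0 < (w * z i).re) → eval z f ≠ 0) :
    pderiv (0 : Fin (n + 1)) f = 0 ∨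
      ∀ z : Fin (n + 1) → ℂ, (∀ i, 0 < (w * z i).re) →
        eval z (pderiv (0 : Fin (n + 1)) f) ≠ 0 := by
  set H := {s : ℂ | 0 < (w * s).re}
  set P := finSuccEquiv ℂ n f
  refine or_iff_not_imp_left.mpr fun hpderiv z hz => ?_
  have hP' : Polynomial.derivative P ≠ 0 := by
    rwa [← finSuccEquiv_pderiv_zero, map_ne_zero_iff _ (finSuccEquiv ℂ n).injective]
  have hf_cons : ∀ s ∈ H, ∀ y ∈ Set.univ.pi fun _ => H, eval (Fin.cons s y) f ≠ 0 :=
    fun s hs y hy => hf _ (Fin.cases hs fun i => hy i (Set.mem_univ i))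
  have hlc := eval_leadingCoeff_finSuccEquiv_ne_zero hw
    (isOpen_set_pi Set.finite_univ fun _ _ => isOpen_lt continuous_const (by fun_prop))
    (by rintro rfl; simp at hpderiv) hf_cons (y := Fin.tail z) fun i _ => hz i.succ
  set φ := P.map (eval (Fin.tail z))
  have hφ : 0 < φ.degree := by
    rw [← Polynomial.natDegree_pos_iff_degree_pos,
      Polynomial.natDegree_map_of_leadingCoeff_ne_zero _ hlc]
    exact Nat.pos_of_ne_zero (Polynomial.derivative_ne_zero.mp hP')
  have hφH : ∀ s ∈ H, φ.eval s ≠ 0 := fun s hs => by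
    rw [← eval_eq_eval_mv_eval']
    exact hf_cons s hs _ fun i _ => hz i.succ
  rw [← Fin.cons_self_tail z, eval_eq_eval_mv_eval', finSuccEquiv_pderiv_zero,
    ← Polynomial.derivative_map]
  exact Polynomial.eval_derivative_ne_zero_of_convex_compl hφ (convex_compl_setOf_re_mul_pos w)
    hφH (hz 0)
end

section
/- Let f ∈ ℂ[z₁,…,zₙ] be a multi-affine polynomial with the half-plane property, and let F = {S ⊆ {1,…,n} : the coefficient of ∏_{i∈S} zᵢ in f is nonzero}. Then F satisfies the symmetric exchange axiom: for all A, B ∈ F and every x ∈ A Δ B there exists y ∈ A Δ B such that A Δ {x,y} ∈ F (so F is a delta-matroid on its ground set). -/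
/-!
Write `f = ∑ c_S z^S`. Rescaling all variables by `w⁻¹` and inverting the variables of `A`
preserve stability in the right half-plane, so we may assume `A = ∅`: then `c_∅ ≠ 0`, `c_B ≠ 0`
and `x ∈ B`. Splitting off `z_x` writes the polynomial as `α + z_x β`; as it has no zero for
`Re z_x > 0`, `Re (α conj β) ≥ 0`. This closed condition survives the limit `z_i = t` on
`B \ {x}`, `z_i = 0` off `B`. If `c_{x,y} = 0` for all `y ∈ B`, then `β(t)` vanishes to order
`m ≥ 2` at `0` while `α(0) = c_∅ ≠ 0`, so near `0` the product `β(t) conj α(t) ≈ γ t^m` takes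
values of negative real part on a suitable ray in the closed right half-plane. Hence `β = 0`,
contradicting that its top coefficient is `c_B`.
-/

open Finset ComplexConjugate Function

lemma re_mul_conj_nonneg_of_add_mul_ne_zero {a b : ℂ} (h : ∀ u : ℂ, 0 < u.re → a + u * b ≠ 0) :
    0 ≤ (a * conj b).re := by
  by_contra! hneg
  have hb : b ≠ 0 := by
    rintro rfl
    simp at hneg
  have hb' : (Complex.normSq b : ℂ) ≠ 0 := by simpa using hb
  refine h (-(a * conj b) / Complex.normSq b) ?_ ?_
  · rw [Complex.div_ofReal_re, Complex.neg_re]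
    exact div_pos (neg_pos.2 hneg) (Complex.normSq_pos.2 hb)
  · rw [div_mul_eq_mul_div, neg_mul, mul_assoc, mul_comm (conj b) b, Complex.mul_conj]
    field_simp
    ring

lemma exists_re_nonneg_pow_eq {m : ℕ} (hm : 2 ≤ m) (v : ℂ) : ∃ ω : ℂ, 0 ≤ ω.re ∧ ω ^ m = v := by
  refine ⟨v ^ (m⁻¹ : ℂ), ?_, Complex.cpow_nat_inv_pow v (by omega)⟩
  rcases eq_or_ne v 0 with rfl | hv
  · rw [Complex.zero_cpow (by simp; omega)]
    simp
  have hm' : (2 : ℝ) ≤ m := by exact_mod_cast hm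
  have harg : |v.arg / m| ≤ Real.pi / 2 := by
    rw [abs_div, Nat.abs_cast, div_le_iff₀ (by positivity)]
    nlinarith [Complex.abs_arg_le_pi v, Real.pi_pos]
  have him : (Complex.log v * (m : ℂ)⁻¹).im = v.arg / m := by
    rw [← Complex.ofReal_natCast, ← Complex.ofReal_inv, Complex.im_mul_ofReal, Complex.log_im,
      div_eq_mul_inv]
  rw [Complex.cpow_def_of_ne_zero hv, Complex.exp_re, him]
  exact mul_nonneg (Real.exp_pos _).le
    (Real.cos_nonneg_of_neg_pi_div_two_le_of_le (abs_le.1 harg).1 (abs_le.1 harg).2)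

lemma nonneg_at_zero_of_continuous {F : ℝ → ℝ} (hF : Continuous F) (h : ∀ ε > 0, 0 ≤ F ε) :
    0 ≤ F 0 :=
  ge_of_tendsto ((hF.tendsto 0).mono_left nhdsWithin_le_nhds)
    (eventually_nhdsWithin_of_forall (s := Set.Ioi 0) h)

theorem nonneg_of_forall_re_pos {ι : Type*} {F : (ι → ℂ) → ℝ} (hF : Continuous F)
    (h : ∀ z : ι → ℂ, (∀ i, 0 < (z i).re) → 0 ≤ F z) {z : ι → ℂ} (hz : ∀ i, 0 ≤ (z i).re) :
    0 ≤ F z := by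
  have := nonneg_at_zero_of_continuous (F := fun ε : ℝ => F fun i => z i + ε) (by fun_prop)
    fun ε hε => h _ fun i => by simpa using add_pos_of_nonneg_of_pos (hz i) hε
  simpa using this

namespace Polynomial

open scoped Polynomial

theorem eq_zero_of_re_mul_conj_nonneg {p q : ℂ[X]} (hq : q.eval 0 ≠ 0) (hp : X ^ 2 ∣ p)
    (h : ∀ ζ : ℂ, 0 ≤ ζ.re → 0 ≤ (p.eval ζ * conj (q.eval ζ)).re) : p = 0 := by
  by_contra hp0
  obtain ⟨r, hpr, hr⟩ := exists_eq_pow_rootMultiplicity_mul_and_not_dvd p hp0 0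
  set m := rootMultiplicity 0 p
  have hm : 2 ≤ m := by rwa [le_rootMultiplicity_iff hp0, map_zero, sub_zero]
  have hr0 : r.eval 0 ≠ 0 := by rwa [dvd_iff_isRoot] at hr
  set c := r.eval 0 * conj (q.eval 0)
  obtain ⟨ω, hω, hωm⟩ := exists_re_nonneg_pow_eq hm (-conj c)
  -- `ω ^ m c < 0`, so `p conj q` has negative real part on the ray `ε ω` for small `ε > 0`
  set F : ℝ → ℝ := fun ε => (ω ^ m * (r.eval (ε * ω) * conj (q.eval (ε * ω)))).re
  have hF : Continuous F := by fun_prop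
  have hFpos : ∀ ε > 0, 0 ≤ F ε := by
    intro ε hε
    have hray : p.eval (ε * ω) * conj (q.eval (ε * ω)) =
        (ε ^ m : ℝ) * (ω ^ m * (r.eval (ε * ω) * conj (q.eval (ε * ω)))) := by
      rw [hpr]
      simp only [eval_mul, eval_pow, eval_sub, eval_X, eval_C, sub_zero, Complex.ofReal_pow]
      ring
    have := h (ε * ω) (by rw [Complex.re_ofReal_mul]; positivity)
    rw [hray, Complex.re_ofReal_mul] at this
    exact (mul_nonneg_iff_of_pos_left (by positivity)).1 this
  have hF0 : F 0 = -Complex.normSq c := by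
    simp only [F, Complex.ofReal_zero, zero_mul, hωm]
    rw [neg_mul, Complex.conj_mul', Complex.neg_re, ← Complex.ofReal_pow, Complex.ofReal_re,
      Complex.normSq_eq_norm_sq]
  have hc : c ≠ 0 := mul_ne_zero hr0 (by simpa using hq)
  linarith [nonneg_at_zero_of_continuous hF hFpos, Complex.normSq_pos.2 hc]

end Polynomial

section Multiaffine

open Polynomial

noncomputable def powersetPoly {ι R : Type*} [Semiring R] (g : Finset ι → R) (P : Finset ι) :
    R[X] :=
  ∑ S ∈ P.powerset, C (g S) * X ^ S.card

theorem eval_powersetPoly {ι R : Type*} [CommSemiring R] (g : Finset ι → R) (P : Finset ι) (t : R) :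
    (powersetPoly g P).eval t = ∑ S ∈ P.powerset, g S * t ^ S.card := by
  simp [powersetPoly, eval_finsetSum]

theorem coeff_powersetPoly {ι R : Type*} [Semiring R] (g : Finset ι → R) (P : Finset ι) (k : ℕ) :
    (powersetPoly g P).coeff k = ∑ S ∈ P.powersetCard k, g S := by
  simp only [powersetPoly, finsetSum_coeff, coeff_C_mul_X_pow, powersetCard_eq_filter, sum_filter,
    eq_comm]

variable {ι R : Type*} [Fintype ι]

def multiaffineEval [CommSemiring R] (c : Finset ι → R) (z : ι → R) : R :=
  ∑ S, c S * ∏ i ∈ S, z i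

theorem continuous_multiaffineEval [CommSemiring R] [TopologicalSpace R] [IsTopologicalSemiring R]
    (c : Finset ι → R) : Continuous (multiaffineEval c) := by
  unfold multiaffineEval
  fun_prop

def RightHalfPlaneStable (c : Finset ι → ℂ) : Prop :=
  ∀ z : ι → ℂ, (∀ i, 0 < (z i).re) → multiaffineEval c z ≠ 0

theorem rightHalfPlaneStable_of_rotated {c : Finset ι → ℂ} {w : ℂ} (hw : w ≠ 0)
    (h : ∀ z : ι → ℂ, (∀ i, 0 < (w * z i).re) → multiaffineEval c z ≠ 0) :
    RightHalfPlaneStable fun S => c S * w⁻¹ ^ S.card := by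
  intro z hz
  have : multiaffineEval (fun S => c S * w⁻¹ ^ S.card) z = multiaffineEval c (w⁻¹ • z) := by
    refine sum_congr rfl fun S _ => ?_
    simp only [Pi.smul_apply, smul_eq_mul, prod_mul_distrib, prod_const]
    ring
  rw [this]
  exact h _ fun i => by simpa [mul_inv_cancel_left₀ hw] using hz i

variable [DecidableEq ι]

theorem multiaffineEval_update [CommRing R] (c : Finset ι → R) (z : ι → R) (x : ι) (u : R) :
    multiaffineEval c (update z x u) = multiaffineEval c (update z x 0) +
      u * (multiaffineEval c (update z x 1) - multiaffineEval c (update z x 0)) := by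
  have hterm : ∀ (S : Finset ι) (v : R),
      ∏ i ∈ S, update z x v i = if x ∈ S then v * ∏ i ∈ S \ {x}, z i else ∏ i ∈ S, z i := by
    intro S v
    split_ifs with hx
    · exact prod_update_of_mem hx z v
    · exact prod_update_of_notMem hx z v
  simp only [multiaffineEval, hterm, mul_sub, mul_sum, ← sum_sub_distrib, ← sum_add_distrib]
  refine sum_congr rfl fun S _ => ?_
  split_ifs <;> ring

theorem multiaffineEval_update_indicator [CommSemiring R] (c : Finset ι → R) {x : ι}
    {P : Finset ι} (hx : x ∉ P) (u t : R) :
    multiaffineEval c (update (fun i => if i ∈ P then t else 0) x u) =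
      (powersetPoly c P).eval t + u * (powersetPoly (fun S => c (insert x S)) P).eval t := by
  set z := update (fun i => if i ∈ P then t else 0) x u
  have hprod : ∀ S ∈ P.powerset, ∏ i ∈ S, z i = t ^ S.card := fun S hS =>
    prod_eq_pow_card fun i hi => by
      have hiP := mem_powerset.1 hS hi
      simp [z, hiP, ne_of_mem_of_not_mem hiP hx]
  have hsub : ∑ S ∈ (insert x P).powerset, c S * ∏ i ∈ S, z i = multiaffineEval c z := by
    refine sum_subset (subset_univ _) fun S _ hS => ?_
    obtain ⟨i, hiS, hi⟩ := not_subset.1 (mt mem_powerset.2 hS)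
    rw [mem_insert, not_or] at hi
    rw [prod_eq_zero hiS (by simp [z, hi.1, hi.2]), mul_zero]
  rw [← hsub, sum_powerset_insert hx, eval_powersetPoly, eval_powersetPoly, mul_sum]
  congr 1
  · exact sum_congr rfl fun S hS => by rw [hprod S hS]
  · refine sum_congr rfl fun S hS => ?_
    rw [prod_insert fun h => hx (mem_powerset.1 hS h), hprod S hS]
    rw [show z x = u from update_self ..]
    ring

theorem MvPolynomial.eval_eq_multiaffineEval [CommSemiring R] {f : MvPolynomial ι R}
    (hf : ∀ m ∈ f.support, ∀ i, m i ≤ 1) (z : ι → R) :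
    MvPolynomial.eval z f = multiaffineEval (fun S => f.coeff (∑ i ∈ S, Finsupp.single i 1)) z := by
  set ind : Finset ι → ι →₀ ℕ := fun S => ∑ i ∈ S, Finsupp.single i 1
  have hind : ∀ S j, ind S j = if j ∈ S then 1 else 0 := fun S j => by
    simp [ind, Finsupp.finsetSum_apply, Finsupp.single_apply]
  have hind_supp : ∀ S, (ind S).support = S := fun S => by
    ext j
    simp [hind]
  have hind_of_le_one : ∀ m ∈ f.support, ind m.support = m := fun m hm => by
    ext j
    have := hf m hm j
    simp only [hind, Finsupp.mem_support_iff]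
    split_ifs <;> omega
  have hterm : ∀ S, f.coeff (ind S) * ∏ i ∈ S, z i =
      f.coeff (ind S) * ∏ i ∈ (ind S).support, z i ^ ind S i := fun S => by
    rw [hind_supp]
    exact congrArg _ (prod_congr rfl fun i hi => by simp [hind, hi])
  rw [MvPolynomial.eval_eq, multiaffineEval]
  symm
  refine sum_bij_ne_zero (fun S _ _ => ind S) ?_ ?_ ?_ fun S _ _ => hterm S
  · exact fun S _ hS => MvPolynomial.mem_support_iff.2 (left_ne_zero_of_mul hS)
  · exact fun S _ _ T _ _ hST => by rw [← hind_supp S, hST, hind_supp]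
  · intro m hm hne
    refine ⟨m.support, mem_univ _, ?_, hind_of_le_one m hm⟩
    rwa [hterm, hind_of_le_one m hm]

namespace RightHalfPlaneStable

variable {c : Finset ι → ℂ}

theorem re_mul_conj_nonneg (hc : RightHalfPlaneStable c) (x : ι) {z : ι → ℂ}
    (hz : ∀ i, 0 ≤ (z i).re) :
    0 ≤ (multiaffineEval c (update z x 0) * conj (multiaffineEval c (update z x 1) -
      multiaffineEval c (update z x 0))).re := by
  have hφ : ∀ v : ℂ, Continuous fun z : ι → ℂ => multiaffineEval c (update z x v) :=
    fun v => (continuous_multiaffineEval c).comp (continuous_id.update x continuous_const)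
  refine nonneg_of_forall_re_pos (F := fun z => (multiaffineEval c (update z x 0) *
    conj (multiaffineEval c (update z x 1) - multiaffineEval c (update z x 0))).re)
    (by fun_prop) (fun z hz => ?_) hz
  refine re_mul_conj_nonneg_of_add_mul_ne_zero fun u hu => ?_
  rw [← multiaffineEval_update]
  refine hc _ fun i => ?_
  rcases eq_or_ne i x with rfl | hi
  · simpa using hu
  · simpa [hi] using hz i

theorem comp_symmDiff (hc : RightHalfPlaneStable c) (A : Finset ι) :
    RightHalfPlaneStable fun S => c (symmDiff S A) := by
  intro z hz
  have hz₀ : ∀ i, z i ≠ 0 := fun i h => by simpa [h] using hz i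
  set w : ι → ℂ := fun i => if i ∈ A then (z i)⁻¹ else z i
  have hw : ∀ i, 0 < (w i).re := fun i => by
    by_cases hi : i ∈ A
    · simpa [w, hi, Complex.inv_re] using div_pos (hz i) (Complex.normSq_pos.2 (hz₀ i))
    · simpa [w, hi] using hz i
  -- inverting the variables of `A` and clearing denominators
  have hprod : ∀ T : Finset ι, ∏ i ∈ symmDiff T A, z i = (∏ i ∈ A, z i) * ∏ i ∈ T, w i := by
    intro T
    rw [← Fintype.prod_ite_mem, ← Fintype.prod_ite_mem A, ← Fintype.prod_ite_mem T,
      ← prod_mul_distrib]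
    refine prod_congr rfl fun i _ => ?_
    by_cases hA : i ∈ A <;> by_cases hT : i ∈ T <;> simp [w, hA, hT, mem_symmDiff, hz₀ i]
  have hinv : Involutive fun S : Finset ι => symmDiff S A :=
    fun S => symmDiff_symmDiff_cancel_right A S
  have : multiaffineEval (fun S => c (symmDiff S A)) z =
      (∏ i ∈ A, z i) * multiaffineEval c w := by
    rw [multiaffineEval, ← hinv.bijective.sum_comp, multiaffineEval, mul_sum]
    refine sum_congr rfl fun T _ => ?_
    rw [symmDiff_symmDiff_cancel_right, hprod]
    ring
  rw [this]
  exact mul_ne_zero (prod_ne_zero_iff.2 fun i _ => hz₀ i) (hc w hw)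

theorem exists_pair_ne_zero (hc : RightHalfPlaneStable c) (h₀ : c ∅ ≠ 0) {B : Finset ι}
    (hB : c B ≠ 0) {x : ι} (hx : x ∈ B) : ∃ y ∈ B, c {x, y} ≠ 0 := by
  by_contra! h
  set P := B.erase x
  have hxP : x ∉ P := notMem_erase x B
  set α := powersetPoly c P
  set β := powersetPoly (fun S => c (insert x S)) P
  -- put `z_x = u`, `z_i = t` on the rest of `B` and `z_i = 0` off `B`: the result is `α t + u β t`
  have hβα : ∀ t : ℂ, 0 ≤ t.re → 0 ≤ (β.eval t * conj (α.eval t)).re := by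
    intro t ht
    have := hc.re_mul_conj_nonneg x (z := fun i => if i ∈ P then t else 0)
      fun i => by split_ifs <;> simp [ht]
    simp only [multiaffineEval_update_indicator c hxP, zero_mul, add_zero, one_mul,
      add_sub_cancel_left] at this
    rwa [← Complex.conj_re, map_mul, Complex.conj_conj, mul_comm] at this
  have hα₀ : α.eval 0 = c ∅ := by
    rw [← coeff_zero_eq_eval_zero, coeff_powersetPoly, powersetCard_zero, sum_singleton]
  have hβ : X ^ 2 ∣ β := by
    refine X_pow_dvd_iff.2 fun d hd => ?_
    interval_cases d
    · simpa [β, coeff_powersetPoly] using h x hx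
    · simp only [β, coeff_powersetPoly, powersetCard_one, sum_map]
      exact sum_eq_zero fun y hy => h y (mem_of_mem_erase hy)
  have hβ0 := eq_zero_of_re_mul_conj_nonneg (hα₀ ▸ h₀) hβ hβα
  have := congrArg (coeff · P.card) hβ0
  simp only [β, coeff_powersetPoly, powersetCard_self, sum_singleton, P, insert_erase hx,
    coeff_zero] at this
  exact hB this

end RightHalfPlaneStable

end Multiaffine

open MvPolynomial

/-- The support of a multi-affine polynomial with the half-plane property
satisfies the symmetric exchange axiom, i.e. it is a delta-matroid. -/
theorem stmt_2 {n : ℕ} (f : MvPolynomial (Fin n) ℂ)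
    (hma : ∀ m ∈ f.support, ∀ i, m i ≤ 1)
    (hpp : ∃ w : ℂ, w ≠ 0 ∧ ∀ z : Fin n → ℂ, (∀ i, 0 < (w * z i).re) → eval z f ≠ 0)
    (F : Set (Finset (Fin n)))
    (hF : F = {S | coeff (∑ i ∈ S, Finsupp.single i 1) f ≠ 0}) :
    ∀ A ∈ F, ∀ B ∈ F, ∀ x ∈ symmDiff A B, ∃ y ∈ symmDiff A B, symmDiff A {x, y} ∈ F := by
  obtain ⟨w, hw, hf⟩ := hpp
  subst hF
  set c : Finset (Fin n) → ℂ := fun S => coeff (∑ i ∈ S, Finsupp.single i 1) f * w⁻¹ ^ S.card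
  have hc : RightHalfPlaneStable c := rightHalfPlaneStable_of_rotated hw fun z hz => by
    rw [← eval_eq_multiaffineEval hma]
    exact hf z hz
  have hc_ne : ∀ S, c S ≠ 0 ↔ coeff (∑ i ∈ S, Finsupp.single i 1) f ≠ 0 := fun S => by
    simp [c, hw]
  intro A hA B hB x hx
  -- flipping the variables of `A` moves `A` to `∅`
  obtain ⟨y, hy, hxy⟩ := (hc.comp_symmDiff A).exists_pair_ne_zero (B := symmDiff B A)
    (by rw [← bot_eq_empty, bot_symmDiff]; exact (hc_ne A).2 hA)
    (by rw [symmDiff_symmDiff_cancel_right]; exact (hc_ne B).2 hB) (symmDiff_comm A B ▸ hx)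
  exact ⟨y, symmDiff_comm B A ▸ hy, (hc_ne _).1 (symmDiff_comm _ A ▸ hxy)⟩
end

section
/- Let A₁,…,Aₘ be complex positive semidefinite n×n matrices and let B be a complex Hermitian n×n matrix. Then the polynomial f(z₁,…,zₘ) = det(z₁A₁ + ⋯ + zₘAₘ + B) is either identically zero or real stable. -/
/-!
If `det(∑ zᵢAᵢ + B)` vanishes at a point `z` of the open upper half-plane, pick `v ≠ 0` in the
kernel. Taking the imaginary part of `v*(∑ zᵢAᵢ + B)v = 0`, where every `v*Aᵢv` is real and
nonnegative and `v*Bv` is real, gives `∑ Im(zᵢ) v*Aᵢv = 0`, hence `v*Aᵢv = 0`, so `Aᵢv = 0` for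
all `i` by positivity and then `Bv = 0`. Thus `v` lies in the kernel of the pencil at every point
and the determinant vanishes identically. Real coefficients come from Hermitian symmetry:
conjugating the coefficients of the pencil transposes it, which does not change the determinant.
-/

open MvPolynomial
open scoped ComplexOrder
open Matrix

namespace Complex

theorem eq_zero_of_sum_mul_add_eq_zero {ι : Type*} [Fintype ι] {z q : ι → ℂ} {b : ℂ}
    (hz : ∀ i, 0 < (z i).im) (hq : ∀ i, 0 ≤ q i) (hb : b.im = 0)
    (h : ∑ i, z i * q i + b = 0) (i : ι) : q i = 0 := by
  have hq_im (j : ι) : (q j).im = 0 := (Complex.nonneg_iff.1 (hq j)).2.symm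
  have him : ∑ j, (z j).im * (q j).re = 0 := by
    simpa [Complex.mul_im, hq_im, hb] using congrArg Complex.im h
  have hterm := (Finset.sum_eq_zero_iff_of_nonneg fun j _ ↦
    mul_nonneg (hz j).le (Complex.nonneg_iff.1 (hq j)).1).1 him i (Finset.mem_univ i)
  have hre : (q i).re = 0 := (mul_eq_zero.1 hterm).resolve_left (hz i).ne'
  exact Complex.ext hre (hq_im i)

end Complex

theorem MvPolynomial.im_coeff_eq_zero_of_map_conj_eq {σ : Type*} {p : MvPolynomial σ ℂ}
    (hp : map (starRingEnd ℂ) p = p) (d : σ →₀ ℕ) : (coeff d p).im = 0 := by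
  have h := congrArg (fun p ↦ (coeff d p).im) hp
  simp only [coeff_map, Complex.conj_im] at h
  linarith

namespace Matrix

variable {ι n : Type*} [Fintype ι] [Fintype n]

theorem mulVec_eq_zero_of_sum_smul_add_mulVec_eq_zero {A : ι → Matrix n n ℂ} {B : Matrix n n ℂ}
    (hA : ∀ i, (A i).PosSemidef) (hB : B.IsHermitian) {z : ι → ℂ} (hz : ∀ i, 0 < (z i).im)
    {v : n → ℂ} (hv : (∑ i, z i • A i + B) *ᵥ v = 0) :
    (∀ i, A i *ᵥ v = 0) ∧ B *ᵥ v = 0 := by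
  have hform : ∑ i, z i * (star v ⬝ᵥ A i *ᵥ v) + star v ⬝ᵥ B *ᵥ v = 0 := by
    simpa [add_mulVec, sum_mulVec, dotProduct_sum, smul_mulVec] using
      congrArg (star v ⬝ᵥ ·) hv
  have hAv (i : ι) : A i *ᵥ v = 0 :=
    ((hA i).dotProduct_mulVec_zero_iff v).1 <| Complex.eq_zero_of_sum_mul_add_eq_zero hz
      (fun j ↦ (hA j).dotProduct_mulVec_nonneg v) (hB.im_star_dotProduct_mulVec_self v) hform i
  refine ⟨hAv, ?_⟩
  simpa [add_mulVec, sum_mulVec, smul_mulVec, hAv] using hv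

noncomputable def linearPencil (A : ι → Matrix n n ℂ) (B : Matrix n n ℂ) :
    Matrix n n (MvPolynomial ι ℂ) :=
  ∑ i, (X i : MvPolynomial ι ℂ) • (A i).map C + B.map C

variable [DecidableEq n]

theorem eval_det_linearPencil (A : ι → Matrix n n ℂ) (B : Matrix n n ℂ) (z : ι → ℂ) :
    eval z (linearPencil A B).det = (∑ i, z i • A i + B).det := by
  rw [RingHom.map_det]
  congr 1
  ext j k
  simp [linearPencil, Matrix.sum_apply]

theorem map_conj_det_linearPencil {A : ι → Matrix n n ℂ} {B : Matrix n n ℂ}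
    (hA : ∀ i, (A i).IsHermitian) (hB : B.IsHermitian) :
    MvPolynomial.map (starRingEnd ℂ) (linearPencil A B).det = (linearPencil A B).det := by
  conv_rhs => rw [← det_transpose]
  rw [RingHom.map_det]
  congr 1
  ext j k
  simp [linearPencil, Matrix.sum_apply, ← (hA _).apply j k, ← hB.apply j k]

theorem det_linearPencil_eq_zero_of_eval_eq_zero {A : ι → Matrix n n ℂ} {B : Matrix n n ℂ}
    (hA : ∀ i, (A i).PosSemidef) (hB : B.IsHermitian) {z : ι → ℂ} (hz : ∀ i, 0 < (z i).im)
    (h : eval z (linearPencil A B).det = 0) : (linearPencil A B).det = 0 := by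
  rw [eval_det_linearPencil] at h
  obtain ⟨v, hv0, hv⟩ := exists_mulVec_eq_zero_iff.2 h
  obtain ⟨hAv, hBv⟩ := mulVec_eq_zero_of_sum_smul_add_mulVec_eq_zero hA hB hz hv
  refine MvPolynomial.funext fun w ↦ ?_
  rw [eval_det_linearPencil, map_zero]
  exact exists_mulVec_eq_zero_iff.1
    ⟨v, hv0, by simp [add_mulVec, sum_mulVec, smul_mulVec, hAv, hBv]⟩

end Matrix

/-- If `A₁,…,Aₘ` are complex positive semidefinite matrices and `B` is
Hermitian, then `det(z₁A₁ + ⋯ + zₘAₘ + B)` is identically zero or real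
stable. -/
theorem stmt_5 {m n : ℕ} (A : Fin m → Matrix (Fin n) (Fin n) ℂ)
    (hA : ∀ i, (A i).PosSemidef)
    (B : Matrix (Fin n) (Fin n) ℂ) (hB : B.IsHermitian)
    (f : MvPolynomial (Fin m) ℂ)
    (hf : f = Matrix.det (∑ i, (X i : MvPolynomial (Fin m) ℂ) • (A i).map C + B.map C)) :
    f = 0 ∨
      ((∀ z : Fin m → ℂ, (∀ i, 0 < (z i).im) → eval z f ≠ 0) ∧
        ∀ d : Fin m →₀ ℕ, (coeff d f).im = 0) := by
  change f = (linearPencil A B).det at hf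
  subst hf
  by_cases h : ∃ z : Fin m → ℂ, (∀ i, 0 < (z i).im) ∧ eval z (linearPencil A B).det = 0
  · obtain ⟨z, hz, hz0⟩ := h
    exact .inl (det_linearPencil_eq_zero_of_eval_eq_zero hA hB hz hz0)
  · push Not at h
    exact .inr ⟨h, im_coeff_eq_zero_of_map_conj_eq <|
      map_conj_det_linearPencil (fun i ↦ (hA i).isHermitian) hB⟩
end

section
/- Let A be a complex n×n matrix that is Hermitian or skew-Hermitian, and let F = {S ⊆ {1,…,n} : det(A[S]) ≠ 0}, where A[S] is the principal submatrix of A with rows and columns indexed by S (with the convention det(A[∅]) = 1, so ∅ ∈ F). Then F satisfies the symmetric exchange axiom: for all A₀, B₀ ∈ F and every x ∈ A₀ Δ B₀ there exists y ∈ A₀ Δ B₀ such that A₀ Δ {x,y} ∈ F (so F is a delta-matroid). -/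
namespace DM7

open Matrix Finset
variable {n : ℕ}
def pm (B : Matrix (Fin n) (Fin n) ℂ) (S : Finset (Fin n)) :
    Matrix {x // x ∈ S} {x // x ∈ S} ℂ :=
  B.submatrix (fun i : {x // x ∈ S} => (i : Fin n)) (fun i : {x // x ∈ S} => (i : Fin n))

def Nm (B : Matrix (Fin n) (Fin n) ℂ) (S : Finset (Fin n)) : Matrix (Fin n) (Fin n) ℂ :=
  Matrix.of fun i j => if i ∈ S then B i j else if i = j then (1 : ℂ) else 0

lemma det_Nm (B : Matrix (Fin n) (Fin n) ℂ) (S : Finset (Fin n)) :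
    (Nm B S).det = (pm B S).det := by
  classical
  let e : {x // x ∈ S} ⊕ {x : Fin n // ¬x ∈ S} ≃ Fin n := Equiv.sumCompl _
  rw [← Matrix.det_submatrix_equiv_self e (Nm B S)]
  have h : (Nm B S).submatrix e e =
      Matrix.fromBlocks (pm B S)
        (B.submatrix (fun i : {x // x ∈ S} => (i : Fin n))
          (fun i : {x : Fin n // ¬x ∈ S} => (i : Fin n))) 0 1 := by
    ext i j
    cases i with
    | inl i =>
      cases j with
      | inl j => simp [Nm, pm, e, i.2]
      | inr j => simp [Nm, e, i.2]
    | inr i =>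
      cases j with
      | inl j =>
        have hne : (i : Fin n) ≠ (j : Fin n) := fun h => i.2 (h ▸ j.2)
        simp [Nm, e, i.2, hne]
      | inr j =>
        simp [Nm, e, i.2, Matrix.one_apply, Subtype.ext_iff]
  rw [h, Matrix.det_fromBlocks_zero₂₁, Matrix.det_one, mul_one]

lemma det_pm_single (M : Matrix (Fin n) (Fin n) ℂ) (x : Fin n) :
    (pm M {x}).det = M x x := by
  haveI : Unique {z // z ∈ ({x} : Finset (Fin n))} :=
    ⟨⟨⟨x, Finset.mem_singleton_self x⟩⟩, fun z => Subtype.ext (Finset.mem_singleton.mp z.2)⟩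
  rw [Matrix.det_unique]
  simp only [pm, Matrix.submatrix_apply]
  rw [Finset.mem_singleton.mp (default : {z // z ∈ ({x} : Finset (Fin n))}).2]

lemma det_pm_pair (M : Matrix (Fin n) (Fin n) ℂ) {x y : Fin n} (hxy : x ≠ y) :
    (pm M {x, y}).det = M x x * M y y - M x y * M y x := by
  classical
  have hx : x ∈ ({x, y} : Finset (Fin n)) := by simp
  have hy : y ∈ ({x, y} : Finset (Fin n)) := by simp
  let e : Fin 2 ≃ {z // z ∈ ({x, y} : Finset (Fin n))} :=
    { toFun := ![⟨x, hx⟩, ⟨y, hy⟩]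
      invFun := fun z => if (z : Fin n) = x then 0 else 1
      left_inv := by
        intro i
        fin_cases i
        · simp
        · simp [hxy.symm]
      right_inv := by
        rintro ⟨z, hz⟩
        simp only [Finset.mem_insert, Finset.mem_singleton] at hz
        rcases hz with rfl | rfl
        · simp
        · simp [hxy.symm] }
  rw [← Matrix.det_submatrix_equiv_self e (pm M {x, y}), Matrix.det_fin_two]
  simp [pm, e]

lemma mul_Nm (ε : ℂ) (A A' C D : Matrix (Fin n) (Fin n) ℂ) (A₀ S : Finset (Fin n))
    (hA'C : A' * C = D)
    (hC : ∀ i j, C i j = if i ∈ A₀ then A i j else if i = j then 1 else 0)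
    (hD : ∀ i j, D i j = if i ∈ A₀ then (if i = j then -ε else 0) else A i j) :
    Nm A' S * C =
      Matrix.diagonal (fun i => if i ∈ S ∧ i ∈ A₀ then -ε else 1) * Nm A (symmDiff S A₀) := by
  classical
  ext i j
  rw [Matrix.diagonal_mul]
  by_cases hiS : i ∈ S
  · have h1 : (Nm A' S * C) i j = D i j := by
      rw [← hA'C, Matrix.mul_apply, Matrix.mul_apply]
      refine Finset.sum_congr rfl fun k _ => ?_
      simp [Nm, hiS]
    by_cases hiA : i ∈ A₀
    · rw [h1, hD i j, if_pos hiA]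
      have hns : i ∉ symmDiff S A₀ := by simp [Finset.mem_symmDiff, hiS, hiA]
      simp only [Nm, Matrix.of_apply, if_neg hns, if_pos (⟨hiS, hiA⟩ : i ∈ S ∧ i ∈ A₀)]
      split_ifs <;> ring
    · rw [h1, hD i j, if_neg hiA]
      have hs : i ∈ symmDiff S A₀ := by simp [Finset.mem_symmDiff, hiS, hiA]
      have hna : ¬(i ∈ S ∧ i ∈ A₀) := fun h => hiA h.2
      simp only [Nm, Matrix.of_apply, if_pos hs, if_neg hna]
      ring
  · have h1 : (Nm A' S * C) i j = C i j := by
      rw [Matrix.mul_apply]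
      simp [Nm, hiS, ite_mul]
    by_cases hiA : i ∈ A₀
    · rw [h1, hC i j, if_pos hiA]
      have hs : i ∈ symmDiff S A₀ := by simp [Finset.mem_symmDiff, hiS, hiA]
      have hna : ¬(i ∈ S ∧ i ∈ A₀) := fun h => hiS h.1
      simp only [Nm, Matrix.of_apply, if_pos hs, if_neg hna]
      ring
    · rw [h1, hC i j, if_neg hiA]
      have hns : i ∉ symmDiff S A₀ := by simp [Finset.mem_symmDiff, hiS, hiA]
      have hna : ¬(i ∈ S ∧ i ∈ A₀) := fun h => hiS h.1
      simp only [Nm, Matrix.of_apply, if_neg hns, if_neg hna]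
      ring

theorem main (A : Matrix (Fin n) (Fin n) ℂ) (ε : ℂ) (hε : ε = 1 ∨ ε = -1)
    (hAe : Aᴴ = ε • A) (A₀ B₀ : Finset (Fin n))
    (hA₀ : (pm A A₀).det ≠ 0) (hB₀ : (pm A B₀).det ≠ 0)
    (x : Fin n) (hx : x ∈ symmDiff A₀ B₀) :
    ∃ y ∈ symmDiff A₀ B₀, (pm A (symmDiff A₀ {x, y})).det ≠ 0 := by
  classical
  have hε0 : ε ≠ 0 := by rcases hε with h | h <;> simp [h]
  have hεsq : ε * ε = 1 := by rcases hε with h | h <;> simp [h]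
  set E : Matrix (Fin n) (Fin n) ℂ :=
    Matrix.diagonal (fun i => if i ∈ A₀ then (1 : ℂ) else 0) with hE
  set C : Matrix (Fin n) (Fin n) ℂ := E * A + (1 - E) with hCdef
  set D : Matrix (Fin n) (Fin n) ℂ := (-ε) • E + (A - E * A) with hDdef
  have hCe : ∀ i j, C i j = if i ∈ A₀ then A i j else if i = j then 1 else 0 := by
    intro i j
    simp only [hCdef, Matrix.add_apply, Matrix.sub_apply, Matrix.diagonal_mul,
      Matrix.one_apply, Matrix.diagonal_apply, hE]
    split_ifs <;> ring
  have hDe : ∀ i j, D i j = if i ∈ A₀ then (if i = j then -ε else 0) else A i j := by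
    intro i j
    simp only [hDdef, Matrix.add_apply, Matrix.sub_apply, Matrix.smul_apply,
      Matrix.diagonal_mul, Matrix.diagonal_apply, hE, smul_eq_mul]
    split_ifs <;> ring
  have hCN : C = Nm A A₀ := by
    ext i j
    rw [hCe i j]
    rfl
  have hdetC : C.det ≠ 0 := by rw [hCN, det_Nm]; exact hA₀
  have hCu : IsUnit C.det := isUnit_iff_ne_zero.mpr hdetC
  set A' : Matrix (Fin n) (Fin n) ℂ := D * C⁻¹ with hA'def
  have hA'C : A' * C = D := by
    rw [hA'def, Matrix.mul_assoc, Matrix.nonsing_inv_mul C hCu, Matrix.mul_one]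
  have hEH : Eᴴ = E := by
    ext i j
    rw [Matrix.conjTranspose_apply, hE]
    by_cases hij : i = j
    · subst hij
      simp only [Matrix.diagonal_apply_eq]
      split_ifs <;> simp
    · rw [Matrix.diagonal_apply_ne _ (Ne.symm hij), Matrix.diagonal_apply_ne _ hij, star_zero]
  have hEE : E * E = E := by
    ext i j
    rw [hE, Matrix.diagonal_mul_diagonal]
    by_cases hij : i = j
    · subst hij
      simp only [Matrix.diagonal_apply_eq]
      split_ifs <;> simp
    · rw [Matrix.diagonal_apply_ne _ hij, Matrix.diagonal_apply_ne _ hij]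
  have hCH : Cᴴ = ε • (A * E) + (1 - E) := by
    rw [hCdef]
    rw [Matrix.conjTranspose_add, Matrix.conjTranspose_mul, hEH, hAe,
      Matrix.conjTranspose_sub, Matrix.conjTranspose_one, hEH, Matrix.smul_mul]
  have hED : E * D = (-ε) • E := by
    rw [hDdef, Matrix.mul_add, Matrix.mul_smul, Matrix.mul_sub, ← Matrix.mul_assoc, hEE]
    simp
  have hAEE : A * E * E = A * E := by rw [Matrix.mul_assoc, hEE]
  have hAED : (A * E) * D = (-ε) • (A * E) := by
    rw [hDdef, Matrix.mul_add, Matrix.mul_smul, hAEE, Matrix.mul_sub, ← Matrix.mul_assoc, hAEE]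
    simp
  have hCD : Cᴴ * D = A - A * E - E * A := by
    rw [hCH, Matrix.add_mul, Matrix.sub_mul, Matrix.smul_mul, hAED, hED, Matrix.one_mul,
      smul_smul]
    have h2 : ε * -ε = -1 := by rw [mul_neg, hεsq]
    rw [h2, hDdef]
    module
  have hdetCH : IsUnit Cᴴ.det := by
    rw [Matrix.det_conjTranspose]
    exact isUnit_iff_ne_zero.mpr (star_ne_zero.mpr hdetC)
  have hD2 : D = (Cᴴ)⁻¹ * (A - A * E - E * A) := by
    rw [← hCD, ← Matrix.mul_assoc, Matrix.nonsing_inv_mul _ hdetCH, Matrix.one_mul]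
  have hHH : (A - A * E - E * A)ᴴ = ε • (A - A * E - E * A) := by
    rw [Matrix.conjTranspose_sub, Matrix.conjTranspose_sub, Matrix.conjTranspose_mul,
      Matrix.conjTranspose_mul, hEH, hAe, Matrix.smul_mul, Matrix.mul_smul]
    module
  have hA'2 : A' = (Cᴴ)⁻¹ * ((A - A * E - E * A) * C⁻¹) := by
    rw [hA'def, hD2, Matrix.mul_assoc]
  have hA'H : A'ᴴ = ε • A' := by
    rw [hA'2]
    simp only [Matrix.conjTranspose_mul, Matrix.conjTranspose_nonsing_inv,
      Matrix.conjTranspose_conjTranspose, hHH, Matrix.smul_mul, Matrix.mul_smul,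
      Matrix.mul_assoc]
  have hmul : ∀ S : Finset (Fin n), Nm A' S * C =
      Matrix.diagonal (fun i => if i ∈ S ∧ i ∈ A₀ then -ε else 1) * Nm A (symmDiff S A₀) :=
    fun S => mul_Nm ε A A' C D A₀ S hA'C hCe hDe
  have hdetiff : ∀ S : Finset (Fin n),
      (pm A' S).det ≠ 0 ↔ (pm A (symmDiff S A₀)).det ≠ 0 := by
    intro S
    have h := congrArg Matrix.det (hmul S)
    rw [Matrix.det_mul, Matrix.det_mul, Matrix.det_diagonal, det_Nm, det_Nm] at h
    have hp : (∏ i, (if i ∈ S ∧ i ∈ A₀ then -ε else 1)) ≠ 0 :=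
      Finset.prod_ne_zero_iff.mpr fun i _ => by split_ifs <;> simp [hε0]
    constructor
    · intro hne h0
      rw [h0, mul_zero] at h
      exact mul_ne_zero hne hdetC h
    · intro hne h0
      rw [h0, zero_mul] at h
      exact mul_ne_zero hp hne h.symm
  have hSB : symmDiff (symmDiff A₀ B₀) A₀ = B₀ := by
    rw [symmDiff_comm A₀ B₀, symmDiff_symmDiff_cancel_right]
  have hS : (pm A' (symmDiff A₀ B₀)).det ≠ 0 := by
    rw [hdetiff, hSB]; exact hB₀
  by_cases hxx : A' x x = 0
  · have hrow : ∃ j : {z // z ∈ symmDiff A₀ B₀}, pm A' (symmDiff A₀ B₀) ⟨x, hx⟩ j ≠ 0 := by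
      by_contra hcon
      push_neg at hcon
      exact hS (Matrix.det_eq_zero_of_row_eq_zero ⟨x, hx⟩ hcon)
    obtain ⟨⟨y, hy⟩, hxy0⟩ := hrow
    have hxyA : A' x y ≠ 0 := hxy0
    have hxyne : x ≠ y := by
      rintro rfl
      exact hxyA hxx
    refine ⟨y, hy, ?_⟩
    rw [symmDiff_comm A₀ ({x, y} : Finset (Fin n)), ← hdetiff, det_pm_pair A' hxyne, hxx,
      zero_mul, zero_sub, neg_ne_zero]
    have hyx : A' y x = star ε * star (A' x y) := by
      have h := congrFun (congrFun hA'H x) y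
      rw [Matrix.conjTranspose_apply, Matrix.smul_apply, smul_eq_mul] at h
      calc A' y x = star (star (A' y x)) := (star_star _).symm
        _ = star (ε * A' x y) := by rw [h]
        _ = star ε * star (A' x y) := by exact star_mul' _ _
    rw [hyx]
    exact mul_ne_zero hxyA (mul_ne_zero (star_ne_zero.mpr hε0) (star_ne_zero.mpr hxyA))
  · refine ⟨x, hx, ?_⟩
    have hpair : ({x, x} : Finset (Fin n)) = {x} := by simp
    rw [hpair, symmDiff_comm A₀ ({x} : Finset (Fin n)), ← hdetiff, det_pm_single]
    exact hxx

end DM7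

open scoped Matrix

/-- For a Hermitian or skew-Hermitian matrix `A`, the family of index sets of
nonsingular principal submatrices satisfies the symmetric exchange axiom,
i.e. it is a delta-matroid. -/
theorem stmt_7 {n : ℕ} (A : Matrix (Fin n) (Fin n) ℂ)
    (hA : Aᴴ = A ∨ Aᴴ = -A)
    (F : Set (Finset (Fin n)))
    (hF : F = {S : Finset (Fin n) |
      (A.submatrix (fun i : {x // x ∈ S} => (i : Fin n))
        (fun i : {x // x ∈ S} => (i : Fin n))).det ≠ 0}) :
    ∀ A₀ ∈ F, ∀ B₀ ∈ F, ∀ x ∈ symmDiff A₀ B₀,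
      ∃ y ∈ symmDiff A₀ B₀, symmDiff A₀ {x, y} ∈ F := by
  classical
  subst hF
  obtain ⟨ε, hε, hAe⟩ : ∃ ε : ℂ, (ε = 1 ∨ ε = -1) ∧ Aᴴ = ε • A := by
    rcases hA with h | h
    · exact ⟨1, Or.inl rfl, by simpa using h⟩
    · exact ⟨-1, Or.inr rfl, by rw [h]; simp⟩
  intro A₀ hA₀ B₀ hB₀ x hx
  simp only [Set.mem_setOf_eq] at hA₀ hB₀ ⊢
  obtain ⟨y, hy, hdet⟩ := DM7.main A ε hε hAe A₀ B₀ hA₀ hB₀ x hx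
  exact ⟨y, hy, hdet⟩
end

section
/- (Heilmann–Lieb) Let G = (V,E) be a finite graph with V = {1,…,n}, and assign to each edge e = ij ∈ E a nonnegative real number λ_{ij}. Then the matching polynomial M_G(z) = ∑_{M matching of G} ∏_{ij ∈ M} λ_{ij} z_i z_j (where the empty matching contributes the constant term 1) is Hurwitz stable: M_G(z₁,…,zₙ) ≠ 0 whenever Re(zᵢ) > 0 for all i. -/
open Classical

namespace HL

variable {n : ℕ}

noncomputable def Zf (z : Fin n → ℂ) : Sym2 (Fin n) → ℂ :=
  Sym2.lift ⟨fun a b => z a * z b, fun a b => mul_comm _ _⟩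

abbrev Matching (M : Finset (Sym2 (Fin n))) : Prop :=
  ∀ e ∈ M, ∀ e' ∈ M, e ≠ e' → ∀ v : Fin n, ¬(v ∈ e ∧ v ∈ e')

noncomputable def MP (z : Fin n → ℂ) (lam : Sym2 (Fin n) → ℝ)
    (E : Finset (Sym2 (Fin n))) : ℂ :=
  ∑ M ∈ E.powerset.filter (fun M => Matching M), ∏ e ∈ M, (lam e : ℂ) * Zf z e

lemma MP_empty (z : Fin n → ℂ) (lam : Sym2 (Fin n) → ℝ) :
    MP z lam (∅ : Finset (Sym2 (Fin n))) = 1 := by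
  unfold MP
  rw [Finset.powerset_empty, Finset.filter_singleton,
    if_pos (by intro e he; simp at he)]
  simp

lemma split (z : Fin n → ℂ) (lam : Sym2 (Fin n) → ℝ) (E : Finset (Sym2 (Fin n))) (v : Fin n) :
    MP z lam E = MP z lam (E.filter (fun e => v ∉ e))
      + ∑ e ∈ E.filter (fun e => v ∈ e), (lam e : ℂ) * Zf z e *
          MP z lam (E.filter (fun e' => ∀ u : Fin n, ¬(u ∈ e ∧ u ∈ e'))) := by
  conv_lhs => rw [MP]
  rw [← Finset.sum_filter_add_sum_filter_not (E.powerset.filter fun M => Matching M)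
      (fun M => ∀ e ∈ M, v ∉ e)]
  congr 1
  · apply Finset.sum_congr _ (fun _ _ => rfl)
    ext M
    simp only [Finset.mem_filter, Finset.mem_powerset]
    constructor
    · rintro ⟨⟨hME, hMat⟩, hv⟩
      exact ⟨fun e he => Finset.mem_filter.2 ⟨hME he, hv e he⟩, hMat⟩
    · rintro ⟨hME, hMat⟩
      exact ⟨⟨fun e he => (Finset.mem_filter.1 (hME he)).1, hMat⟩,
        fun e he => (Finset.mem_filter.1 (hME he)).2⟩
  · have hB : (E.powerset.filter fun M => Matching M).filter (fun M => ¬ ∀ e ∈ M, v ∉ e)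
      = (E.filter (fun e => v ∈ e)).biUnion (fun e =>
          (E.powerset.filter fun M => Matching M).filter (fun M => e ∈ M)) := by
      ext M
      simp only [Finset.mem_filter, Finset.mem_powerset, Finset.mem_biUnion]
      constructor
      · rintro ⟨⟨hME, hMat⟩, hv⟩
        push_neg at hv
        obtain ⟨e, heM, hve⟩ := hv
        exact ⟨e, ⟨hME heM, hve⟩, ⟨hME, hMat⟩, heM⟩
      · rintro ⟨e, he, ⟨hME, hMat⟩, heM⟩
        refine ⟨⟨hME, hMat⟩, ?_⟩
        push_neg
        exact ⟨e, heM, he.2⟩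
    have hdisj : (↑(E.filter (fun e => v ∈ e)) : Set (Sym2 (Fin n))).PairwiseDisjoint
        (fun e => (E.powerset.filter fun M => Matching M).filter (fun M => e ∈ M)) := by
      intro e he e' he' hne
      simp only [Finset.coe_filter, Set.mem_setOf_eq] at he he'
      refine Finset.disjoint_left.2 ?_
      intro M hM hM'
      simp only [Finset.mem_filter, Finset.mem_powerset] at hM hM'
      exact hM.1.2 e hM.2 e' hM'.2 hne v ⟨he.2, he'.2⟩
    rw [hB, Finset.sum_biUnion hdisj]
    apply Finset.sum_congr rfl
    intro e he
    simp only [Finset.mem_filter] at he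
    have henF : e ∉ E.filter (fun e' => ∀ u : Fin n, ¬(u ∈ e ∧ u ∈ e')) := by
      intro hme
      exact (Finset.mem_filter.1 hme).2 v ⟨he.2, he.2⟩
    rw [MP, Finset.mul_sum]
    refine Finset.sum_nbij' (fun M => M.erase e) (fun N => insert e N) ?_ ?_ ?_ ?_ ?_
    · intro M hM
      simp only [Finset.mem_filter, Finset.mem_powerset] at hM ⊢
      refine ⟨fun a ha => ?_, fun a ha a' ha' =>
        hM.1.2 a (Finset.mem_of_mem_erase ha) a' (Finset.mem_of_mem_erase ha')⟩
      rw [Finset.mem_erase] at ha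
      exact Finset.mem_filter.2 ⟨hM.1.1 ha.2, fun u => hM.1.2 e hM.2 a ha.2 (Ne.symm ha.1) u⟩
    · intro N hN
      simp only [Finset.mem_filter, Finset.mem_powerset] at hN ⊢
      have heN : ∀ a ∈ N, a ∈ E ∧ ∀ u : Fin n, ¬(u ∈ e ∧ u ∈ a) :=
        fun a ha => Finset.mem_filter.1 (hN.1 ha)
      refine ⟨⟨?_, ?_⟩, Finset.mem_insert_self e N⟩
      · intro a ha
        rcases Finset.mem_insert.1 ha with rfl | ha
        · exact he.1
        · exact (heN a ha).1
      · intro a ha a' ha' hne u hu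
        rcases Finset.mem_insert.1 ha with h1 | h1 <;>
          rcases Finset.mem_insert.1 ha' with h2 | h2
        · exact hne (h1.trans h2.symm)
        · exact (heN a' h2).2 u ⟨h1 ▸ hu.1, hu.2⟩
        · exact (heN a h1).2 u ⟨h2 ▸ hu.2, hu.1⟩
        · exact hN.2 a h1 a' h2 hne u hu
    · intro M hM
      simp only [Finset.mem_filter, Finset.mem_powerset] at hM
      exact Finset.insert_erase hM.2
    · intro N hN
      simp only [Finset.mem_filter, Finset.mem_powerset] at hN
      exact Finset.erase_insert (fun h => henF (hN.1 h))
    · intro M hM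
      simp only [Finset.mem_filter, Finset.mem_powerset] at hM
      exact (Finset.mul_prod_erase M _ hM.2).symm

noncomputable def otherV (v : Fin n) (e : Sym2 (Fin n)) : Fin n :=
  if h : v ∈ e then Sym2.Mem.other h else v

lemma key (z : Fin n → ℂ) (lam : Sym2 (Fin n) → ℝ) (hz : ∀ i, 0 < (z i).re) :
    ∀ N : ℕ, ∀ S : Finset (Fin n), S.card ≤ N →
      ∀ E : Finset (Sym2 (Fin n)), (∀ e ∈ E, ¬ e.IsDiag) → (∀ e ∈ E, 0 ≤ lam e) →
        (∀ e ∈ E, ∀ u : Fin n, u ∈ e → u ∈ S) →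
        MP z lam E ≠ 0 ∧
          ∀ v ∈ S, 0 < (z v * (MP z lam (E.filter (fun e => v ∉ e)) / MP z lam E)).re := by
  intro N
  induction N with
  | zero =>
    intro S hS E hdiag hlam hsupp
    have hSe : S = ∅ := Finset.card_eq_zero.mp (Nat.le_zero.mp hS)
    have hEe : E = ∅ := by
      rw [Finset.eq_empty_iff_forall_notMem]
      intro e he
      have := hsupp e he (Quot.out e).1 (Sym2.out_fst_mem e)
      simp [hSe] at this
    subst hEe
    refine ⟨by simp [MP_empty], fun v hv => by simp [hSe] at hv⟩
  | succ N ih =>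
    intro S hS E hdiag hlam hsupp
    have main : ∀ v ∈ S, MP z lam E ≠ 0 ∧
        0 < (z v * (MP z lam (E.filter fun e => v ∉ e) / MP z lam E)).re := by
      intro v hv
      set E0 := E.filter (fun e => v ∉ e) with hE0def
      have hsupp0 : ∀ e ∈ E0, ∀ u : Fin n, u ∈ e → u ∈ S.erase v := by
        intro e he u hu
        rw [hE0def, Finset.mem_filter] at he
        exact Finset.mem_erase.2 ⟨fun h => he.2 (h ▸ hu), hsupp e he.1 u hu⟩
      have hcard : (S.erase v).card ≤ N := by
        rw [Finset.card_erase_of_mem hv]; omega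
      have hmemE0 : ∀ e ∈ E0, e ∈ E := by
        intro e he; rw [hE0def, Finset.mem_filter] at he; exact he.1
      obtain ⟨h0ne, hratio⟩ := ih (S.erase v) hcard E0
        (fun e he => hdiag e (hmemE0 e he))
        (fun e he => hlam e (hmemE0 e he)) hsupp0
      have hzvne : z v ≠ 0 := fun h => by simpa [h] using (hz v)
      have hterm : ∀ e ∈ E.filter (fun e => v ∈ e),
          (lam e : ℂ) * Zf z e * MP z lam (E.filter fun e' => ∀ u : Fin n, ¬(u ∈ e ∧ u ∈ e'))
          = z v * ((lam e : ℂ) * z (otherV v e) *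
              MP z lam (E0.filter fun e' => otherV v e ∉ e')) := by
        intro e he
        rw [Finset.mem_filter] at he
        have hve : v ∈ e := he.2
        obtain ⟨w, rfl⟩ : ∃ w, e = s(v, w) := ⟨Sym2.Mem.other hve, (Sym2.other_spec hve).symm⟩
        have hvm : v ∈ s(v, w) := Sym2.mem_mk_left v w
        have hov : otherV v s(v, w) = w := by
          rw [otherV, dif_pos hvm]
          exact Sym2.congr_right.1 (Sym2.other_spec hvm)
        have hZ : Zf z s(v, w) = z v * z (otherV v s(v, w)) := by
          rw [hov]; simp [Zf]
        have hF : E.filter (fun e' => ∀ u : Fin n, ¬(u ∈ s(v, w) ∧ u ∈ e'))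
            = E0.filter (fun e' => otherV v s(v, w) ∉ e') := by
          rw [hE0def, Finset.filter_filter]
          apply Finset.filter_congr
          intro e' _
          rw [hov]
          constructor
          · intro h
            exact ⟨fun hv' => h v ⟨hvm, hv'⟩,
              fun hu => h w ⟨Sym2.mem_mk_right v w, hu⟩⟩
          · intro h u hu
            rcases Sym2.mem_iff.1 hu.1 with rfl | rfl
            · exact h.1 hu.2
            · exact h.2 hu.2
        rw [hZ, hF]; ring
      have hsplit := split z lam E v
      rw [Finset.sum_congr rfl hterm, ← Finset.mul_sum] at hsplit
      set T : ℂ := ∑ e ∈ E.filter (fun e => v ∈ e),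
        (lam e : ℂ) * z (otherV v e) * MP z lam (E0.filter fun e' => otherV v e ∉ e') with hTdef
      set D : ℂ := (z v)⁻¹ + T / MP z lam E0 with hDdef
      have hDre : 0 < D.re := by
        rw [hDdef, Complex.add_re]
        have h1 : 0 < ((z v)⁻¹).re := by
          rw [Complex.inv_re]
          exact div_pos (hz v) (Complex.normSq_pos.2 hzvne)
        have h2 : 0 ≤ (T / MP z lam E0).re := by
          rw [hTdef, Finset.sum_div, Complex.re_sum]
          apply Finset.sum_nonneg
          intro e he
          rw [Finset.mem_filter] at he
          have hve : v ∈ e := he.2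
          obtain ⟨w, rfl⟩ : ∃ w, e = s(v, w) := ⟨Sym2.Mem.other hve, (Sym2.other_spec hve).symm⟩
          have hvm : v ∈ s(v, w) := Sym2.mem_mk_left v w
          have hov : otherV v s(v, w) = w := by
            rw [otherV, dif_pos hvm]
            exact Sym2.congr_right.1 (Sym2.other_spec hvm)
          have huS : otherV v s(v, w) ∈ S.erase v := by
            rw [hov]
            refine Finset.mem_erase.2 ⟨?_, hsupp _ he.1 w (Sym2.mem_mk_right v w)⟩
            intro h
            exact hdiag _ he.1 (Sym2.mk_isDiag_iff.2 h.symm)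
          have hpos := hratio _ huS
          have hrw : (lam s(v, w) : ℂ) * z (otherV v s(v, w))
                * MP z lam (E0.filter fun e' => otherV v s(v, w) ∉ e') / MP z lam E0
              = (lam s(v, w) : ℂ) * (z (otherV v s(v, w)) *
                  (MP z lam (E0.filter fun e' => otherV v s(v, w) ∉ e') / MP z lam E0)) := by
            ring
          rw [hrw, Complex.re_ofReal_mul]
          exact mul_nonneg (hlam _ he.1) (le_of_lt hpos)
        linarith
      have hDne : D ≠ 0 := fun h => by simp [h] at hDre
      have hMPE : MP z lam E = z v * MP z lam E0 * D := by
        rw [hsplit, hDdef]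
        field_simp
        ring
      have hMPEne : MP z lam E ≠ 0 := by
        rw [hMPE]
        exact mul_ne_zero (mul_ne_zero hzvne h0ne) hDne
      refine ⟨hMPEne, ?_⟩
      have hratioD : z v * (MP z lam E0 / MP z lam E) = D⁻¹ := by
        rw [hMPE]
        field_simp
      rw [hratioD, Complex.inv_re]
      exact div_pos hDre (Complex.normSq_pos.2 hDne)
    constructor
    · rcases S.eq_empty_or_nonempty with hSe | ⟨v, hv⟩
      · have hEe : E = ∅ := by
          rw [Finset.eq_empty_iff_forall_notMem]
          intro e he
          have := hsupp e he (Quot.out e).1 (Sym2.out_fst_mem e)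
          simp [hSe] at this
        rw [hEe, MP_empty]; exact one_ne_zero
      · exact (main v hv).1
    · exact fun v hv => (main v hv).2

end HL

open Classical in
/-- Heilmann–Lieb: the weighted matching polynomial
`M_G(z) = ∑_{M matching} ∏_{ij ∈ M} λ_{ij} z_i z_j` of a finite graph, with
nonnegative edge weights, is Hurwitz stable. -/
theorem stmt_8 {n : ℕ} (E : Finset (Sym2 (Fin n))) (hE : ∀ e ∈ E, ¬ e.IsDiag)
    (lam : Sym2 (Fin n) → ℝ) (hlam : ∀ e ∈ E, 0 ≤ lam e)
    (z : Fin n → ℂ) (hz : ∀ i, 0 < (z i).re) :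
    (∑ M ∈ E.powerset.filter
        (fun M => ∀ e ∈ M, ∀ e' ∈ M, e ≠ e' → ∀ v : Fin n, ¬(v ∈ e ∧ v ∈ e')),
      ∏ e ∈ M,
        (lam e : ℂ) * Sym2.lift ⟨fun a b => z a * z b, fun a b => mul_comm _ _⟩ e) ≠ 0 := by
  exact (HL.key z lam hz n Finset.univ (by simp) E hE hlam (fun e he u hu => Finset.mem_univ u)).1
end

section
/- Let G = (V,E) be a finite graph and let F be the collection of all subsets S ⊆ V such that there exists a matching of G covering precisely the vertices in S. Then F satisfies the symmetric exchange axiom: for all A, B ∈ F and every x ∈ A Δ B there exists y ∈ A Δ B such that A Δ {x,y} ∈ F (so F is a delta-matroid). -/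
namespace DM9

variable {n : ℕ}

def IsM (M : Finset (Sym2 (Fin n))) : Prop :=
  ∀ e ∈ M, ∀ e' ∈ M, e ≠ e' → ∀ v : Fin n, ¬(v ∈ e ∧ v ∈ e')

noncomputable def cov (M : Finset (Sym2 (Fin n))) : Finset (Fin n) :=
  Finset.univ.filter (fun v => ∃ e ∈ M, v ∈ e)

lemma mem_cov {M : Finset (Sym2 (Fin n))} {v : Fin n} :
    v ∈ cov M ↔ ∃ e ∈ M, v ∈ e := by
  simp [cov]

attribute [irreducible] cov

lemma uniq {M : Finset (Sym2 (Fin n))} (hM : IsM M) {e e' : Sym2 (Fin n)} {v : Fin n}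
    (he : e ∈ M) (he' : e' ∈ M) (hv : v ∈ e) (hv' : v ∈ e') : e = e' := by
  by_contra h
  exact hM e he e' he' h v ⟨hv, hv'⟩

lemma isM_erase {M : Finset (Sym2 (Fin n))} (hM : IsM M) (e : Sym2 (Fin n)) :
    IsM (M.erase e) := fun f hf f' hf' hne v =>
  hM f (Finset.mem_of_mem_erase hf) f' (Finset.mem_of_mem_erase hf') hne v

lemma isM_insert {M : Finset (Sym2 (Fin n))} (hM : IsM M) {e : Sym2 (Fin n)}
    (he : ∀ v ∈ e, v ∉ cov M) : IsM (insert e M) := by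
  intro f hf f' hf' hne v hv
  rcases Finset.mem_insert.1 hf with hfe | hf
  · rcases Finset.mem_insert.1 hf' with hfe' | hf'
    · exact hne (hfe.trans hfe'.symm)
    · exact he v (hfe ▸ hv.1) (mem_cov.2 ⟨f', hf', hv.2⟩)
  · rcases Finset.mem_insert.1 hf' with hfe' | hf'
    · exact he v (hfe' ▸ hv.2) (mem_cov.2 ⟨f, hf, hv.1⟩)
    · exact hM f hf f' hf' hne v hv

lemma cov_erase {M : Finset (Sym2 (Fin n))} (hM : IsM M) {a b : Fin n}
    (he : s(a, b) ∈ M) : cov (M.erase s(a, b)) = cov M \ {a, b} := by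
  ext v
  simp only [mem_cov, Finset.mem_sdiff, Finset.mem_insert, Finset.mem_singleton]
  constructor
  · rintro ⟨f, hf, hvf⟩
    refine ⟨⟨f, Finset.mem_of_mem_erase hf, hvf⟩, ?_⟩
    rintro (rfl | rfl)
    · exact (Finset.ne_of_mem_erase hf)
        (uniq hM (Finset.mem_of_mem_erase hf) he hvf (by simp))
    · exact (Finset.ne_of_mem_erase hf)
        (uniq hM (Finset.mem_of_mem_erase hf) he hvf (by simp))
  · rintro ⟨⟨f, hf, hvf⟩, hv⟩
    refine ⟨f, Finset.mem_erase.2 ⟨?_, hf⟩, hvf⟩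
    rintro rfl
    rcases Sym2.mem_iff.1 hvf with rfl | rfl
    · exact hv (Or.inl rfl)
    · exact hv (Or.inr rfl)

lemma cov_insert {M : Finset (Sym2 (Fin n))} {a b : Fin n} :
    cov (insert s(a, b) M) = cov M ∪ {a, b} := by
  ext v
  simp only [mem_cov, Finset.mem_union, Finset.mem_insert, Finset.mem_singleton]
  constructor
  · rintro ⟨f, hf, hvf⟩
    rcases hf with hfe | hf
    · rw [hfe] at hvf
      rcases Sym2.mem_iff.1 hvf with rfl | rfl
      · exact Or.inr (Or.inl rfl)
      · exact Or.inr (Or.inr rfl)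
    · exact Or.inl ⟨f, hf, hvf⟩
  · rintro (⟨f, hf, hvf⟩ | hv | hv)
    · exact ⟨f, Or.inr hf, hvf⟩
    · exact ⟨s(a, b), Or.inl rfl, by rw [hv]; simp⟩
    · exact ⟨s(a, b), Or.inl rfl, by rw [hv]; simp⟩


lemma pair_symmDiff {u w y : Fin n} (hwu : w ≠ u) (hyu : y ≠ u) (hyw : y ≠ w) :
    symmDiff ({u, w} : Finset (Fin n)) {w, y} = {u, y} := by
  ext v
  simp only [Finset.mem_symmDiff, Finset.mem_insert, Finset.mem_singleton]
  constructor
  · rintro (⟨h1, h2⟩ | ⟨h1, h2⟩)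
    · rcases h1 with h | h
      · exact Or.inl h
      · exact absurd (Or.inl h) h2
    · rcases h1 with h | h
      · exact absurd (Or.inr h) h2
      · exact Or.inr h
  · rintro (h | h)
    · subst h
      refine Or.inl ⟨Or.inl rfl, ?_⟩
      rintro (h | h)
      exacts [hwu h.symm, hyu h.symm]
    · subst h
      refine Or.inr ⟨Or.inr rfl, ?_⟩
      rintro (h | h)
      exacts [hyu h, hyw h]

lemma key (E : Finset (Sym2 (Fin n))) (hE : ∀ e ∈ E, ¬ e.IsDiag) :
    ∀ k (M N : Finset (Sym2 (Fin n))), (symmDiff M N).card ≤ k →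
    M ⊆ E → N ⊆ E → IsM M → IsM N →
    ∀ u ∈ symmDiff (cov M) (cov N),
    ∃ y ∈ symmDiff (cov M) (cov N), y ≠ u ∧
      ∃ M' ⊆ E, IsM M' ∧ cov M' = symmDiff (cov M) {u, y} := by
  intro k
  induction k with
  | zero =>
    intro M N hcard _ _ _ _ u hu
    rw [Nat.le_zero, Finset.card_eq_zero, ← Finset.bot_eq_empty, symmDiff_eq_bot] at hcard
    rw [hcard, symmDiff_self] at hu
    exact absurd hu (by simp)
  | succ k ih =>
    intro M N hcard hME hNE hM hN u hu
    rcases Finset.mem_symmDiff.1 hu with ⟨huM, huN⟩ | ⟨huN, huM⟩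
    · -- u covered by M, not by N
      obtain ⟨e, heM, hue⟩ := mem_cov.1 huM
      obtain ⟨z, rfl⟩ := Sym2.mem_iff_exists.1 hue
      have huz : u ≠ z := by
        have := hE _ (hME heM); rw [Sym2.mk_isDiag_iff] at this; exact this
      have heN : s(u, z) ∉ N := fun h => huN (mem_cov.2 ⟨_, h, by simp⟩)
      have hzM : z ∈ cov M := mem_cov.2 ⟨s(u, z), heM, by simp⟩
      by_cases hzN : z ∈ cov N
      · obtain ⟨f, hfN, hzf⟩ := mem_cov.1 hzN
        obtain ⟨w, rfl⟩ := Sym2.mem_iff_exists.1 hzf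
        have hzw : z ≠ w := by
          have := hE _ (hNE hfN); rw [Sym2.mk_isDiag_iff] at this; exact this
        have hwu : w ≠ u := fun h => huN (mem_cov.2 ⟨s(z, w), hfN, by rw [h]; simp⟩)
        have hwN : w ∈ cov N := mem_cov.2 ⟨s(z, w), hfN, by simp⟩
        have hfe : s(z, w) ≠ s(u, z) := fun h => heN (h ▸ hfN)
        have hfM : s(z, w) ∉ M := fun h => hfe (uniq hM (v := z) h heM
          (Sym2.mem_iff.2 (Or.inl rfl)) (Sym2.mem_iff.2 (Or.inr rfl)))
        by_cases hwM : w ∈ cov M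
        · obtain ⟨g, hgM, hwg⟩ := mem_cov.1 hwM
          obtain ⟨t, rfl⟩ := Sym2.mem_iff_exists.1 hwg
          have hwt : w ≠ t := by
            have := hE _ (hME hgM); rw [Sym2.mk_isDiag_iff] at this; exact this
          have hge : s(w, t) ≠ s(u, z) := by
            intro h
            rcases Sym2.eq_iff.1 h with ⟨h1, h2⟩ | ⟨h1, h2⟩
            · exact hwu h1
            · exact hzw h1.symm
          have hgN : s(w, t) ∉ N := fun h => hfM ((uniq hN (v := w) h hfN
            (Sym2.mem_iff.2 (Or.inl rfl)) (Sym2.mem_iff.2 (Or.inr rfl))) ▸ hgM)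
          have htu : t ≠ u := by
            rintro rfl
            exact hge (uniq hM (v := t) hgM heM
              (Sym2.mem_iff.2 (Or.inr rfl)) (Sym2.mem_iff.2 (Or.inl rfl)))
          have htz : t ≠ z := by
            rintro rfl
            exact hfM (Sym2.eq_swap (a := w) (b := t) ▸ hgM)
          have htM : t ∈ cov M := mem_cov.2 ⟨s(w, t), hgM, by simp⟩
          have hgmem : s(w, t) ∈ M.erase s(u, z) := Finset.mem_erase.2 ⟨hge, hgM⟩
          set M3 := insert s(z, w) ((M.erase s(u, z)).erase s(w, t)) with hM3def
          have hM3E : M3 ⊆ E := by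
            intro h hh
            rcases Finset.mem_insert.1 hh with rfl | hh
            · exact hNE hfN
            · exact hME (Finset.mem_of_mem_erase (Finset.mem_of_mem_erase hh))
          have hcovE : cov ((M.erase s(u, z)).erase s(w, t))
              = (cov M \ {u, z}) \ {w, t} := by
            rw [cov_erase (isM_erase hM _) hgmem, cov_erase hM heM]
          have hM3 : IsM M3 := by
            refine isM_insert (isM_erase (isM_erase hM _) _) ?_
            intro v hv
            rw [hcovE]
            rcases Sym2.mem_iff.1 hv with rfl | rfl
            · simp
            · simp
          have hcov3 : cov M3 = ((cov M \ {u, z}) \ {w, t}) ∪ {z, w} := by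
            rw [hM3def, cov_insert, hcovE]
          have hcov3' : cov M3 = cov M \ {u, t} := by
            rw [hcov3]
            ext v
            simp only [Finset.mem_sdiff, Finset.mem_union, Finset.mem_insert,
              Finset.mem_singleton]
            constructor
            · intro hv
              rcases hv with ⟨⟨h1, h2⟩, h3⟩ | h | h
              · exact ⟨h1, fun hq => hq.elim (fun q => h2 (Or.inl q))
                  (fun q => h3 (Or.inr q))⟩
              · subst h
                refine ⟨hzM, ?_⟩
                rintro (h | h)
                exacts [huz h.symm, htz h.symm]
              · subst h
                refine ⟨hwM, ?_⟩
                rintro (h | h)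
                exacts [hwu h, hwt h]
            · rintro ⟨h1, h2⟩
              by_cases hz : v = z
              · exact Or.inr (Or.inl hz)
              by_cases hw : v = w
              · exact Or.inr (Or.inr hw)
              refine Or.inl ⟨⟨h1, ?_⟩, ?_⟩
              · rintro (h | h)
                exacts [h2 (Or.inl h), hz h]
              · rintro (h | h)
                exacts [hw h, h2 (Or.inr h)]
          have hu3 : u ∉ cov M3 := by rw [hcov3']; simp
          have ht3 : t ∉ cov M3 := by rw [hcov3']; simp
          have hcard3 : (symmDiff M3 N).card ≤ k := by
            have hfMN : s(z, w) ∈ symmDiff M N :=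
              Finset.mem_symmDiff.2 (Or.inr ⟨hfN, hfM⟩)
            have hsub : symmDiff M3 N ⊆ (symmDiff M N).erase s(z, w) := by
              intro h hh
              rw [Finset.mem_erase]
              rcases Finset.mem_symmDiff.1 hh with ⟨h1, h2⟩ | ⟨h1, h2⟩
              · have hne : h ≠ s(z, w) := fun hq => h2 (hq ▸ hfN)
                rcases Finset.mem_insert.1 h1 with rfl | h1
                · exact absurd rfl hne
                · exact ⟨hne, Finset.mem_symmDiff.2 (Or.inl
                    ⟨Finset.mem_of_mem_erase (Finset.mem_of_mem_erase h1), h2⟩)⟩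
              · have hne : h ≠ s(z, w) := fun hq => h2 (hq ▸ Finset.mem_insert_self _ _)
                refine ⟨hne, Finset.mem_symmDiff.2 (Or.inr ⟨h1, fun hhM => ?_⟩)⟩
                rcases eq_or_ne h s(u, z) with rfl | hne1
                · exact heN h1
                · rcases eq_or_ne h s(w, t) with rfl | hne2
                  · exact hgN h1
                  · exact h2 (Finset.mem_insert_of_mem (Finset.mem_erase.2
                      ⟨hne2, Finset.mem_erase.2 ⟨hne1, hhM⟩⟩))
            calc (symmDiff M3 N).card ≤ ((symmDiff M N).erase s(z, w)).card :=
                  Finset.card_le_card hsub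
              _ = (symmDiff M N).card - 1 := Finset.card_erase_of_mem hfMN
              _ ≤ k := by omega
          have hcov3'' : cov M3 = symmDiff (cov M) {u, t} := by
            rw [hcov3']
            ext v
            simp only [Finset.mem_symmDiff, Finset.mem_sdiff, Finset.mem_insert,
              Finset.mem_singleton]
            constructor
            · rintro ⟨h1, h2⟩
              exact Or.inl ⟨h1, h2⟩
            · rintro (⟨h1, h2⟩ | ⟨h1, h2⟩)
              · exact ⟨h1, h2⟩
              · rcases h1 with rfl | rfl
                · exact absurd huM h2
                · exact absurd htM h2
          by_cases htN : t ∈ cov N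
          · obtain ⟨y, hy, hyt, M', hM'E, hM'm, hcovM'⟩ :=
              ih M3 N hcard3 hM3E hNE hM3 hN t
                (Finset.mem_symmDiff.2 (Or.inr ⟨htN, ht3⟩))
            have hyu : y ≠ u := by
              rintro rfl
              rcases Finset.mem_symmDiff.1 hy with ⟨h1, _⟩ | ⟨h1, _⟩
              · exact hu3 h1
              · exact huN h1
            refine ⟨y, ?_, hyu, M', hM'E, hM'm, ?_⟩
            · rcases Finset.mem_symmDiff.1 hy with ⟨h1, h2⟩ | ⟨h1, h2⟩
              · rw [hcov3'] at h1
                exact Finset.mem_symmDiff.2 (Or.inl ⟨(Finset.mem_sdiff.1 h1).1, h2⟩)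
              · refine Finset.mem_symmDiff.2 (Or.inr ⟨h1, fun hyM => ?_⟩)
                exact h2 (by
                  rw [hcov3']
                  exact Finset.mem_sdiff.2 ⟨hyM, by simp [hyu, hyt]⟩)
            · rw [hcovM', hcov3'', symmDiff_assoc, pair_symmDiff htu hyu hyt]
          · refine ⟨t, Finset.mem_symmDiff.2 (Or.inl ⟨htM, htN⟩), htu, M3, hM3E, hM3,
              hcov3''⟩
        · -- w not covered by M: 2-edge swap
          set M3 := insert s(z, w) (M.erase s(u, z)) with hM3def
          have hM3E : M3 ⊆ E := by
            intro h hh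
            rcases Finset.mem_insert.1 hh with rfl | hh
            · exact hNE hfN
            · exact hME (Finset.mem_of_mem_erase hh)
          have hcovE : cov (M.erase s(u, z)) = cov M \ {u, z} := cov_erase hM heM
          have hM3 : IsM M3 := by
            refine isM_insert (isM_erase hM _) ?_
            intro v hv
            rw [hcovE]
            rcases Sym2.mem_iff.1 hv with rfl | rfl
            · simp
            · simp [hwM]
          refine ⟨w, Finset.mem_symmDiff.2 (Or.inr ⟨hwN, hwM⟩), hwu, M3, hM3E, hM3, ?_⟩
          rw [hM3def, cov_insert, hcovE]
          ext v
          simp only [Finset.mem_symmDiff, Finset.mem_sdiff, Finset.mem_union,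
            Finset.mem_insert, Finset.mem_singleton]
          constructor
          · intro hv
            rcases hv with ⟨h1, h2⟩ | h | h
            · refine Or.inl ⟨h1, ?_⟩
              rintro (h | h)
              exacts [h2 (Or.inl h), hwM (h ▸ h1)]
            · subst h
              refine Or.inl ⟨hzM, ?_⟩
              rintro (h | h)
              exacts [huz h.symm, hwM (h ▸ hzM)]
            · subst h
              exact Or.inr ⟨Or.inr rfl, hwM⟩
          · rintro (⟨h1, h2⟩ | ⟨h1, h2⟩)
            · by_cases hz : v = z
              · exact Or.inr (Or.inl hz)
              refine Or.inl ⟨h1, ?_⟩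
              rintro (h | h)
              exacts [h2 (Or.inl h), hz h]
            · rcases h1 with rfl | rfl
              · exact absurd huM h2
              · exact Or.inr (Or.inr rfl)
      · -- z not covered by N: remove the edge
        refine ⟨z, Finset.mem_symmDiff.2 (Or.inl ⟨hzM, hzN⟩), Ne.symm huz,
          M.erase s(u, z), fun h hh => hME (Finset.mem_of_mem_erase hh),
          isM_erase hM _, ?_⟩
        rw [cov_erase hM heM]
        ext v
        simp only [Finset.mem_symmDiff, Finset.mem_sdiff, Finset.mem_insert,
          Finset.mem_singleton]
        constructor
        · rintro ⟨h1, h2⟩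
          exact Or.inl ⟨h1, h2⟩
        · rintro (⟨h1, h2⟩ | ⟨h1, h2⟩)
          · exact ⟨h1, h2⟩
          · rcases h1 with rfl | rfl
            · exact absurd huM h2
            · exact absurd hzM h2
    · -- u covered by N, not by M
      obtain ⟨f, hfN, huf⟩ := mem_cov.1 huN
      obtain ⟨z, rfl⟩ := Sym2.mem_iff_exists.1 huf
      have huz : u ≠ z := by
        have := hE _ (hNE hfN); rw [Sym2.mk_isDiag_iff] at this; exact this
      have hfM : s(u, z) ∉ M := fun h => huM (mem_cov.2 ⟨_, h, by simp⟩)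
      by_cases hzM : z ∈ cov M
      · obtain ⟨g, hgM, hzg⟩ := mem_cov.1 hzM
        obtain ⟨w, rfl⟩ := Sym2.mem_iff_exists.1 hzg
        have hzw : z ≠ w := by
          have := hE _ (hME hgM); rw [Sym2.mk_isDiag_iff] at this; exact this
        have hwu : w ≠ u := fun h => huM (mem_cov.2 ⟨s(z, w), hgM, by rw [h]; simp⟩)
        have hgf : s(z, w) ≠ s(u, z) := fun h => hfM (h ▸ hgM)
        have hgN : s(z, w) ∉ N := fun h => hgf (uniq hN (v := z) h hfN (Sym2.mem_iff.2 (Or.inl rfl)) (Sym2.mem_iff.2 (Or.inr rfl)))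
        -- swap: M3 = M - g + f
        set M3 := insert s(u, z) (M.erase s(z, w)) with hM3def
        have hM3E : M3 ⊆ E := by
          intro h hh
          rcases Finset.mem_insert.1 hh with rfl | hh
          · exact hNE hfN
          · exact hME (Finset.mem_of_mem_erase hh)
        have hcovE : cov (M.erase s(z, w)) = cov M \ {z, w} := cov_erase hM hgM
        have hM3 : IsM M3 := by
          refine isM_insert (isM_erase hM _) ?_
          intro v hv
          rw [hcovE]
          rcases Sym2.mem_iff.1 hv with rfl | rfl
          · simp [huM]
          · simp
        have hcov3 : cov M3 = (cov M \ {z, w}) ∪ {u, z} := by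
          rw [hM3def, cov_insert, hcovE]
        have hu3 : u ∈ cov M3 := by rw [hcov3]; simp
        have hw3 : w ∉ cov M3 := by
          rw [hcov3]; simp [hwu, (Ne.symm hzw), huM]
        have hcard3 : (symmDiff M3 N).card ≤ k := by
          have hfMN : s(u, z) ∈ symmDiff M N :=
            Finset.mem_symmDiff.2 (Or.inr ⟨hfN, hfM⟩)
          have hsub : symmDiff M3 N ⊆ (symmDiff M N).erase s(u, z) := by
            intro h hh
            rw [Finset.mem_erase]
            rcases Finset.mem_symmDiff.1 hh with ⟨h1, h2⟩ | ⟨h1, h2⟩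
            · have hne : h ≠ s(u, z) := fun hq => h2 (hq ▸ hfN)
              rcases Finset.mem_insert.1 h1 with rfl | h1
              · exact absurd rfl hne
              · exact ⟨hne, Finset.mem_symmDiff.2
                  (Or.inl ⟨Finset.mem_of_mem_erase h1, h2⟩)⟩
            · have hne : h ≠ s(u, z) := fun hq => h2 (hq ▸ Finset.mem_insert_self _ _)
              refine ⟨hne, Finset.mem_symmDiff.2 (Or.inr ⟨h1, fun hhM => ?_⟩)⟩
              rcases eq_or_ne h s(z, w) with rfl | hng
              · exact hgN h1
              · exact h2 (Finset.mem_insert_of_mem (Finset.mem_erase.2 ⟨hng, hhM⟩))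
          calc (symmDiff M3 N).card ≤ ((symmDiff M N).erase s(u, z)).card :=
                Finset.card_le_card hsub
            _ = (symmDiff M N).card - 1 := Finset.card_erase_of_mem hfMN
            _ ≤ k := by omega
        have hwM : w ∈ cov M := mem_cov.2 ⟨s(z, w), hgM, by simp⟩
        have hcov3' : cov M3 = symmDiff (cov M) {u, w} := by
          rw [hcov3]
          ext v
          simp only [Finset.mem_symmDiff, Finset.mem_sdiff, Finset.mem_union,
            Finset.mem_insert, Finset.mem_singleton]
          constructor
          · intro hv
            rcases hv with ⟨h1, h2⟩ | h | h
            · refine Or.inl ⟨h1, ?_⟩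
              rintro (h | h)
              exacts [huM (h ▸ h1), h2 (Or.inr h)]
            · subst h
              exact Or.inr ⟨Or.inl rfl, huM⟩
            · subst h
              refine Or.inl ⟨hzM, ?_⟩
              rintro (h | h)
              exacts [huz h.symm, hzw h]
          · rintro (⟨h1, h2⟩ | ⟨h1, h2⟩)
            · by_cases hz : v = z
              · exact Or.inr (Or.inr hz)
              refine Or.inl ⟨h1, ?_⟩
              rintro (h | h)
              exacts [hz h, h2 (Or.inr h)]
            · rcases h1 with rfl | rfl
              · exact Or.inr (Or.inl rfl)
              · exact absurd hwM h2
        by_cases hwN : w ∈ cov N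
        · -- recurse at w
          obtain ⟨y, hy, hyw, M', hM'E, hM'm, hcovM'⟩ :=
            ih M3 N hcard3 hM3E hNE hM3 hN w
              (Finset.mem_symmDiff.2 (Or.inr ⟨hwN, hw3⟩))
          have hyu : y ≠ u := by
            rintro rfl
            rcases Finset.mem_symmDiff.1 hy with ⟨_, h2⟩ | ⟨_, h2⟩
            · exact h2 huN
            · exact h2 hu3
          refine ⟨y, ?_, hyu, M', hM'E, hM'm, ?_⟩
          · rcases Finset.mem_symmDiff.1 hy with ⟨h1, h2⟩ | ⟨h1, h2⟩
            · rw [hcov3'] at h1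
              rcases Finset.mem_symmDiff.1 h1 with ⟨h3, _⟩ | ⟨h3, _⟩
              · exact Finset.mem_symmDiff.2 (Or.inl ⟨h3, h2⟩)
              · exact absurd h3 (by simp [hyu, hyw])
            · refine Finset.mem_symmDiff.2 (Or.inr ⟨h1, fun hyM => ?_⟩)
              apply h2
              rw [hcov3']
              refine Finset.mem_symmDiff.2 (Or.inl ⟨hyM, by simp [hyu, hyw]⟩)
          · rw [hcovM', hcov3', symmDiff_assoc, pair_symmDiff hwu hyu hyw]
        · -- w is the partner
          refine ⟨w, Finset.mem_symmDiff.2 (Or.inl ⟨hwM, hwN⟩), hwu, M3, hM3E, hM3,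
            hcov3'⟩
      · -- z not covered by M : just add the edge
        have hzf : z ∈ cov N := mem_cov.2 ⟨s(u, z), hfN, by simp⟩
        refine ⟨z, Finset.mem_symmDiff.2 (Or.inr ⟨hzf, hzM⟩), Ne.symm huz, insert s(u, z) M,
          ?_, ?_, ?_⟩
        · intro h hh
          rcases Finset.mem_insert.1 hh with rfl | hh
          · exact hNE hfN
          · exact hME hh
        · refine isM_insert hM ?_
          intro v hv
          rcases Sym2.mem_iff.1 hv with rfl | rfl
          · exact huM
          · exact hzM
        · rw [cov_insert]
          ext v
          simp only [Finset.mem_symmDiff, Finset.mem_union, Finset.mem_insert,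
            Finset.mem_singleton]
          constructor
          · rintro (h | h | h)
            · exact Or.inl ⟨h, by rintro (rfl | rfl) <;> contradiction⟩
            · exact Or.inr ⟨Or.inl h, h ▸ huM⟩
            · exact Or.inr ⟨Or.inr h, h ▸ hzM⟩
          · rintro (⟨h, -⟩ | ⟨h, -⟩)
            · exact Or.inl h
            · exact Or.inr h

end DM9

/-- The sets of vertices coverable by matchings of a finite graph form a
delta-matroid: they satisfy the symmetric exchange axiom. -/
theorem stmt_9 {n : ℕ} (E : Finset (Sym2 (Fin n))) (hE : ∀ e ∈ E, ¬ e.IsDiag)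
    (F : Set (Finset (Fin n)))
    (hF : F = {S : Finset (Fin n) | ∃ M ⊆ E,
      (∀ e ∈ M, ∀ e' ∈ M, e ≠ e' → ∀ v : Fin n, ¬(v ∈ e ∧ v ∈ e')) ∧
      ∀ v : Fin n, v ∈ S ↔ ∃ e ∈ M, v ∈ e}) :
    ∀ A ∈ F, ∀ B ∈ F, ∀ x ∈ symmDiff A B, ∃ y ∈ symmDiff A B, symmDiff A {x, y} ∈ F := by
  subst hF
  intro A hA B hB x hx
  obtain ⟨M, hME, hM, hMA⟩ := hA
  obtain ⟨N, hNE, hN, hNB⟩ := hB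
  have hAcov : A = DM9.cov M := by
    ext v; rw [DM9.mem_cov]; exact hMA v
  have hBcov : B = DM9.cov N := by
    ext v; rw [DM9.mem_cov]; exact hNB v
  rw [hAcov, hBcov] at hx
  obtain ⟨y, hy, hyx, M', hM'E, hM'm, hcov⟩ :=
    DM9.key E hE (symmDiff M N).card M N le_rfl hME hNE hM hN x hx
  refine ⟨y, by rw [hAcov, hBcov]; exact hy, M', hM'E, hM'm, fun v => ?_⟩
  rw [hAcov, ← hcov]
  exact DM9.mem_cov
end

section
/- Let G = (V,E) be a finite graph with V = {1,…,n}. For a spanning subgraph H = (V,F) with F ⊆ E, let D(H) = (d₁,…,dₙ) ∈ ℕⁿ be its degree sequence, where dᵢ is the degree of vertex i in H. Then the set {D(H) : H a spanning subgraph of G} ⊆ ℕⁿ is a jump system. -/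
open Finset
open scoped symmDiff

/-!
Write `α = deg F`, `y = β = deg F'` and `x = α + σ`. Since `deg F = x - σ`, some `C ⊆ E`
satisfies `deg C = x + δ e_w` with `δ = ±1`. If moving `x` by `δ` in coordinate `w` brings it closer to
`y`, then `τ = δ e_w` is the required step. Otherwise `deg C w` exceeds `deg F' w` (for `δ = 1`)
or falls short of it (for `δ = -1`), so some edge `s(w, z)` of `C \ F'` can be removed from `C`,
or some edge of `F' \ C` added to it. The new `C` satisfies `deg C = x - δ e_z` and is closer
to `F'` in symmetric difference, so this alternating walk ends with a step.
-/

section UnitStep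

variable {V : Type*} [Fintype V]

def IsUnitStep (x y τ : V → ℤ) : Prop :=
  ∑ i, |τ i| = 1 ∧ ∑ i, |x i + τ i - y i| = ∑ i, |x i - y i| - 1

variable [DecidableEq V]

theorem isUnitStep_single {x y : V → ℤ} {w : V} {δ : ℤ} (hδ : |δ| = 1)
    (h : 1 ≤ δ * (y w - x w)) : IsUnitStep x y (Pi.single w δ) := by
  refine ⟨by rw [Fintype.sum_eq_single w fun i hi => by simp [hi]]; simpa, ?_⟩
  rw [Fintype.sum_eq_add_sum_compl w, Fintype.sum_eq_add_sum_compl w fun i => |x i - y i|,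
    sum_congr rfl fun i hi => by rw [Pi.single_eq_of_ne (by simpa using hi), add_zero]]
  rw [Pi.single_eq_same]
  rcases (abs_eq zero_le_one).1 hδ with rfl | rfl
  · rw [abs_of_nonpos (by linarith), abs_of_nonpos (by linarith)]; ring
  · rw [abs_of_nonneg (by linarith), abs_of_nonneg (by linarith)]; ring

theorem exists_eq_single_of_sum_abs_eq_one {σ : V → ℤ} (h : ∑ i, |σ i| = 1) :
    ∃ u δ, |δ| = 1 ∧ σ = Pi.single u δ := by
  obtain ⟨u, hu⟩ : ∃ u, σ u ≠ 0 := by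
    by_contra! h0
    simp [h0] at h
  rw [Fintype.sum_eq_add_sum_compl u] at h
  have hrest := sum_nonneg (s := {u}ᶜ) fun i _ => abs_nonneg (σ i)
  have hpos := abs_pos.2 hu
  have hzero : ∀ i ≠ u, σ i = 0 := fun i hi => abs_eq_zero.1 <|
    (sum_eq_zero_iff_of_nonneg (s := {u}ᶜ) fun i _ => abs_nonneg (σ i)).1 (by omega) i (by simpa)
  refine ⟨u, σ u, by omega, funext fun i => ?_⟩
  by_cases hi : i = u
  · subst hi; simp
  · simp [hi, hzero i hi]

end UnitStep

section DegreeSequence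

variable {V : Type*} [DecidableEq V]

def degSeq (F : Finset (Sym2 V)) (i : V) : ℤ := #{e ∈ F | i ∈ e}

theorem degSeq_insert {C : Finset (Sym2 V)} {w z : V} (hwz : w ≠ z) (h : s(w, z) ∉ C) :
    degSeq (insert s(w, z) C) = degSeq C + Pi.single w 1 + Pi.single z 1 := by
  ext i
  simp only [degSeq, filter_insert, Pi.add_apply, Pi.single_apply]
  split_ifs with hi hw hz hz <;> simp_all [card_insert_of_notMem]

theorem degSeq_erase {C : Finset (Sym2 V)} {w z : V} (hwz : w ≠ z) (h : s(w, z) ∈ C) :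
    degSeq (C.erase s(w, z)) = degSeq C - Pi.single w 1 - Pi.single z 1 := by
  conv_rhs => rw [← insert_erase h, degSeq_insert hwz (notMem_erase _ _)]
  abel

theorem exists_mem_sdiff_of_degSeq_lt {C D : Finset (Sym2 V)} {w : V}
    (hC : ∀ e ∈ C, ¬e.IsDiag) (h : degSeq D w < degSeq C w) :
    ∃ z, w ≠ z ∧ s(w, z) ∈ C \ D := by
  obtain ⟨f, hf, hfD⟩ := exists_mem_notMem_of_card_lt_card (s := {e ∈ D | w ∈ e})
    (t := {e ∈ C | w ∈ e}) (by unfold degSeq at h; exact_mod_cast h)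
  rw [mem_filter] at hf
  refine ⟨Sym2.Mem.other hf.2, Sym2.other_ne (hC f hf.1) hf.2 |>.symm, ?_⟩
  rw [Sym2.other_spec hf.2, mem_sdiff]
  exact ⟨hf.1, fun hfD' => hfD (mem_filter.2 ⟨hfD', hf.2⟩)⟩

variable {E F : Finset (Sym2 V)}

theorem exists_degSeq_eq_sub_of_degSeq_lt (hE : ∀ e ∈ E, ¬e.IsDiag) {C : Finset (Sym2 V)}
    (hC : C ⊆ E) {w : V} (h : degSeq F w < degSeq C w) :
    ∃ C' ⊆ E, #(C' ∆ F) < #(C ∆ F) ∧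
      ∃ z, degSeq C' = degSeq C - Pi.single w 1 - Pi.single z 1 := by
  obtain ⟨z, hwz, hf⟩ := exists_mem_sdiff_of_degSeq_lt (fun e he => hE e (hC he)) h
  rw [mem_sdiff] at hf
  refine ⟨C.erase s(w, z), (erase_subset _ _).trans hC, ?_, z, degSeq_erase hwz hf.1⟩
  have : C.erase s(w, z) ∆ F = (C ∆ F).erase s(w, z) := by
    ext e
    by_cases he : e = s(w, z) <;> simp [mem_symmDiff, he, hf.2]
  rw [this]
  exact card_erase_lt_of_mem (mem_symmDiff.2 (Or.inl hf))

theorem exists_degSeq_eq_add_of_degSeq_lt (hE : ∀ e ∈ E, ¬e.IsDiag) (hF : F ⊆ E)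
    {C : Finset (Sym2 V)} (hC : C ⊆ E) {w : V} (h : degSeq C w < degSeq F w) :
    ∃ C' ⊆ E, #(C' ∆ F) < #(C ∆ F) ∧
      ∃ z, degSeq C' = degSeq C + Pi.single w 1 + Pi.single z 1 := by
  obtain ⟨z, hwz, hf⟩ := exists_mem_sdiff_of_degSeq_lt (fun e he => hE e (hF he)) h
  rw [mem_sdiff] at hf
  refine ⟨insert s(w, z) C, insert_subset (hF hf.1) hC, ?_, z, degSeq_insert hwz hf.2⟩
  have : insert s(w, z) C ∆ F = (C ∆ F).erase s(w, z) := by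
    ext e
    by_cases he : e = s(w, z) <;> simp [mem_symmDiff, he, hf.1]
  rw [this]
  exact card_erase_lt_of_mem (mem_symmDiff.2 (Or.inr hf))

end DegreeSequence

theorem exists_isUnitStep_degSeq {V : Type*} [Fintype V] [DecidableEq V]
    {E F C : Finset (Sym2 V)} (hE : ∀ e ∈ E, ¬e.IsDiag) (hF : F ⊆ E) (hC : C ⊆ E)
    {x : V → ℤ} {w : V} {δ : ℤ} (hδ : |δ| = 1) (hCx : degSeq C = x + Pi.single w δ) :
    ∃ τ, IsUnitStep x (degSeq F) τ ∧ ∃ C' ⊆ E, degSeq C' = x + τ := by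
  induction hm : #(C ∆ F) using Nat.strong_induction_on generalizing C w δ with
  | _ m ih =>
  by_cases htoward : 1 ≤ δ * (degSeq F w - x w)
  · exact ⟨_, isUnitStep_single hδ htoward, C, hC, hCx⟩
  have hCw : degSeq C w = x w + δ := by simp [hCx]
  obtain ⟨C', hC', hlt, z, hC'x⟩ :
      ∃ C' ⊆ E, #(C' ∆ F) < m ∧ ∃ z, degSeq C' = x + Pi.single z (-δ) := by
    rcases (abs_eq zero_le_one).1 hδ with rfl | rfl
    · obtain ⟨C', hC', hlt, z, hC'C⟩ :=
        exists_degSeq_eq_sub_of_degSeq_lt hE hC (F := F) (w := w) (by linarith)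
      refine ⟨C', hC', hm ▸ hlt, z, ?_⟩
      rw [hC'C, hCx, Pi.single_neg]
      abel
    · obtain ⟨C', hC', hlt, z, hC'C⟩ :=
        exists_degSeq_eq_add_of_degSeq_lt hE hF hC (w := w) (by linarith)
      refine ⟨C', hC', hm ▸ hlt, z, ?_⟩
      rw [hC'C, hCx, neg_neg, Pi.single_neg]
      abel
  exact ih _ hlt hC' (by rwa [abs_neg]) hC'x rfl

open Classical in
/-- The degree sequences of the spanning subgraphs of a finite graph form a
jump system. -/
theorem stmt_10 {n : ℕ} (E : Finset (Sym2 (Fin n))) (hE : ∀ e ∈ E, ¬ e.IsDiag)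
    (S : Set (Fin n → ℤ))
    (hS : S = {d | ∃ F ⊆ E, ∀ i : Fin n,
      d i = ((F.filter (fun e => i ∈ e)).card : ℤ)}) :
    ∀ α ∈ S, ∀ β ∈ S, ∀ σ : Fin n → ℤ,
      (∑ i, |σ i|) = 1 →
      (∑ i, |α i + σ i - β i|) = (∑ i, |α i - β i|) - 1 →
      α + σ ∉ S →
      ∃ τ : Fin n → ℤ, (∑ i, |τ i|) = 1 ∧
        (∑ i, |α i + σ i + τ i - β i|) = (∑ i, |α i + σ i - β i|) - 1 ∧
        α + σ + τ ∈ S := by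
  have hS' : S = {d | ∃ F ⊆ E, d = degSeq F} := by
    subst hS
    ext d
    simp only [Set.mem_ofPred_eq, funext_iff, degSeq]
  subst hS'
  rintro α ⟨F, hFE, rfl⟩ β ⟨F', hF'E, rfl⟩ σ hσ - -
  obtain ⟨u, δ, hδ, rfl⟩ := exists_eq_single_of_sum_abs_eq_one hσ
  have hF : degSeq F = degSeq F + Pi.single u δ + Pi.single u (-δ) := by
    rw [add_assoc, ← Pi.single_add, add_neg_cancel, Pi.single_zero, add_zero]
  obtain ⟨τ, ⟨hτ, hτstep⟩, C, hCE, hC⟩ :=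
    exists_isUnitStep_degSeq hE hF'E hFE (by rwa [abs_neg]) hF
  exact ⟨τ, hτ, hτstep, C, hCE, hC.symm⟩
end

section
/- Let h, g ∈ ℝ[z₁,…,zₙ] with f = h + ig not identically zero, and let z_{n+1} be a new indeterminate. Then the following are equivalent: (a) f = h + ig is stable; (b) h + z_{n+1}g ∈ ℝ[z₁,…,z_{n+1}] is real stable; (c) every nonzero polynomial in the pencil {αh + βg : α, β ∈ ℝ} is real stable, and for all 1 ≤ j ≤ n and all x ∈ ℝⁿ, (∂h/∂z_j)(x)·g(x) − h(x)·(∂g/∂z_j)(x) ≥ 0. -/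
/-!
Restricting to real lines `x + t y` with `y > 0` reduces everything to one variable, where a
polynomial `F` without zeros in the upper half-plane is `c ∏ (t - r)` with `Im r ≤ 0`. This gives
`‖F(w̄)‖ ≤ ‖F(w)‖` for `Im w ≥ 0`, which turns the stability of `h + i g` into that of `h + w g` for
every `w` in the upper half-plane, and `Im (F'(s) · conj F(s)) ≤ 0` on `ℝ`, which is the
nonnegativity of the Wronskians. Rotating `(h, g)` by `α - iβ` reduces the stability of the pencil
to that of `h`, which follows from the open mapping theorem applied to `h / g` along a complex line.

Conversely, if `H(w₀) + i G(w₀) = 0` on a line, the pencil condition makes `Im (H / G)` nonzero,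
hence negative like at `w₀`, on the whole upper half-plane. Then `H - i G` is stable too, so the Wronskian
is also `≤ 0`; it vanishes, `H` and `G` are proportional, and `w₀` is a common zero.
-/

open MvPolynomial
open scoped Polynomial

theorem IsPreconnected.neg_of_ne_zero {X : Type*} [TopologicalSpace X] {s : Set X}
    {f : X → ℝ} (hs : IsPreconnected s) (hf : ContinuousOn f s) (hne : ∀ x ∈ s, f x ≠ 0)
    {a : X} (ha : a ∈ s) (hfa : f a < 0) {x : X} (hx : x ∈ s) : f x < 0 := by
  by_contra! hfx
  obtain ⟨y, hy, hfy⟩ := hs.intermediate_value ha hx hf ⟨hfa.le, hfx⟩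
  exact hne y hy hfy

theorem nonneg_of_forall_pos_sum_mul_nonneg {σ : Type*} [Fintype σ] {a : σ → ℝ}
    (h : ∀ y : σ → ℝ, (∀ i, 0 < y i) → 0 ≤ ∑ i, y i * a i) (j : σ) : 0 ≤ a j := by
  classical
  have hlim : Filter.Tendsto (fun ε : ℝ => ∑ i, (ε + if i = j then 1 else 0) * a i)
      (nhdsWithin 0 (Set.Ioi 0)) (nhds (a j)) := by
    have hc : Continuous fun ε : ℝ => ∑ i, (ε + if i = j then 1 else 0) * a i := by fun_prop
    exact (hc.tendsto' 0 _ (by simp)).mono_left nhdsWithin_le_nhds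
  refine ge_of_tendsto hlim (eventually_nhdsWithin_of_forall fun ε (hε : 0 < ε) => h _ fun i => ?_)
  split_ifs <;> linarith

namespace Complex

open ComplexConjugate

theorem norm_conj_sub_le {w r : ℂ} (hw : 0 ≤ w.im) (hr : r.im ≤ 0) :
    ‖conj w - r‖ ≤ ‖w - r‖ := by
  rw [← sq_le_sq₀ (norm_nonneg _) (norm_nonneg _), Complex.sq_norm, Complex.sq_norm,
    Complex.normSq_apply, Complex.normSq_apply]
  simp only [sub_re, sub_im, conj_re, conj_im]
  nlinarith

theorem norm_sub_I_lt_norm_add_I {w : ℂ} (hw : 0 < w.im) : ‖w - I‖ < ‖w + I‖ := by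
  rw [← sq_lt_sq₀ (norm_nonneg _) (norm_nonneg _), Complex.sq_norm, Complex.sq_norm, normSq_apply,
    normSq_apply]
  simp only [sub_re, sub_im, add_re, add_im, I_re, I_im]
  nlinarith

theorem add_mul_ne_zero_of_norm_sub_I_mul_le {A B w : ℂ} (hAB : A + I * B ≠ 0)
    (hle : ‖A - I * B‖ ≤ ‖A + I * B‖) (hw : 0 < w.im) : A + w * B ≠ 0 := by
  intro h
  obtain rfl : A = -(w * B) := eq_neg_of_add_eq_zero_left h
  have hB : B ≠ 0 := by rintro rfl; simp at hAB
  rw [show -(w * B) - I * B = -((w + I) * B) by ring,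
    show -(w * B) + I * B = -((w - I) * B) by ring, norm_neg, norm_neg, norm_mul, norm_mul] at hle
  exact (norm_sub_I_lt_norm_add_I hw).not_ge (le_of_mul_le_mul_right hle (norm_pos_iff.2 hB))

end Complex

namespace Polynomial

open Complex ComplexConjugate

theorem wronskian_mul_mul {R : Type*} [CommRing R] (d a b : R[X]) :
    wronskian (d * a) (d * b) = d ^ 2 * wronskian a b := by
  simp only [wronskian, derivative_mul]
  ring

theorem exists_smul_add_smul_eq_zero_of_wronskian_eq_zero {K : Type*} [Field K] [CharZero K]
    {a b : K[X]} (hw : wronskian a b = 0) :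
    ∃ α β : K, ¬(α = 0 ∧ β = 0) ∧ α • a + β • b = 0 := by
  by_cases hb : b = 0
  · exact ⟨0, 1, by simp, by simp [hb]⟩
  obtain ⟨a₁, b₁, d, hcop, rfl, rfl⟩ := UniqueFactorizationMonoid.exists_reduced_factors' a b hb
  have hd : d ≠ 0 := left_ne_zero_of_mul hb
  rw [wronskian_mul_mul, mul_eq_zero, or_iff_right (pow_ne_zero 2 hd),
    hcop.isCoprime.wronskian_eq_zero_iff] at hw
  obtain ⟨α, rfl⟩ : ∃ α, a₁ = C α := ⟨_, eq_C_of_natDegree_eq_zero (derivative_eq_zero.1 hw.1)⟩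
  obtain ⟨β, rfl⟩ : ∃ β, b₁ = C β := ⟨_, eq_C_of_natDegree_eq_zero (derivative_eq_zero.1 hw.2)⟩
  refine ⟨β, -α, fun h => hb (by simp [h.1]), ?_⟩
  simp only [smul_eq_C_mul, map_neg]
  ring

open Filter Topology in
theorem exists_eval_add_mul_eq_zero {P Q : ℂ[X]} (hP : P ≠ 0) (hP₀ : P.eval 0 = 0)
    (hQ₀ : Q.eval 0 ≠ 0) {U : Set ℂ} (hU : U ∈ 𝓝 0) :
    ∃ s ∈ U, ∃ w : ℂ, 0 < w.im ∧ P.eval s + w * Q.eval s = 0 := by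
  set ρ : ℂ → ℂ := fun s => P.eval s / Q.eval s
  have hQ : ∀ᶠ s in 𝓝 0, Q.eval s ≠ 0 := Q.continuous.continuousAt.eventually_ne hQ₀
  have hρ : AnalyticAt ℂ ρ 0 :=
    (P.differentiable.analyticAt 0).div (Q.differentiable.analyticAt 0) hQ₀
  rcases hρ.eventually_constant_or_nhds_le_map_nhds with hconst | hopen
  · refine absurd (eq_zero_of_infinite_isRoot P (infinite_of_mem_nhds 0 ?_)) hP
    filter_upwards [hconst, hQ] with s hs hQs
    simpa [ρ, hP₀, hQs] using hs
  · have himage : ρ '' (U ∩ {s | Q.eval s ≠ 0}) ∈ 𝓝 0 := by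
      simpa [ρ, hP₀] using hopen (image_mem_map (inter_mem hU hQ))
    have hdown : Tendsto (fun t : ℝ => -(t * I)) (𝓝[>] 0) (𝓝 0) := by
      have : Continuous fun t : ℝ => -((t : ℂ) * I) := by fun_prop
      exact (this.tendsto' 0 0 (by simp)).mono_left nhdsWithin_le_nhds
    obtain ⟨t, ht, s, ⟨hsU, hQs⟩, hρs⟩ :=
      (eventually_mem_nhdsWithin.and (hdown.eventually_mem himage)).exists
    refine ⟨s, hsU, t * I, by simpa using ht, ?_⟩
    rw [div_eq_iff hQs] at hρs
    linear_combination hρs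

def IsStable (F : ℂ[X]) : Prop := ∀ w : ℂ, 0 < w.im → F.eval w ≠ 0

@[elab_as_elim]
theorem IsStable.induction_on {motive : ℂ[X] → Prop} {F : ℂ[X]} (hF : F.IsStable)
    (const : ∀ c, motive (C c))
    (mul_X_sub_C : ∀ r Q, r.im ≤ 0 → motive Q → motive ((X - C r) * Q)) : motive F := by
  have key : ∀ m : Multiset ℂ, (∀ r ∈ m, r.im ≤ 0) →
      ∀ c, motive (C c * (m.map (X - C ·)).prod) := by
    intro m
    induction m using Multiset.induction_on with
    | empty => simpa using const
    | cons a m ih =>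
      intro hm c
      rw [Multiset.map_cons, Multiset.prod_cons, mul_left_comm]
      exact mul_X_sub_C a _ (hm a (Multiset.mem_cons_self a m))
        (ih (fun r hr => hm r (Multiset.mem_cons_of_mem hr)) c)
  rw [← C_leadingCoeff_mul_prod_multiset_X_sub_C (p := F) IsAlgClosed.card_roots_eq_natDegree]
  refine key _ (fun r hr => ?_) _
  by_contra! hr'
  exact hF r hr' (isRoot_of_mem_roots hr)

theorem IsStable.norm_eval_conj_le {F : ℂ[X]} (hF : F.IsStable) {w : ℂ} (hw : 0 ≤ w.im) :
    ‖F.eval (conj w)‖ ≤ ‖F.eval w‖ := by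
  refine hF.induction_on (fun c => by simp) fun r Q hr ih => ?_
  simp only [eval_mul, eval_sub, eval_X, eval_C, norm_mul]
  gcongr
  exact norm_conj_sub_le hw hr

theorem IsStable.im_derivative_mul_conj_nonpos {F : ℂ[X]} (hF : F.IsStable) (s : ℝ) :
    (F.derivative.eval (s : ℂ) * conj (F.eval (s : ℂ))).im ≤ 0 := by
  refine hF.induction_on (fun c => by simp) fun r Q hr ih => ?_
  have key : ((X - C r) * Q).derivative.eval (s : ℂ) * conj (((X - C r) * Q).eval (s : ℂ)) =
      conj ((s : ℂ) - r) * (normSq (Q.eval (s : ℂ)) : ℂ) +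
        (normSq ((s : ℂ) - r) : ℂ) * (Q.derivative.eval (s : ℂ) * conj (Q.eval (s : ℂ))) := by
    simp only [derivative_mul, derivative_sub, derivative_X, derivative_C, sub_zero, one_mul,
      eval_add, eval_mul, eval_sub, eval_X, eval_C, map_mul, ← Complex.mul_conj]
    ring
  rw [key, add_im, im_mul_ofReal, im_ofReal_mul]
  have : (conj ((s : ℂ) - r)).im = r.im := by simp
  rw [this]
  nlinarith [normSq_nonneg (Q.eval (s : ℂ)), normSq_nonneg ((s : ℂ) - r)]

theorem norm_aeval_sub_I_mul_le {H G : ℝ[X]}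
    (hst : ∀ w : ℂ, 0 < w.im → aeval w H + I * aeval w G ≠ 0) {w : ℂ} (hw : 0 ≤ w.im) :
    ‖aeval w H - I * aeval w G‖ ≤ ‖aeval w H + I * aeval w G‖ := by
  set F : ℂ[X] := H.map (algebraMap ℝ ℂ) + C I * G.map (algebraMap ℝ ℂ)
  have hF : ∀ w, F.eval w = aeval w H + I * aeval w G := by simp [F, eval_map_algebraMap]
  have := IsStable.norm_eval_conj_le (F := F) (fun w hw => hF w ▸ hst w hw) hw
  rwa [hF, hF, aeval_conj, aeval_conj, ← norm_conj (_ + _), map_add, map_mul, conj_I,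
    conj_conj, conj_conj, neg_mul, ← sub_eq_add_neg] at this

theorem eval_wronskian_nonneg {H G : ℝ[X]}
    (hst : ∀ w : ℂ, 0 < w.im → aeval w H + I * aeval w G ≠ 0) (s : ℝ) :
    0 ≤ (wronskian G H).eval s := by
  set F : ℂ[X] := H.map (algebraMap ℝ ℂ) + C I * G.map (algebraMap ℝ ℂ)
  have hF : F.IsStable := fun w hw => by simpa [F, eval_map_algebraMap] using hst w hw
  have hreal : ∀ P : ℝ[X], aeval (s : ℂ) P = ((P.eval s : ℝ) : ℂ) := fun P => aeval_ofReal P s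
  have := hF.im_derivative_mul_conj_nonpos s
  simp only [F, derivative_mul, derivative_C, derivative_map, zero_mul, zero_add,
    eval_add, eval_mul, eval_C, eval_map_algebraMap, hreal, map_add, map_mul, conj_ofReal,
    conj_I, add_im, mul_im, add_re, mul_re, ofReal_re, ofReal_im, I_re, I_im, neg_re,
    neg_im] at this
  simp only [wronskian, eval_sub, eval_mul]
  linarith

theorem aeval_sub_I_mul_ne_zero_of_aeval_add_I_mul_eq_zero {H G : ℝ[X]}
    (hG : ∀ w : ℂ, 0 < w.im → aeval w G ≠ 0)
    (hreal : ∀ (r : ℝ) (w : ℂ), 0 < w.im → aeval w H - r * aeval w G ≠ 0)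
    {w₀ : ℂ} (hw₀ : 0 < w₀.im) (hroot : aeval w₀ H + I * aeval w₀ G = 0)
    {w : ℂ} (hw : 0 < w.im) : aeval w H - I * aeval w G ≠ 0 := by
  set q : ℂ → ℝ := fun w => (aeval w H / aeval w G).im
  have hq : ∀ w ∈ {w : ℂ | 0 < w.im}, q w ≠ 0 := by
    intro w hw hqw
    apply hreal (aeval w H / aeval w G).re w hw
    have : aeval w H / aeval w G = ((aeval w H / aeval w G).re : ℂ) := by
      simpa [Complex.ext_iff] using hqw
    rw [div_eq_iff (hG w hw)] at this
    linear_combination this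
  have hq₀ : q w₀ < 0 := by
    simp only [q, eq_neg_of_add_eq_zero_left hroot, neg_div, mul_div_assoc, div_self (hG w₀ hw₀)]
    simp
  have hqw : q w < 0 :=
    (convex_halfSpace_im_gt 0).isPreconnected.neg_of_ne_zero
      (continuous_im.comp_continuousOn ((H.continuous_aeval).continuousOn.div
        (G.continuous_aeval).continuousOn hG)) hq hw₀ hq₀ hw
  intro h
  have hI : aeval w H / aeval w G = I := by
    rw [div_eq_iff (hG w hw)]
    linear_combination h
  simp only [q, hI, I_im] at hqw
  norm_num at hqw

theorem aeval_eq_zero_of_aeval_add_I_mul_eq_zero {H G : ℝ[X]}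
    (hpen : ∀ α β : ℝ, α • H + β • G ≠ 0 → ∀ w : ℂ, 0 < w.im → aeval w (α • H + β • G) ≠ 0)
    (hW : ∀ s : ℝ, 0 ≤ (wronskian G H).eval s) {w₀ : ℂ} (hw₀ : 0 < w₀.im)
    (hroot : aeval w₀ H + I * aeval w₀ G = 0) : aeval w₀ G = 0 := by
  by_contra hG₀
  have haeval : ∀ (α β : ℝ) (w : ℂ),
      aeval w (α • H + β • G) = α * aeval w H + β * aeval w G := by
    simp [Complex.real_smul]
  have hindep : ∀ α β : ℝ, α • H + β • G = 0 → α = 0 ∧ β = 0 := by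
    intro α β hαβ
    have h := haeval α β w₀
    rw [hαβ, map_zero, eq_neg_of_add_eq_zero_left hroot] at h
    have : (β : ℂ) - α * I = 0 := by
      refine (mul_eq_zero.1 ?_).resolve_right hG₀
      linear_combination -h
    simpa [Complex.ext_iff, and_comm] using this
  have hstab : ∀ α β : ℝ, ¬(α = 0 ∧ β = 0) → ∀ w : ℂ, 0 < w.im →
      (α : ℂ) * aeval w H + β * aeval w G ≠ 0 := fun α β hαβ w hw =>
    haeval α β w ▸ hpen α β (mt (hindep α β) hαβ) w hw
  have hG : ∀ w : ℂ, 0 < w.im → aeval w G ≠ 0 := by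
    simpa using hstab 0 1 (by simp)
  have hreal : ∀ (r : ℝ) (w : ℂ), 0 < w.im → aeval w H - r * aeval w G ≠ 0 := fun r w hw => by
    simpa [sub_eq_add_neg] using hstab 1 (-r) (by simp) w hw
  have hconj : ∀ w : ℂ, 0 < w.im → aeval w H + I * aeval w (-G) ≠ 0 := fun w hw => by
    simpa [← sub_eq_add_neg] using
      aeval_sub_I_mul_ne_zero_of_aeval_add_I_mul_eq_zero hG hreal hw₀ hroot hw
  have hW₀ : wronskian G H = 0 := Polynomial.funext fun s =>
    le_antisymm (by simpa [wronskian_neg_left] using eval_wronskian_nonneg hconj s)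
      (by simpa using hW s)
  obtain ⟨β, α, hβα, h⟩ := exists_smul_add_smul_eq_zero_of_wronskian_eq_zero hW₀
  exact hβα (hindep α β (by rwa [add_comm]) |>.symm)

end Polynomial

namespace MvPolynomial

section LineRestrict

variable {σ R S : Type*} [CommSemiring R] [CommSemiring S] [Algebra R S]

noncomputable def lineRestrict (a b : σ → S) : MvPolynomial σ R →ₐ[R] S[X] :=
  aeval fun j => Polynomial.C (a j) + Polynomial.C (b j) * Polynomial.X

theorem aeval_lineRestrict {T : Type*} [CommSemiring T] [Algebra R T] [Algebra S T]
    [IsScalarTower R S T] (a b : σ → S) (p : MvPolynomial σ R) (t : T) :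
    Polynomial.aeval t (lineRestrict a b p) =
      aeval (fun j => algebraMap S T (a j) + algebraMap S T (b j) * t) p := by
  have := AlgHom.congr_fun (comp_aeval (R := R)
    (f := fun j => Polynomial.C (a j) + Polynomial.C (b j) * Polynomial.X)
    ((Polynomial.aeval t).restrictScalars R : S[X] →ₐ[R] T)) p
  simp only [AlgHom.comp_apply, AlgHom.restrictScalars_apply, map_add, map_mul,
    Polynomial.aeval_C, Polynomial.aeval_X] at this
  exact this

theorem eval_lineRestrict (a b : σ → S) (p : MvPolynomial σ R) (s : S) :
    (lineRestrict a b p).eval s = aeval (fun j => a j + b j * s) p := by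
  simpa using aeval_lineRestrict (R := R) a b p s

theorem derivative_lineRestrict [Fintype σ] (a b : σ → S) (p : MvPolynomial σ R) :
    Polynomial.derivative (lineRestrict a b p) =
      ∑ j, Polynomial.C (b j) * lineRestrict a b (pderiv j p) := by
  classical
  induction p using MvPolynomial.induction_on with
  | C c => simp [lineRestrict]
  | add p q hp hq => simp only [map_add, hp, hq, mul_add, Finset.sum_add_distrib]
  | mul_X p i hp =>
    simp only [map_mul, Polynomial.derivative_mul, hp, Derivation.leibniz, pderiv_X, smul_eq_mul,
      map_add, mul_add, Finset.sum_add_distrib, Finset.sum_mul]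
    simp only [lineRestrict, aeval_X, Polynomial.derivative_add, Polynomial.derivative_C,
      Polynomial.derivative_mul, zero_mul, Polynomial.derivative_X, mul_one, zero_add,
      Pi.single_apply, MonoidWithZeroHom.map_ite_one_zero, mul_ite, mul_zero, Finset.sum_ite_eq,
      Finset.mem_univ, ↓reduceIte]
    rw [add_comm, mul_comm (aeval _ p)]
    exact congrArg₂ _ rfl (Finset.sum_congr rfl fun j _ => by ring)

theorem eval_wronskian_lineRestrict {R : Type*} [CommRing R] [Fintype σ] (x y : σ → R)
    (h g : MvPolynomial σ R) (s : R) :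
    (Polynomial.wronskian (lineRestrict x y g) (lineRestrict x y h)).eval s =
      ∑ j, y j * (eval (fun k => x k + y k * s) (pderiv j h) * eval (fun k => x k + y k * s) g -
        eval (fun k => x k + y k * s) h * eval (fun k => x k + y k * s) (pderiv j g)) := by
  simp only [Polynomial.wronskian, Polynomial.eval_sub, Polynomial.eval_mul,
    derivative_lineRestrict, Polynomial.eval_finsetSum, Polynomial.eval_C, eval_lineRestrict,
    aeval_eq_eval, Finset.sum_mul, Finset.mul_sum, ← Finset.sum_sub_distrib]
  exact Finset.sum_congr rfl fun j _ => by ring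

end LineRestrict

open Complex

variable {σ : Type*}

def IsStablePair (h g : MvPolynomial σ ℝ) : Prop :=
  ∀ z : σ → ℂ, (∀ i, 0 < (z i).im) → aeval z h + I * aeval z g ≠ 0

def IsRealStable (p : MvPolynomial σ ℝ) : Prop :=
  ∀ z : σ → ℂ, (∀ i, 0 < (z i).im) → aeval z p ≠ 0

theorem aeval_lineRestrict_re_im (z : σ → ℂ) (p : MvPolynomial σ ℝ) :
    Polynomial.aeval (R := ℝ) I (lineRestrict (fun j => (z j).re) (fun j => (z j).im) p) =
      aeval z p := by
  simp [aeval_lineRestrict, re_add_im]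

theorem IsStablePair.aeval_lineRestrict_ne_zero {h g : MvPolynomial σ ℝ} (hst : IsStablePair h g)
    (x : σ → ℝ) {y : σ → ℝ} (hy : ∀ i, 0 < y i) (w : ℂ) (hw : 0 < w.im) :
    Polynomial.aeval (R := ℝ) w (lineRestrict x y h) +
      I * Polynomial.aeval (R := ℝ) w (lineRestrict x y g) ≠ 0 := by
  simpa [aeval_lineRestrict] using hst _ fun i => by simpa using mul_pos (hy i) hw

theorem IsRealStable.aeval_lineRestrict_ne_zero {p : MvPolynomial σ ℝ} (hp : IsRealStable p)
    (x : σ → ℝ) {y : σ → ℝ} (hy : ∀ i, 0 < y i) (w : ℂ) (hw : 0 < w.im) :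
    Polynomial.aeval (R := ℝ) w (lineRestrict x y p) ≠ 0 := by
  simpa [aeval_lineRestrict] using hp _ fun i => by simpa using mul_pos (hy i) hw

theorem IsStablePair.norm_sub_I_mul_le {h g : MvPolynomial σ ℝ} (hst : IsStablePair h g)
    {z : σ → ℂ} (hz : ∀ i, 0 < (z i).im) :
    ‖aeval z h - I * aeval z g‖ ≤ ‖aeval z h + I * aeval z g‖ := by
  simpa [aeval_lineRestrict_re_im] using
    Polynomial.norm_aeval_sub_I_mul_le (hst.aeval_lineRestrict_ne_zero (fun j => (z j).re) hz)
      (w := I) (by simp)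

theorem IsStablePair.add_mul_ne_zero {h g : MvPolynomial σ ℝ} (hst : IsStablePair h g)
    {z : σ → ℂ} (hz : ∀ i, 0 < (z i).im) {w : ℂ} (hw : 0 < w.im) :
    aeval z h + w * aeval z g ≠ 0 :=
  add_mul_ne_zero_of_norm_sub_I_mul_le (hst z hz) (hst.norm_sub_I_mul_le hz) hw

theorem IsStablePair.smul_add_smul {h g : MvPolynomial σ ℝ} (hst : IsStablePair h g) {α β : ℝ}
    (hαβ : ¬(α = 0 ∧ β = 0)) : IsStablePair (α • h + β • g) (α • g - β • h) := by
  intro z hz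
  have hrot : aeval z (α • h + β • g) + I * aeval z (α • g - β • h) =
      ((α : ℂ) - I * β) * (aeval z h + I * aeval z g) := by
    simp only [map_add, map_sub, map_smul, Complex.real_smul]
    linear_combination ((β : ℂ) * aeval z g) * I_sq
  rw [hrot]
  refine mul_ne_zero (fun h0 => hαβ ?_) (hst z hz)
  simpa [Complex.ext_iff] using h0

theorem exists_aeval_ne_zero {p : MvPolynomial σ ℝ} (hp : p ≠ 0) :
    ∃ z : σ → ℂ, (∀ i, 0 < (z i).im) ∧ aeval z p ≠ 0 := by
  by_contra! h
  have hinf : {w : ℂ | 0 < w.im}.Infinite :=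
    infinite_of_mem_nhds I ((isOpen_lt continuous_const continuous_im).mem_nhds (by simp))
  refine hp (map_injective _ (algebraMap ℝ ℂ).injective ?_)
  rw [map_zero]
  exact funext_set (fun _ => {w : ℂ | 0 < w.im}) (fun _ => hinf) fun z hz => by
    simpa [eval_map, aeval_def] using h z fun i => hz i (Set.mem_univ i)

open Filter Topology in
theorem IsStablePair.isRealStable_left [Finite σ] {h g : MvPolynomial σ ℝ}
    (hst : IsStablePair h g) (hh : h ≠ 0) : IsRealStable h := by
  intro z hz hz₀
  have hgz : aeval z g ≠ 0 := fun hg => hst z hz (by simp [hz₀, hg])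
  obtain ⟨z₁, -, hz₁⟩ := exists_aeval_ne_zero hh
  -- Along the complex line through `z` and `z₁`, the open mapping theorem applied to `h / g`
  -- produces points near `z` where `h + w g = 0` with `0 < w.im`.
  have hline : ∀ (p : MvPolynomial σ ℝ) s,
      (lineRestrict z (z₁ - z) p).eval s = aeval (fun j => z j + (z₁ j - z j) * s) p := by
    intro p s
    simp [eval_lineRestrict]
  have hU : {s : ℂ | ∀ j, 0 < (z j + (z₁ j - z j) * s).im} ∈ 𝓝 0 :=
    eventually_all.2 fun j => ((by fun_prop : Continuous fun s : ℂ =>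
      (z j + (z₁ j - z j) * s).im).tendsto 0).eventually_const_lt (by simpa using hz j)
  obtain ⟨s, hs, w, hw, hsw⟩ := Polynomial.exists_eval_add_mul_eq_zero
    (P := lineRestrict z (z₁ - z) h) (Q := lineRestrict z (z₁ - z) g)
    (fun h0 => hz₁ (by simpa [hline] using congrArg (Polynomial.eval 1) h0))
    (by simpa [hline] using hz₀) (by simpa [hline] using hgz) hU
  exact hst.add_mul_ne_zero hs hw (by simpa [hline] using hsw)

theorem IsStablePair.isRealStable_smul_add_smul [Finite σ] {h g : MvPolynomial σ ℝ}
    (hst : IsStablePair h g) {α β : ℝ} (hne : α • h + β • g ≠ 0) :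
    IsRealStable (α • h + β • g) :=
  (hst.smul_add_smul fun hαβ => hne (by simp [hαβ.1, hαβ.2])).isRealStable_left hne

theorem IsStablePair.wronskian_nonneg [Fintype σ] {h g : MvPolynomial σ ℝ}
    (hst : IsStablePair h g) (j : σ) (x : σ → ℝ) :
    0 ≤ eval x (pderiv j h) * eval x g - eval x h * eval x (pderiv j g) := by
  refine nonneg_of_forall_pos_sum_mul_nonneg
    (a := fun k => eval x (pderiv k h) * eval x g - eval x h * eval x (pderiv k g))
    (fun y hy => ?_) j
  simpa [eval_wronskian_lineRestrict] using
    Polynomial.eval_wronskian_nonneg (hst.aeval_lineRestrict_ne_zero x hy) 0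

theorem isStablePair_of_isRealStable_of_wronskian_nonneg [Fintype σ] {h g : MvPolynomial σ ℝ}
    (hne : ¬(h = 0 ∧ g = 0))
    (hpen : ∀ α β : ℝ, α • h + β • g ≠ 0 → IsRealStable (α • h + β • g))
    (hW : ∀ j x, 0 ≤ eval x (pderiv j h) * eval x g - eval x h * eval x (pderiv j g)) :
    IsStablePair h g := by
  intro z hz hroot
  set x : σ → ℝ := fun j => (z j).re
  set y : σ → ℝ := fun j => (z j).im
  have hzI : ∀ p, Polynomial.aeval (R := ℝ) I (lineRestrict x y p) = aeval z p :=
    aeval_lineRestrict_re_im z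
  have hpen' : ∀ α β : ℝ, α • lineRestrict x y h + β • lineRestrict x y g ≠ 0 →
      ∀ w : ℂ, 0 < w.im →
        Polynomial.aeval w (α • lineRestrict x y h + β • lineRestrict x y g) ≠ 0 := by
    intro α β hαβ
    simp only [← map_smul, ← map_add] at hαβ ⊢
    exact (hpen α β fun h0 => hαβ (by rw [h0, map_zero])).aeval_lineRestrict_ne_zero x hz
  have hW' : ∀ s : ℝ, 0 ≤ (Polynomial.wronskian (lineRestrict x y g) (lineRestrict x y h)).eval s :=
    fun s => by
      rw [eval_wronskian_lineRestrict]
      exact Finset.sum_nonneg fun j _ => mul_nonneg (hz j).le (hW j _)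
  have hg : aeval z g = 0 := by
    simpa [hzI] using
      Polynomial.aeval_eq_zero_of_aeval_add_I_mul_eq_zero hpen' hW' (w₀ := I) (by simp)
        (by simpa [hzI] using hroot)
  have hh : aeval z h = 0 := by simpa [hg] using hroot
  rcases not_and_or.1 hne with h0 | g0
  · exact hpen 1 0 (by simpa using h0) z hz (by simpa using hh)
  · exact hpen 0 1 (by simpa using g0) z hz (by simpa using hg)

end MvPolynomial

/-- For `h, g ∈ ℝ[z₁,…,zₙ]` with `f = h + ig ≠ 0`, the following are
equivalent: (a) `f` is stable; (b) `h + z_{n+1} g` is real stable;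
(c) every nonzero member of the real pencil `αh + βg` is real stable and
all the Wronskians `(∂h/∂z_j)·g − h·(∂g/∂z_j)` are nonnegative on `ℝⁿ`. -/
theorem stmt_11 {n : ℕ} (h g : MvPolynomial (Fin n) ℝ) (hne : ¬(h = 0 ∧ g = 0)) :
    ((∀ z : Fin n → ℂ, (∀ i, 0 < (z i).im) →
        aeval z h + Complex.I * aeval z g ≠ 0) ↔
      (∀ z : Fin (n + 1) → ℂ, (∀ i, 0 < (z i).im) →
        aeval z (rename (Fin.castSucc) h +
          X (Fin.last n) * rename (Fin.castSucc) g) ≠ 0)) ∧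
    ((∀ z : Fin n → ℂ, (∀ i, 0 < (z i).im) →
        aeval z h + Complex.I * aeval z g ≠ 0) ↔
      ((∀ α β : ℝ, α • h + β • g ≠ 0 →
          ∀ z : Fin n → ℂ, (∀ i, 0 < (z i).im) → aeval z (α • h + β • g) ≠ 0) ∧
        (∀ j : Fin n, ∀ x : Fin n → ℝ,
          0 ≤ eval x (pderiv j h) * eval x g - eval x h * eval x (pderiv j g)))) := by
  have hsnoc : ∀ z : Fin (n + 1) → ℂ, aeval z (rename Fin.castSucc h +
      X (Fin.last n) * rename Fin.castSucc g) =
        aeval (z ∘ Fin.castSucc) h + z (Fin.last n) * aeval (z ∘ Fin.castSucc) g := by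
    simp [aeval_rename]
  refine ⟨⟨fun hst z hz => ?_, fun hst z hz => ?_⟩, ⟨fun hst => ?_, fun hc => ?_⟩⟩
  · rw [hsnoc]
    exact IsStablePair.add_mul_ne_zero hst (fun i => hz _) (hz _)
  · have hz' : ∀ i, 0 < (Fin.snoc (α := fun _ => ℂ) z Complex.I i).im :=
      Fin.lastCases (by simp) fun i => by simpa using hz i
    simpa [hsnoc, Fin.snoc_comp_castSucc] using hst _ hz'
  · exact ⟨fun α β => IsStablePair.isRealStable_smul_add_smul hst,
      IsStablePair.wronskian_nonneg hst⟩
  · exact isStablePair_of_isRealStable_of_wronskian_nonneg hne hc.1 hc.2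
end

section
/- Let a₀₀, a₀₁, a₁₀, a₁₁ ∈ ℝ, not all zero, and let f(z₁,z₂) = a₀₀ + a₀₁z₂ + a₁₀z₁ + a₁₁z₁z₂. Then f is stable if and only if a₀₀a₁₁ − a₀₁a₁₀ ≤ 0. -/
/-!
Write `f = p + q z₂` with `p = a₀₀ + a₁₀z₁` and `q = a₀₁ + a₁₁z₁`, and let
`D = a₀₀a₁₁ − a₀₁a₁₀`. Since the coefficients are real,
`Im (f · q̄) = |q|² Im z₂ − D Im z₁`. If `D ≤ 0` and `Im z₁, Im z₂ > 0`, a zero of `f` forces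
`q = 0` and then `p = 0`, so all coefficients vanish. If `D > 0`, then `q(i) ≠ 0` and the root
`z₂ = −p(i)/q(i)` has `Im z₂ = D / |q(i)|² > 0`.
-/

open Complex ComplexConjugate

def multiaffine (a00 a01 a10 a11 : ℝ) (z₁ z₂ : ℂ) : ℂ :=
  a00 + a01 * z₂ + a10 * z₁ + a11 * z₁ * z₂

theorem Complex.ofReal_add_ofReal_mul_eq_zero {a b : ℝ} {w : ℂ} (hw : w.im ≠ 0)
    (h : (a : ℂ) + b * w = 0) : a = 0 ∧ b = 0 := by
  have hb : b = 0 := by simpa [hw] using congrArg im h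
  subst hb
  simpa using h

theorem im_multiaffine_mul_conj (a00 a01 a10 a11 : ℝ) (z₁ z₂ : ℂ) :
    (multiaffine a00 a01 a10 a11 z₁ z₂ * conj (a01 + a11 * z₁)).im =
      normSq (a01 + a11 * z₁) * z₂.im - (a00 * a11 - a01 * a10) * z₁.im := by
  simp only [multiaffine, mul_im, mul_re, add_re, add_im, conj_re, conj_im, ofReal_re,
    ofReal_im, normSq_apply]
  ring

theorem multiaffine_ne_zero_of_det_nonpos {a00 a01 a10 a11 : ℝ}
    (hne : ¬(a00 = 0 ∧ a01 = 0 ∧ a10 = 0 ∧ a11 = 0)) (hD : a00 * a11 - a01 * a10 ≤ 0)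
    {z₁ z₂ : ℂ} (h₁ : 0 < z₁.im) (h₂ : 0 < z₂.im) : multiaffine a00 a01 a10 a11 z₁ z₂ ≠ 0 := by
  intro hf
  have hq : normSq (a01 + a11 * z₁) * z₂.im = 0 := by
    have := im_multiaffine_mul_conj a00 a01 a10 a11 z₁ z₂
    rw [hf, zero_mul, zero_im] at this
    nlinarith [normSq_nonneg (a01 + a11 * z₁)]
  obtain ⟨h01, h11⟩ := ofReal_add_ofReal_mul_eq_zero h₁.ne' <|
    normSq_eq_zero.mp ((mul_eq_zero.mp hq).resolve_right h₂.ne')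
  obtain ⟨h00, h10⟩ : a00 = 0 ∧ a10 = 0 := ofReal_add_ofReal_mul_eq_zero h₁.ne' <| by
    simpa [multiaffine, h01, h11] using hf
  exact hne ⟨h00, h01, h10, h11⟩

theorem exists_multiaffine_eq_zero_of_det_pos {a00 a01 a10 a11 : ℝ}
    (hD : 0 < a00 * a11 - a01 * a10) :
    ∃ z₂ : ℂ, 0 < z₂.im ∧ multiaffine a00 a01 a10 a11 I z₂ = 0 := by
  have hq : (a01 + a11 * I : ℂ) ≠ 0 := by
    intro hq
    obtain ⟨h01, h11⟩ := ofReal_add_ofReal_mul_eq_zero (by simp) hq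
    simp [h01, h11] at hD
  set z₂ : ℂ := -(a00 + a10 * I) / (a01 + a11 * I)
  have hf : multiaffine a00 a01 a10 a11 I z₂ = 0 := by
    have hz : (a01 + a11 * I) * z₂ = -(a00 + a10 * I) := mul_div_cancel₀ _ hq
    unfold multiaffine
    linear_combination hz
  refine ⟨z₂, ?_, hf⟩
  have := im_multiaffine_mul_conj a00 a01 a10 a11 I z₂
  rw [hf, zero_mul, zero_im, I_im, mul_one] at this
  exact pos_of_mul_pos_right (by linarith) (normSq_nonneg _)

/-- The bivariate multi-affine polynomial
`f(z₁,z₂) = a₀₀ + a₀₁z₂ + a₁₀z₁ + a₁₁z₁z₂` (with real coefficients, not all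
zero) is stable iff `a₀₀a₁₁ − a₀₁a₁₀ ≤ 0`. -/
theorem stmt_13 (a00 a01 a10 a11 : ℝ)
    (hne : ¬(a00 = 0 ∧ a01 = 0 ∧ a10 = 0 ∧ a11 = 0)) :
    (∀ z₁ z₂ : ℂ, 0 < z₁.im → 0 < z₂.im →
        (a00 : ℂ) + (a01 : ℂ) * z₂ + (a10 : ℂ) * z₁ + (a11 : ℂ) * z₁ * z₂ ≠ 0) ↔
      a00 * a11 - a01 * a10 ≤ 0 := by
  refine ⟨fun hstable => ?_, fun hD z₁ z₂ => multiaffine_ne_zero_of_det_nonpos hne hD⟩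
  by_contra! hD
  obtain ⟨z₂, hz₂, hf⟩ := exists_multiaffine_eq_zero_of_det_pos hD
  exact hstable I z₂ (by simp) hz₂ hf
end

section
/- Let f ∈ ℂ[z₁,…,zₙ] have degree dᵢ in the variable zᵢ, and let P(f) be its polarization: the unique polynomial in the variables {z_{ij} : 1 ≤ i ≤ n, 1 ≤ j ≤ dᵢ} that is multi-affine, symmetric in the variables z_{i1},…,z_{i dᵢ} for each i, and recovers f upon substituting z_{ij} = zᵢ for all i, j. Then for any open half-plane H ⊆ ℂ whose boundary contains the origin, f is H-stable if and only if P(f) is H-stable. -/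
/-!
Substituting `z_{ij} = zᵢ` shows at once that stability of the polarization `g` implies that
of `f`. Conversely, take a zero of `g` in the product of half-planes and freeze all blocks of
variables but one. What remains is a symmetric multi-affine polynomial
`q(v) = ∑_S a_{|S|} ∏_{j ∈ S} v_j` with a zero in the half-plane, so by the Grace–Walsh–Szegő
theorem its diagonal `∑_k a_k (N choose k) ζ^k` has a zero `ζ` in the half-plane as well;
replacing the whole block by `ζ` and treating the blocks one after the other yields a zero of `f`.
Grace–Walsh–Szegő itself goes by induction on `N`: splitting off one variable `v` turns the
diagonal polynomial into the polar derivative `N φ + (v - ζ) φ'` of the diagonal polynomial `φ`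
of the larger system, and by Laguerre's theorem this polar derivative cannot vanish in the
half-plane when `φ` has no zero there.
-/

open Metric Finset

def halfPlane (w : ℂ) : Set ℂ := {z | 0 < (w * z).re}

@[simp] lemma mem_halfPlane {w z : ℂ} : z ∈ halfPlane w ↔ 0 < (w * z).re := Iff.rfl

lemma star_mem_halfPlane {w : ℂ} (hw : w ≠ 0) : star w ∈ halfPlane w := by
  simpa [Complex.mul_conj] using Complex.normSq_pos.mpr hw

def IsStable {σ : Type*} (w : ℂ) (p : MvPolynomial σ ℂ) : Prop :=
  ∀ z : σ → ℂ, (∀ i, z i ∈ halfPlane w) → MvPolynomial.eval z p ≠ 0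

lemma Multiset.sum_mem_closedBall {E : Type*} [SeminormedAddCommGroup E] {c : E} {r : ℝ}
    {s : Multiset E} (h : ∀ x ∈ s, x ∈ closedBall c r) :
    s.sum ∈ closedBall (card s • c) (card s * r) := by
  induction s using Multiset.induction with
  | empty => simp
  | cons x s ih =>
    rw [Multiset.forall_mem_cons] at h
    rw [Multiset.sum_cons, Multiset.card_cons, succ_nsmul', Nat.cast_succ, add_one_mul,
      add_comm _ r, mem_closedBall]
    exact (dist_add_add_le _ _ _ _).trans (add_le_add (mem_closedBall.mp h.1) (ih h.2))

namespace Complex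

lemma mem_closedBall_self_iff_le_re_inv {R : ℝ} (hR : 0 < R) {z : ℂ} (hz : z ≠ 0) :
    z ∈ closedBall (R : ℂ) R ↔ (2 * R)⁻¹ ≤ z⁻¹.re := by
  have hnormSq : ‖z - R‖ ^ 2 = normSq z - 2 * R * z.re + R ^ 2 := by
    rw [Complex.sq_norm, normSq_apply, normSq_apply]
    simp only [sub_re, ofReal_re, sub_im, ofReal_im, sub_zero]
    ring
  rw [mem_closedBall, dist_eq, ← sq_le_sq₀ (norm_nonneg _) hR.le, hnormSq, inv_re,
    le_div_iff₀ (normSq_pos.mpr hz), inv_mul_le_iff₀ (by positivity)]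
  constructor <;> intro h <;> linarith

lemma inv_mem_closedBall_of_le_re {ρ : ℝ} (hρ : 0 < ρ) {u : ℂ} (hu : ρ ≤ u.re) :
    u⁻¹ ∈ closedBall (((2 * ρ)⁻¹ : ℝ) : ℂ) (2 * ρ)⁻¹ := by
  have hu0 : u ≠ 0 := fun h => by simp only [h, zero_re] at hu; linarith
  rwa [mem_closedBall_self_iff_le_re_inv (by positivity) (inv_ne_zero hu0), inv_inv,
    mul_inv, inv_inv, ← mul_assoc, inv_mul_cancel₀ two_ne_zero, one_mul]

lemma closedBall_self_subset {a b : ℝ} (hab : a ≤ b) :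
    closedBall (a : ℂ) a ⊆ closedBall (b : ℂ) b :=
  closedBall_subset_closedBall' <| by
    rw [dist_eq, ← ofReal_sub, norm_real, Real.norm_eq_abs, abs_of_nonpos (by linarith)]
    linarith

lemma sum_inv_mem_closedBall {ρ : ℝ} (hρ : 0 < ρ) {M : Multiset ℂ}
    (hM : ∀ u ∈ M, ρ ≤ u.re) :
    (M.map (·⁻¹)).sum ∈
      closedBall ((Multiset.card M * (2 * ρ)⁻¹ : ℝ) : ℂ) (Multiset.card M * (2 * ρ)⁻¹) := by
  have := Multiset.sum_mem_closedBall (s := M.map (·⁻¹)) (c := (((2 * ρ)⁻¹ : ℝ) : ℂ)) <| by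
    simpa using fun u hu => inv_mem_closedBall_of_le_re hρ (hM u hu)
  simpa [nsmul_eq_mul] using this

end Complex

/-- After the rotation `z ↦ w z`, each `(w s - w ζ)⁻¹` lies in the disc through `0` centred at
`R = 1 / (2 Re (w s))`, so their sum lies in the disc through `0` centred at `N R`; the inverse of
a nonzero point of that disc has real part at least `Re (w s) / N`, which forces `Re (w t) ≤ 0`. -/
lemma laguerre_sum_ne_zero {w s t : ℂ} {N : ℕ} (hN : 0 < N) {M : Multiset ℂ}
    (hM : Multiset.card M ≤ N) (hMH : ∀ ζ ∈ M, ζ ∉ halfPlane w)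
    (hs : s ∈ halfPlane w) (ht : t ∈ halfPlane w) :
    (N : ℂ) + (t - s) * (M.map fun ζ => 1 / (s - ζ)).sum ≠ 0 := by
  have hw : w ≠ 0 := by rintro rfl; simp at hs
  set ρ := (w * s).re
  have hR : 0 < (2 * ρ)⁻¹ := inv_pos.mpr (mul_pos two_pos hs)
  set Q := ((M.map fun ζ => w * s - w * ζ).map (·⁻¹)).sum
  have hQ : (M.map fun ζ => 1 / (s - ζ)).sum = w * Q := by
    simp only [Q, Multiset.map_map, ← Multiset.sum_map_mul_left]
    refine congrArg _ (Multiset.map_congr rfl fun ζ _ => ?_)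
    rw [Function.comp_apply, ← mul_sub, mul_inv, ← mul_assoc, mul_inv_cancel₀ hw, one_div,
      one_mul]
  have hQball : Q ∈ closedBall ((N * (2 * ρ)⁻¹ : ℝ) : ℂ) (N * (2 * ρ)⁻¹) := by
    refine Complex.closedBall_self_subset ?_ (Complex.sum_inv_mem_closedBall hs ?_)
    · rw [Multiset.card_map]; gcongr
    · simp only [Multiset.mem_map]
      rintro _ ⟨ζ, hζ, rfl⟩
      have := hMH ζ hζ
      simp only [mem_halfPlane, not_lt] at this
      simp only [Complex.sub_re]; linarith
  rw [hQ]
  intro h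
  have hQ0 : Q ≠ 0 := by
    rintro hQ0
    simp only [hQ0, mul_zero, add_zero, Nat.cast_eq_zero] at h
    omega
  have hQinv : Q⁻¹ = (w * s - w * t) / N := by
    have hN0 : (N : ℂ) ≠ 0 := by exact_mod_cast hN.ne'
    refine inv_eq_of_mul_eq_one_right ?_
    field_simp
    linear_combination -h
  have := (Complex.mem_closedBall_self_iff_le_re_inv (by positivity) hQ0).mp hQball
  rw [hQinv, show ((N : ℂ)) = ((N : ℝ) : ℂ) by simp, Complex.div_ofReal_re, Complex.sub_re] at this
  have hN' : (0 : ℝ) < N := by exact_mod_cast hN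
  rw [show (2 * (N * (2 * ρ)⁻¹))⁻¹ = ρ / N by field_simp,
    div_le_div_iff_of_pos_right hN'] at this
  simp only [mem_halfPlane] at ht
  linarith

namespace Polynomial

lemma polar_eval_ne_zero {w : ℂ} {N : ℕ} (hN : 0 < N) {φ : ℂ[X]}
    (hdeg : φ.natDegree ≤ N) (hφ : ∀ z ∈ halfPlane w, φ.eval z ≠ 0)
    {s t : ℂ} (hs : s ∈ halfPlane w) (ht : t ∈ halfPlane w) :
    N * φ.eval s + (t - s) * φ.derivative.eval s ≠ 0 := by
  rw [(IsAlgClosed.splits φ).eval_derivative_eq_eval_mul_sum (hφ s hs),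
    show ∀ a b c : ℂ, N * a + b * (a * c) = a * (N + b * c) by intros; ring]
  refine mul_ne_zero (hφ s hs) (laguerre_sum_ne_zero hN ((card_roots' φ).trans hdeg) ?_ hs ht)
  exact fun ζ hζ hζH => hφ ζ hζH (isRoot_of_mem_roots hζ)

/-- For a symmetric multi-affine `q` in `N` variables whose coefficient on every squarefree
monomial of degree `k` is `a k`, this is the diagonal polynomial `z ↦ q(z, …, z)`. -/
noncomputable def diagPoly (a : ℕ → ℂ) (N : ℕ) : ℂ[X] :=
  ∑ k ∈ range (N + 1), monomial k (a k * N.choose k)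

lemma coeff_diagPoly (a : ℕ → ℂ) (N k : ℕ) : (diagPoly a N).coeff k = a k * N.choose k := by
  rw [diagPoly, finsetSum_coeff]
  simp only [coeff_monomial, sum_ite_eq', mem_range]
  split_ifs with hk
  · rfl
  · simp [Nat.choose_eq_zero_of_lt (not_lt.mp hk)]

lemma eval_diagPoly (a : ℕ → ℂ) (N : ℕ) (ζ : ℂ) :
    (diagPoly a N).eval ζ = ∑ k ∈ range (N + 1), a k * N.choose k * ζ ^ k := by
  simp [diagPoly, eval_finsetSum]

lemma derivative_diagPoly (a : ℕ → ℂ) (N : ℕ) :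
    derivative (diagPoly a (N + 1)) = (N + 1 : ℂ) • diagPoly (fun k => a (k + 1)) N := by
  ext k
  rw [coeff_derivative, coeff_smul, coeff_diagPoly, coeff_diagPoly, smul_eq_mul]
  have := congrArg (Nat.cast : ℕ → ℂ) (Nat.add_one_mul_choose_eq N k)
  push_cast at this
  linear_combination (a (k + 1)) * this.symm

lemma smul_diagPoly_sub_X_mul_derivative (a : ℕ → ℂ) (N : ℕ) :
    (N + 1 : ℂ) • diagPoly a (N + 1) - X * derivative (diagPoly a (N + 1)) =
      (N + 1 : ℂ) • diagPoly a N := by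
  ext k
  rcases k with _ | k
  · simp [coeff_diagPoly]
  · rw [coeff_sub, coeff_X_mul, coeff_smul, coeff_smul, coeff_derivative, coeff_diagPoly,
      coeff_diagPoly, smul_eq_mul, smul_eq_mul]
    have h1 := congrArg (Nat.cast : ℕ → ℂ) (Nat.add_one_mul_choose_eq N k)
    have h2 := congrArg (Nat.cast : ℕ → ℂ) (Nat.choose_succ_succ' N k)
    push_cast at h1 h2 ⊢
    linear_combination (a (k + 1)) * ((N + 1) * h2 + h1)

lemma diagPoly_add_mul_shift (a : ℕ → ℂ) (N : ℕ) (v : ℂ) :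
    diagPoly (fun k => a k + v * a (k + 1)) N =
      diagPoly a N + v • diagPoly (fun k => a (k + 1)) N := by
  ext k
  simp only [coeff_add, coeff_smul, coeff_diagPoly, smul_eq_mul]
  ring

lemma diagPoly_polar (a : ℕ → ℂ) (N : ℕ) (v : ℂ) :
    (N + 1 : ℂ) • diagPoly a (N + 1) + (C v - X) * derivative (diagPoly a (N + 1)) =
      (N + 1 : ℂ) • diagPoly (fun k => a k + v * a (k + 1)) N := by
  rw [sub_mul, ← add_sub_assoc, add_sub_right_comm, smul_diagPoly_sub_X_mul_derivative,
    derivative_diagPoly, diagPoly_add_mul_shift, smul_add, C_mul', smul_comm]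

lemma exists_root_diagPoly_succ {w : ℂ} {a : ℕ → ℂ} {N : ℕ} {v ζ : ℂ} (hv : v ∈ halfPlane w)
    (hζ : ζ ∈ halfPlane w) (h : (diagPoly (fun k => a k + v * a (k + 1)) N).eval ζ = 0) :
    ∃ ξ ∈ halfPlane w, (diagPoly a (N + 1)).eval ξ = 0 := by
  by_contra! hφ
  refine polar_eval_ne_zero N.succ_pos ?_ hφ hζ hv ?_
  · exact natDegree_sum_le_of_forall_le _ _ fun k hk =>
      (natDegree_monomial_le _).trans (mem_range_succ_iff.mp hk)
  · have := congrArg (eval ζ) (diagPoly_polar a N v)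
    simp only [eval_add, eval_smul, eval_mul, eval_sub, eval_C, eval_X, h, smul_eq_mul,
      mul_zero] at this
    exact_mod_cast this

lemma exists_root_diagPoly_of_sum_powerset_eq_zero {ι : Type*} [DecidableEq ι] {w : ℂ}
    (hw : w ≠ 0) {v : ι → ℂ} (T : Finset ι) (hv : ∀ j ∈ T, v j ∈ halfPlane w) (a : ℕ → ℂ)
    (h : ∑ S ∈ T.powerset, a #S * ∏ j ∈ S, v j = 0) :
    ∃ ζ ∈ halfPlane w, (diagPoly a #T).eval ζ = 0 := by
  induction T using Finset.cons_induction generalizing a with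
  | empty => exact ⟨star w, star_mem_halfPlane hw, by simpa [eval_diagPoly] using h⟩
  | cons x T hx ih =>
    rw [forall_mem_cons] at hv
    rw [cons_eq_insert, sum_powerset_insert hx, ← sum_add_distrib] at h
    obtain ⟨ζ, hζ, hζ0⟩ := ih hv.2 (fun k => a k + v x * a (k + 1)) <| by
      rw [← h]
      refine sum_congr rfl fun S hS => ?_
      have hxS : x ∉ S := fun hxS => hx (mem_powerset.mp hS hxS)
      rw [card_insert_of_notMem hxS, prod_insert hxS]
      ring
    rw [card_cons]
    exact exists_root_diagPoly_succ hv.1 hζ hζ0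

end Polynomial

lemma Finset.exists_perm_map_eq_of_card_eq {σ : Type*} [DecidableEq σ] {S T : Finset σ}
    (h : #S = #T) : ∃ e : Equiv.Perm σ, S.map e.toEmbedding = T := by
  have := Set.powersetCard.isPretransitive (α := σ) (n := #S)
  obtain ⟨e, he⟩ := MulAction.exists_smul_eq (Equiv.Perm σ)
    (⟨S, rfl⟩ : Set.powersetCard σ #S) ⟨T, h.symm⟩
  refine ⟨e, ?_⟩
  simpa [smul_finset_def, map_eq_image] using congrArg Subtype.val he

namespace MvPolynomial

lemma degreeOf_aeval_le {R σ τ : Type*} [CommSemiring R] (f : σ → MvPolynomial τ R) {j : τ}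
    {i : σ} (hi : degreeOf j (f i) ≤ 1) (hne : ∀ p ≠ i, degreeOf j (f p) = 0)
    (g : MvPolynomial σ R) : degreeOf j (aeval f g) ≤ degreeOf i g := by
  classical
  conv_lhs => rw [g.as_sum, map_sum]
  refine (degreeOf_sum_le _ _ _).trans (Finset.sup_le fun m hm => ?_)
  rw [aeval_monomial, algebraMap_eq]
  refine (degreeOf_C_mul_le _ _ _).trans ((degreeOf_prod_le _ _ _).trans ?_)
  calc ∑ p ∈ m.support, degreeOf j (f p ^ m p)
      ≤ ∑ p ∈ m.support, if p = i then m p else 0 := by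
        refine sum_le_sum fun p _ => (degreeOf_pow_le _ _ _).trans ?_
        split_ifs with hp
        · subst hp; simpa using Nat.mul_le_mul_left (m p) hi
        · simp [hne p hp]
    _ ≤ m i := by rw [sum_ite_eq']; split_ifs <;> simp
    _ ≤ degreeOf i g := le_degreeOf_of_mem_support i hm

variable {σ : Type*}

noncomputable def indicatorExponent (S : Finset σ) : σ →₀ ℕ := ∑ j ∈ S, Finsupp.single j 1

lemma mapDomain_indicatorExponent (e : σ ≃ σ) (S : Finset σ) :
    Finsupp.mapDomain e (indicatorExponent S) = indicatorExponent (S.map e.toEmbedding) := by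
  simp [indicatorExponent, Finsupp.mapDomain_finsetSum, Finsupp.mapDomain_single]

variable [DecidableEq σ]

lemma indicatorExponent_apply (S : Finset σ) (j : σ) :
    indicatorExponent S j = if j ∈ S then 1 else 0 := by
  simp [indicatorExponent, Finsupp.finsetSum_apply, Finsupp.single_apply]

lemma indicatorExponent_injective : Function.Injective (indicatorExponent (σ := σ)) := by
  intro S T h
  ext j
  have := DFunLike.congr_fun h j
  simp only [indicatorExponent_apply] at this
  split_ifs at this <;> simp_all

lemma eq_indicatorExponent_support {m : σ →₀ ℕ} (hm : ∀ j, m j ≤ 1) :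
    m = indicatorExponent m.support := by
  ext j
  have := hm j
  by_cases hj : m j = 0 <;> simp [indicatorExponent_apply, hj]; omega

lemma IsSymmetric.coeff_indicatorExponent_eq {q : MvPolynomial σ ℂ} (hq : q.IsSymmetric)
    {S T : Finset σ} (h : #S = #T) :
    q.coeff (indicatorExponent S) = q.coeff (indicatorExponent T) := by
  obtain ⟨e, hT⟩ := exists_perm_map_eq_of_card_eq h
  rw [← hT, ← mapDomain_indicatorExponent, ← coeff_rename_mapDomain e e.injective, hq e]

variable [Fintype σ]

lemma eval_eq_sum_powerset_of_multiaffine {q : MvPolynomial σ ℂ}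
    (hq : ∀ m ∈ q.support, ∀ j, m j ≤ 1) (v : σ → ℂ) :
    eval v q = ∑ S ∈ univ.powerset, q.coeff (indicatorExponent S) * ∏ j ∈ S, v j := by
  have hsupp : q.support ⊆ univ.powerset.image indicatorExponent := fun m hm =>
    mem_image.mpr ⟨m.support, mem_powerset.mpr (subset_univ _),
      (eq_indicatorExponent_support (hq m hm)).symm⟩
  rw [eval_eq', sum_subset hsupp fun m _ hm => by rw [notMem_support_iff.mp hm, zero_mul],
    sum_image fun S _ T _ h => indicatorExponent_injective h]
  refine sum_congr rfl fun S _ => congrArg _ ?_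
  simp [indicatorExponent_apply, prod_ite_mem]

lemma IsSymmetric.exists_eval_eq_sum_powerset {q : MvPolynomial σ ℂ}
    (hma : ∀ m ∈ q.support, ∀ j, m j ≤ 1) (hsym : q.IsSymmetric) :
    ∃ a : ℕ → ℂ, ∀ v : σ → ℂ, eval v q = ∑ S ∈ univ.powerset, a #S * ∏ j ∈ S, v j := by
  have hfac : Function.FactorsThrough (fun S => q.coeff (indicatorExponent S)) card :=
    fun S T h => hsym.coeff_indicatorExponent_eq h
  refine ⟨Function.extend card (fun S => q.coeff (indicatorExponent S)) 0, fun v => ?_⟩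
  simp only [hfac.extend_apply]
  exact eval_eq_sum_powerset_of_multiaffine hma v

theorem IsSymmetric.exists_eval_const_eq_zero {w : ℂ} (hw : w ≠ 0) {q : MvPolynomial σ ℂ}
    (hma : ∀ m ∈ q.support, ∀ j, m j ≤ 1) (hsym : q.IsSymmetric) {v : σ → ℂ}
    (hv : ∀ j, v j ∈ halfPlane w) (h0 : eval v q = 0) :
    ∃ ζ ∈ halfPlane w, eval (fun _ => ζ) q = 0 := by
  obtain ⟨a, ha⟩ := hsym.exists_eval_eq_sum_powerset hma
  obtain ⟨ζ, hζ, hζ0⟩ := Polynomial.exists_root_diagPoly_of_sum_powerset_eq_zero hw univ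
    (fun j _ => hv j) a (ha v ▸ h0)
  refine ⟨ζ, hζ, ?_⟩
  rw [ha, ← hζ0, Polynomial.eval_diagPoly]
  simp only [prod_const]
  rw [sum_powerset_apply_card (fun k => a k * ζ ^ k)]
  refine sum_congr rfl fun k _ => ?_
  rw [nsmul_eq_mul]
  ring

end MvPolynomial

section Blocks

open MvPolynomial Function

variable {ι : Type*} [DecidableEq ι] {β : ι → Type*}

noncomputable def blockSubst (Z : (i : ι) → β i → ℂ) (i₀ : ι) (p : Σ i, β i) :
    MvPolynomial (β i₀) ℂ :=
  update (fun i j => C (Z i j)) i₀ X p.1 p.2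

lemma eval_blockSubst (Z : (i : ι) → β i → ℂ) (i₀ : ι) (v : β i₀ → ℂ) (p : Σ i, β i) :
    eval v (blockSubst Z i₀ p) = Sigma.uncurry (update Z i₀ v) p := by
  obtain ⟨i, j⟩ := p
  by_cases h : i = i₀
  · subst h; simp [blockSubst, Sigma.uncurry]
  · simp [blockSubst, Sigma.uncurry, update_of_ne h]

lemma eval_aeval_blockSubst (Z : (i : ι) → β i → ℂ) (i₀ : ι) (v : β i₀ → ℂ)
    (g : MvPolynomial (Σ i, β i) ℂ) :
    eval v (aeval (blockSubst Z i₀) g) = eval (Sigma.uncurry (update Z i₀ v)) g := by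
  induction g using MvPolynomial.induction_on <;> simp_all [eval_blockSubst]

lemma degreeOf_aeval_blockSubst_le (Z : (i : ι) → β i → ℂ) (i₀ : ι) (j : β i₀)
    (g : MvPolynomial (Σ i, β i) ℂ) :
    degreeOf j (aeval (blockSubst Z i₀) g) ≤ degreeOf ⟨i₀, j⟩ g := by
  classical
  refine degreeOf_aeval_le _ ?_ (fun p hp => ?_) g
  · simp [blockSubst]
  · obtain ⟨i, j'⟩ := p
    by_cases h : i = i₀
    · subst h
      have : j ≠ j' := fun hj => hp (by rw [hj])
      simp [blockSubst, degreeOf_X, this]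
    · simp [blockSubst, update_of_ne h, degreeOf_C]

lemma rename_blockSubst (Z : (i : ι) → β i → ℂ) (i₀ : ι) (e : Equiv.Perm (β i₀))
    (p : Σ i, β i) :
    rename e (blockSubst Z i₀ p) =
      blockSubst Z i₀ (Equiv.sigmaCongrRight (Pi.mulSingle i₀ e) p) := by
  obtain ⟨i, j⟩ := p
  by_cases h : i = i₀
  · subst h; simp [blockSubst, Equiv.sigmaCongrRight]
  · simp [blockSubst, Equiv.sigmaCongrRight, update_of_ne h, Pi.mulSingle_eq_of_ne h]

lemma isSymmetric_aeval_blockSubst (Z : (i : ι) → β i → ℂ) (i₀ : ι)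
    {g : MvPolynomial (Σ i, β i) ℂ}
    (hsym : ∀ σ : (i : ι) → Equiv.Perm (β i), rename (Equiv.sigmaCongrRight σ) g = g) :
    (aeval (blockSubst Z i₀) g).IsSymmetric := by
  intro e
  conv_rhs => rw [← hsym (Pi.mulSingle i₀ e)]
  rw [comp_aeval_apply, aeval_rename]
  exact congrArg (aeval · g) (funext (rename_blockSubst Z i₀ e))

end Blocks

section Polarization

open MvPolynomial Function

variable {ι : Type*} [DecidableEq ι] {β : ι → Type*} [∀ i, Fintype (β i)] {w : ℂ}
  {g : MvPolynomial (Σ i, β i) ℂ}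

lemma exists_eval_update_const_eq_zero (hw : w ≠ 0) (hma : ∀ m ∈ g.support, ∀ v, m v ≤ 1)
    (hsym : ∀ σ : (i : ι) → Equiv.Perm (β i), rename (Equiv.sigmaCongrRight σ) g = g)
    {Z : (i : ι) → β i → ℂ} (hZ : ∀ i j, Z i j ∈ halfPlane w)
    (h0 : eval (Sigma.uncurry Z) g = 0) (i₀ : ι) :
    ∃ ζ ∈ halfPlane w, eval (Sigma.uncurry (update Z i₀ fun _ => ζ)) g = 0 := by
  classical
  have hmaQ : ∀ m ∈ (aeval (blockSubst Z i₀) g).support, ∀ j, m j ≤ 1 := fun m hm j =>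
    (le_degreeOf_of_mem_support j hm).trans <| (degreeOf_aeval_blockSubst_le Z i₀ j g).trans <|
      degreeOf_le_iff.mpr fun m hm => hma m hm _
  obtain ⟨ζ, hζ, hζ0⟩ := (isSymmetric_aeval_blockSubst Z i₀ hsym).exists_eval_const_eq_zero hw
    hmaQ (hZ i₀) (by rwa [eval_aeval_blockSubst, update_eq_self])
  exact ⟨ζ, hζ, by rwa [eval_aeval_blockSubst] at hζ0⟩

theorem exists_eval_comp_fst_eq_zero [Fintype ι] (hw : w ≠ 0)
    (hma : ∀ m ∈ g.support, ∀ v, m v ≤ 1)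
    (hsym : ∀ σ : (i : ι) → Equiv.Perm (β i), rename (Equiv.sigmaCongrRight σ) g = g)
    {z : (Σ i, β i) → ℂ} (hz : ∀ p, z p ∈ halfPlane w) (h0 : eval z g = 0) :
    ∃ y : ι → ℂ, (∀ i, y i ∈ halfPlane w) ∧ eval (y ∘ Sigma.fst) g = 0 := by
  suffices ∀ s : Finset ι, ∃ y : ι → ℂ, (∀ i, y i ∈ halfPlane w) ∧
      ∃ Z : (i : ι) → β i → ℂ, (∀ i j, Z i j ∈ halfPlane w) ∧
        (∀ i ∈ s, Z i = fun _ => y i) ∧ eval (Sigma.uncurry Z) g = 0 by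
    obtain ⟨y, hy, Z, -, hZy, hZ0⟩ := this univ
    have : Z = fun i _ => y i := funext fun i => hZy i (mem_univ i)
    exact ⟨y, hy, by rwa [this] at hZ0⟩
  intro s
  induction s using Finset.induction_on with
  | empty =>
    exact ⟨fun _ => star w, fun _ => star_mem_halfPlane hw, Sigma.curry z, fun i j => hz _,
      by simp, by rwa [Sigma.uncurry_curry]⟩
  | insert i₀ s _ ih =>
    obtain ⟨y, hy, Z, hZ, hZy, hZ0⟩ := ih
    obtain ⟨ζ, hζ, hζ0⟩ := exists_eval_update_const_eq_zero hw hma hsym hZ hZ0 i₀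
    refine ⟨update y i₀ ζ, ?_, update Z i₀ fun _ => ζ, ?_, ?_, hζ0⟩
    · exact (forall_update_iff y fun _ x => x ∈ halfPlane w).mpr ⟨hζ, fun i _ => hy i⟩
    · exact (forall_update_iff Z fun i (x : β i → ℂ) => ∀ j, x j ∈ halfPlane w).mpr
        ⟨fun _ => hζ, fun i _ => hZ i⟩
    · intro i hi
      rcases eq_or_ne i i₀ with rfl | h
      · simp
      · simp [update_of_ne h, hZy i ((mem_insert.mp hi).resolve_left h)]

theorem isStable_rename_fst_iff [Fintype ι] (hw : w ≠ 0)
    (hma : ∀ m ∈ g.support, ∀ v, m v ≤ 1)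
    (hsym : ∀ σ : (i : ι) → Equiv.Perm (β i), rename (Equiv.sigmaCongrRight σ) g = g) :
    IsStable w (rename Sigma.fst g) ↔ IsStable w g := by
  refine ⟨fun hf z hz h0 => ?_, fun hg y hy h0 => ?_⟩
  · obtain ⟨y, hy, hy0⟩ := exists_eval_comp_fst_eq_zero hw hma hsym hz h0
    exact hf y hy (by rwa [eval_rename])
  · exact hg (y ∘ Sigma.fst) (fun p => hy p.1) (by rwa [eval_rename] at h0)

end Polarization

open MvPolynomial

theorem stmt_14_general {n : ℕ} (d : Fin n → ℕ) (f : MvPolynomial (Fin n) ℂ)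
    (g : MvPolynomial ((i : Fin n) × Fin (d i)) ℂ)
    (hma : ∀ m ∈ g.support, ∀ v, m v ≤ 1)
    (hsym : ∀ σ : (i : Fin n) → Equiv.Perm (Fin (d i)),
      rename (Equiv.sigmaCongrRight σ) g = g)
    (hsub : aeval (fun p : (i : Fin n) × Fin (d i) =>
      (X p.1 : MvPolynomial (Fin n) ℂ)) g = f)
    (w : ℂ) (hw : w ≠ 0) :
    (∀ z : Fin n → ℂ, (∀ i, 0 < (w * z i).re) → eval z f ≠ 0) ↔
      (∀ z : ((i : Fin n) × Fin (d i)) → ℂ, (∀ v, 0 < (w * z v).re) →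
        eval z g ≠ 0) := by
  have hf : rename Sigma.fst g = f := by rw [rename_eq_aeval]; exact hsub
  subst hf
  exact isStable_rename_fst_iff hw hma hsym

/-- Grace–Walsh–Szegő consequence: a polynomial `f` is `H`-stable iff its
polarization `P(f)` (the multi-affine polynomial in variables `z_{ij}`,
`1 ≤ j ≤ dᵢ`, symmetric in `z_{i1},…,z_{i dᵢ}` for each `i`, that recovers
`f` upon substituting `z_{ij} = zᵢ`) is `H`-stable. -/
theorem stmt_14 {n : ℕ} (d : Fin n → ℕ) (f : MvPolynomial (Fin n) ℂ)
    (hdeg : ∀ i, f.degreeOf i = d i)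
    (g : MvPolynomial ((i : Fin n) × Fin (d i)) ℂ)
    (hma : ∀ m ∈ g.support, ∀ v, m v ≤ 1)
    (hsym : ∀ σ : (i : Fin n) → Equiv.Perm (Fin (d i)),
      rename (Equiv.sigmaCongrRight σ) g = g)
    (hsub : aeval (fun p : (i : Fin n) × Fin (d i) =>
      (X p.1 : MvPolynomial (Fin n) ℂ)) g = f)
    (w : ℂ) (hw : w ≠ 0) :
    (∀ z : Fin n → ℂ, (∀ i, 0 < (w * z i).re) → eval z f ≠ 0) ↔
      (∀ z : ((i : Fin n) × Fin (d i)) → ℂ, (∀ v, 0 < (w * z v).re) →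
        eval z g ≠ 0) :=
  stmt_14_general d f g hma hsym hsub w hw
end

section
/- Let 𝔅 be the set of bases of a matroid on ground set {1,…,n} and let M(z) = ∑_{B∈𝔅} ∏_{i∈B} zᵢ be its basis generating polynomial. Then M(z) has the half-plane property if and only if the matroid is strongly Rayleigh, i.e. Δᵢⱼ(M)(x) ≥ 0 for all x ∈ ℝⁿ and all 1 ≤ i, j ≤ n, where Δᵢⱼ(M) = (∂M/∂zᵢ)·(∂M/∂zⱼ) − (∂²M/∂zᵢ∂zⱼ)·M. -/
/-!
For a multiaffine real polynomial `f`, nonvanishing on the product of upper half-planes is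
equivalent to `Δᵢⱼ f ≥ 0` on `ℝⁿ`. The basis generating polynomial is multiaffine and homogeneous,
and homogeneity lets one rotate any half-plane onto the upper one.

Stable ⇒ Rayleigh: `f` is affine in `zⱼ`, so `f(z) + (t - zⱼ) ∂ⱼf(z) ≠ 0` for `Im t > 0` forces
`Im (f · conj ∂ⱼf) ≥ 0` on the upper half-space; at the boundary point `x + √-1 eᵢ` this quantity
is exactly `Δᵢⱼ f (x)`.

Rayleigh ⇒ stable, by induction on the variables: write `f = h + zₘ g` with `g, h` free of `zₘ`.
Along the line `xₘ = t` the Rayleigh inequality is a nonnegative quadratic in `t` whose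
homogenization is `Δᵢⱼ (a g + b h)`, so every real pencil `a g + b h` is Rayleigh, hence stable by
induction, and `Δₘⱼ f = g ∂ⱼh - h ∂ⱼg ≥ 0`. If `h = c g` then `f = (c + zₘ) g`. Otherwise some
Wronskian `g ∂ⱼh - h ∂ⱼg` is nonzero (a vanishing Wronskian forces proportionality), and
`Im (h · conj g)` never vanishes on the connected upper half-space, is positive near a real point
where that Wronskian is positive, but would be negative at a zero of `f`.
-/

open MvPolynomial

theorem nonneg_of_forall_quadratic_nonneg {A B C : ℝ} (h : ∀ t, 0 ≤ A * t ^ 2 + B * t + C)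
    (a b : ℝ) : 0 ≤ A * a ^ 2 + B * a * b + C * b ^ 2 := by
  rcases eq_or_ne b 0 with rfl | hb
  · have hd : discrim A B C ≤ 0 := discrim_le_zero fun t => by linarith [h t]
    rw [discrim] at hd
    have h1 := h 1
    have h2 := h (-1)
    norm_num at h1 h2
    have hA : 0 ≤ A := by nlinarith
    simpa using mul_nonneg hA (sq_nonneg a)
  · have := mul_nonneg (sq_nonneg b) (h (a / b))
    field_simp at this
    linarith

theorem mul_sub_mul_nonneg_of_forall_add_mul {p₁ p₂ p₃ p₄ q₁ q₂ q₃ q₄ : ℝ}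
    (h : ∀ t, 0 ≤ (p₁ + t * q₁) * (p₂ + t * q₂) - (p₃ + t * q₃) * (p₄ + t * q₄)) (a b : ℝ) :
    0 ≤ (a * q₁ + b * p₁) * (a * q₂ + b * p₂) - (a * q₃ + b * p₃) * (a * q₄ + b * p₄) := by
  have := nonneg_of_forall_quadratic_nonneg (A := q₁ * q₂ - q₃ * q₄)
    (B := p₁ * q₂ + q₁ * p₂ - p₃ * q₄ - q₃ * p₄) (C := p₁ * p₂ - p₃ * p₄)
    (fun t => by linear_combination h t) a b
  linear_combination this

theorem im_mul_conj_nonneg_of_forall_add_mul_ne_zero {a b : ℂ}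
    (h : ∀ t : ℂ, 0 < t.im → b + t * a ≠ 0) : 0 ≤ (b * (starRingEnd ℂ) a).im := by
  by_contra! hneg
  have ha : a ≠ 0 := by
    rintro rfl
    simp at hneg
  refine h (-b / a) ?_ (by field_simp; ring)
  rw [Complex.mul_im, Complex.conj_re, Complex.conj_im] at hneg
  rw [Complex.div_im, Complex.neg_re, Complex.neg_im, ← sub_div]
  exact div_pos (by linarith) (Complex.normSq_pos.mpr ha)

namespace MvPolynomial

section PartialDerivatives

variable {σ R : Type*}

theorem pderiv_comm [CommSemiring R] (i j : σ) (p : MvPolynomial σ R) :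
    pderiv i (pderiv j p) = pderiv j (pderiv i p) := by
  induction p using MvPolynomial.induction_on with
  | C a => simp
  | add p q hp hq => simp only [map_add, hp, hq]
  | mul_X p k hp =>
    classical
    simp only [pderiv_mul, map_add, pderiv_X, hp, Pi.single_apply]
    split_ifs <;> simp only [pderiv_one, map_zero, mul_one, mul_zero, add_zero]
    ring

theorem pderiv_pderiv_eq_zero [CommSemiring R] {m : σ} {p : MvPolynomial σ R}
    (hp : pderiv m p = 0) (i : σ) : pderiv m (pderiv i p) = 0 := by
  rw [pderiv_comm, hp, map_zero]

variable [CommRing R] [IsDomain R] [CharZero R]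

theorem coeff_eq_zero_of_pderiv_eq_zero {i : σ} {p : MvPolynomial σ R} (hp : pderiv i p = 0)
    {d : σ →₀ ℕ} (hd : d i ≠ 0) : coeff d p = 0 := by
  have hle : Finsupp.single i 1 ≤ d := Finsupp.single_le_iff.mpr (Nat.one_le_iff_ne_zero.mpr hd)
  have h := coeff_pderiv (i := i) p (d - Finsupp.single i 1)
  rw [hp, coeff_zero, tsub_add_cancel_of_le hle, eq_comm, mul_eq_zero] at h
  exact h.resolve_right (Nat.cast_add_one_ne_zero _)

theorem eq_C_of_forall_pderiv_eq_zero {p : MvPolynomial σ R} (hp : ∀ i, pderiv i p = 0) :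
    p = C (coeff 0 p) := by
  classical
  ext d
  rw [coeff_C]
  split_ifs with hd
  · rw [hd]
  · obtain ⟨i, hi⟩ : ∃ i, d i ≠ 0 := by
      by_contra! h
      exact hd (Finsupp.ext h).symm
    exact coeff_eq_zero_of_pderiv_eq_zero (hp i) hi

variable [DecidableEq σ]

theorem aeval_update_of_pderiv_eq_zero {A : Type*} [CommSemiring A] [Algebra R A]
    {i : σ} {p : MvPolynomial σ R} (hp : pderiv i p = 0) (z : σ → A) (t : A) :
    aeval (Function.update z i t) p = aeval z p := by
  apply eval₂_congr
  intro k c hk hc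
  refine Function.update_of_ne ?_ _ _
  rintro rfl
  exact hc (coeff_eq_zero_of_pderiv_eq_zero hp (Finsupp.mem_support_iff.mp hk))

theorem eval_update_of_pderiv_eq_zero {i : σ} {p : MvPolynomial σ R}
    (hp : pderiv i p = 0) (x : σ → R) (t : R) : eval (Function.update x i t) p = eval x p :=
  aeval_update_of_pderiv_eq_zero hp x t

theorem aeval_update_of_pderiv_pderiv_eq_zero {A : Type*} [CommRing A] [Algebra R A] {i : σ}
    {p : MvPolynomial σ R} (hp : pderiv i (pderiv i p) = 0) (z : σ → A) (t : A) :
    aeval (Function.update z i t) p = aeval z p + (t - z i) * aeval z (pderiv i p) := by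
  have hq : pderiv i (p - X i * pderiv i p) = 0 := by simp [hp]
  have hsplit (w : σ → A) :
      aeval w p = aeval w (p - X i * pderiv i p) + w i * aeval w (pderiv i p) := by
    simp
  rw [hsplit, hsplit z, aeval_update_of_pderiv_eq_zero hq, aeval_update_of_pderiv_eq_zero hp,
    Function.update_self]
  ring

end PartialDerivatives

section SplitVariable

variable {σ R : Type*} [CommRing R] {m : σ} {g h : MvPolynomial σ R}

theorem forall_pderiv_eq_zero_of_insert [DecidableEq σ] {S : Finset σ} {p : MvPolynomial σ R}
    (hS : ∀ i ∉ insert m S, pderiv i p = 0) (hm : pderiv m p = 0) :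
    ∀ i ∉ S, pderiv i p = 0 := fun i hi => by
  rcases eq_or_ne i m with rfl | him
  · exact hm
  · exact hS i (by simp [him, hi])

theorem pderiv_add_X_mul_of_ne {i : σ} (him : i ≠ m) :
    pderiv i (h + X m * g) = pderiv i h + X m * pderiv i g := by
  simp [pderiv_X_of_ne him.symm]

theorem pderiv_add_X_mul_self (hg : pderiv m g = 0) (hh : pderiv m h = 0) :
    pderiv m (h + X m * g) = g := by
  simp [hg, hh]

theorem eval_update_add_X_mul [IsDomain R] [CharZero R] [DecidableEq σ] (hg : pderiv m g = 0)
    (hh : pderiv m h = 0) (x : σ → R) (t : R) :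
    eval (Function.update x m t) (h + X m * g) = eval x h + t * eval x g := by
  simp [eval_update_of_pderiv_eq_zero hg, eval_update_of_pderiv_eq_zero hh]

theorem pderiv_pderiv_wronskian (hg : pderiv m (pderiv m g) = 0)
    (hh : pderiv m (pderiv m h) = 0) (k : σ) :
    pderiv m (pderiv m (g * pderiv k h - h * pderiv k g)) =
      2 * (pderiv m g * pderiv k (pderiv m h) - pderiv m h * pderiv k (pderiv m g)) := by
  simp only [map_sub, pderiv_mul, map_add, pderiv_comm m k, hg, hh, map_zero]
  ring

end SplitVariable

section Multiaffine

variable {σ R : Type*} [CommRing R]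

def IsMultiaffine (p : MvPolynomial σ R) : Prop :=
  ∀ i, pderiv i (pderiv i p) = 0

theorem IsMultiaffine.pderiv {p : MvPolynomial σ R} (hp : IsMultiaffine p) (j : σ) :
    IsMultiaffine (pderiv j p) := fun i => by
  rw [pderiv_comm i j, pderiv_comm i j, hp, map_zero]

theorem IsMultiaffine.smul_add_smul {p q : MvPolynomial σ R} (hp : IsMultiaffine p)
    (hq : IsMultiaffine q) (a b : R) : IsMultiaffine (a • p + b • q) := fun i => by
  simp [hp i, hq i]

theorem IsMultiaffine.sub {p q : MvPolynomial σ R} (hp : IsMultiaffine p)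
    (hq : IsMultiaffine q) : IsMultiaffine (p - q) := fun i => by
  simp [hp i, hq i]

theorem IsMultiaffine.sum {ι : Type*} (s : Finset ι) {p : ι → MvPolynomial σ R}
    (hp : ∀ k ∈ s, IsMultiaffine (p k)) : IsMultiaffine (∑ k ∈ s, p k) := fun i => by
  simp only [map_sum]
  exact Finset.sum_eq_zero fun k hk => hp k hk i

theorem IsMultiaffine.X_mul {p : MvPolynomial σ R} (hp : IsMultiaffine p) {j : σ}
    (hj : MvPolynomial.pderiv j p = 0) : IsMultiaffine (X j * p) := fun i => by
  rcases eq_or_ne i j with rfl | hij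
  · simp [hj]
  · simp [pderiv_X_of_ne hij.symm, hp i]

theorem IsMultiaffine.sub_X_mul_pderiv {p : MvPolynomial σ R} (hp : IsMultiaffine p) (j : σ) :
    IsMultiaffine (p - X j * MvPolynomial.pderiv j p) :=
  hp.sub ((hp.pderiv j).X_mul (hp j))

theorem isMultiaffine_prod_X [Nontrivial R] (s : Finset σ) :
    IsMultiaffine (∏ k ∈ s, X k : MvPolynomial σ R) := by
  classical
  induction s using Finset.induction_on with
  | empty => simp [IsMultiaffine]
  | insert a s ha ih =>
    rw [Finset.prod_insert ha]
    refine IsMultiaffine.X_mul ih (pderiv_eq_zero_of_notMem_vars fun h => ha ?_)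
    simpa using vars_prod _ h

theorem exists_smul_eq_of_wronskian_eq_zero {K : Type*} [Field K] [CharZero K] [DecidableEq σ]
    (S : Finset σ) {g h : MvPolynomial σ K} (hg : IsMultiaffine g) (hh : IsMultiaffine h)
    (hgS : ∀ i ∉ S, pderiv i g = 0) (hhS : ∀ i ∉ S, pderiv i h = 0) (hg0 : g ≠ 0)
    (hW : ∀ j, g * pderiv j h - h * pderiv j g = 0) : ∃ c : K, c • g = h := by
  induction S using Finset.induction_on generalizing g h with
  | empty =>
    obtain ⟨a, rfl⟩ : ∃ a, g = C a :=
      ⟨_, eq_C_of_forall_pderiv_eq_zero fun i => hgS i (Finset.notMem_empty i)⟩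
    obtain ⟨b, rfl⟩ : ∃ b, h = C b :=
      ⟨_, eq_C_of_forall_pderiv_eq_zero fun i => hhS i (Finset.notMem_empty i)⟩
    have ha : a ≠ 0 := by simpa using hg0
    exact ⟨b / a, by rw [smul_eq_C_mul, ← C_mul, div_mul_cancel₀ b ha]⟩
  | insert j S _ ih =>
    rcases eq_or_ne (pderiv j g) 0 with hgj | hgj
    · have hhj : pderiv j h = 0 := by simpa [hgj, hg0] using hW j
      exact ih hg hh (forall_pderiv_eq_zero_of_insert hgS hgj)
        (forall_pderiv_eq_zero_of_insert hhS hhj) hg0 hW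
    have hW' (k : σ) :
        pderiv j g * pderiv k (pderiv j h) - pderiv j h * pderiv k (pderiv j g) = 0 := by
      have := pderiv_pderiv_wronskian (hg j) (hh j) k
      rw [hW k, map_zero, map_zero, eq_comm, mul_eq_zero] at this
      exact this.resolve_left two_ne_zero
    obtain ⟨c, hc⟩ := ih (hg.pderiv j) (hh.pderiv j)
      (forall_pderiv_eq_zero_of_insert (fun i hi => pderiv_pderiv_eq_zero (hgS i hi) j) (hg j))
      (forall_pderiv_eq_zero_of_insert (fun i hi => pderiv_pderiv_eq_zero (hhS i hi) j) (hh j))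
      hgj hW'
    refine ⟨c, ?_⟩
    have hfac : (c • g - h) * pderiv j g = 0 := by
      rw [← hW j, ← hc, smul_eq_C_mul, smul_eq_C_mul]
      ring
    exact sub_eq_zero.mp ((mul_eq_zero.mp hfac).resolve_right hgj)

end Multiaffine

section UpperHalfSpace

variable {σ : Type*}

def upperHalfSpace (σ : Type*) : Set (σ → ℂ) :=
  {z | ∀ i, 0 < (z i).im}

theorem upperHalfSpace_eq_pi :
    upperHalfSpace σ = Set.univ.pi fun _ => {w : ℂ | 0 < w.im} := by
  ext z
  simp [upperHalfSpace]

theorem closure_upperHalfSpace : closure (upperHalfSpace σ) = {z | ∀ i, 0 ≤ (z i).im} := by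
  ext z
  simp [upperHalfSpace_eq_pi, closure_pi_set]

theorem isPreconnected_upperHalfSpace : IsPreconnected (upperHalfSpace σ) := by
  rw [upperHalfSpace_eq_pi]
  exact isPreconnected_univ_pi fun _ => (convex_halfSpace_im_gt 0).isPreconnected

theorem update_mem_upperHalfSpace [DecidableEq σ] {z : σ → ℂ} (hz : z ∈ upperHalfSpace σ)
    {i : σ} {t : ℂ} (ht : 0 < t.im) : Function.update z i t ∈ upperHalfSpace σ := fun k => by
  rcases eq_or_ne k i with rfl | hki
  · simpa using ht
  · simpa [Function.update_of_ne hki] using hz k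

theorem update_I_mem_closure_upperHalfSpace [DecidableEq σ] (x : σ → ℝ) (i : σ) :
    Function.update (fun k => (x k : ℂ)) i (x i + Complex.I) ∈ closure (upperHalfSpace σ) := by
  rw [closure_upperHalfSpace]
  intro k
  rcases eq_or_ne k i with rfl | hki
  · simp
  · simp [Function.update_of_ne hki]

theorem continuous_aeval (p : MvPolynomial σ ℝ) : Continuous fun z : σ → ℂ => aeval z p := by
  simpa only [aeval_def, ← eval_map] using continuous_eval _

theorem continuous_im_aeval_mul_conj (p q : MvPolynomial σ ℝ) :
    Continuous fun z : σ → ℂ => (aeval z p * (starRingEnd ℂ) (aeval z q)).im :=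
  Complex.continuous_im.comp
    ((continuous_aeval p).mul (Complex.continuous_conj.comp (continuous_aeval q)))

theorem aeval_ofReal (x : σ → ℝ) (p : MvPolynomial σ ℝ) :
    aeval (fun k => (x k : ℂ)) p = eval x p := by
  rw [aeval_def, eval, coe_eval₂Hom, ← Complex.ofRealHom_eq_coe, eval₂_comp_left]
  rfl

theorem im_aeval_mul_conj_aeval_update_I [DecidableEq σ] {p q : MvPolynomial σ ℝ} {i : σ}
    (hp : pderiv i (pderiv i p) = 0) (hq : pderiv i (pderiv i q) = 0) (x : σ → ℝ) :
    (aeval (Function.update (fun k => (x k : ℂ)) i (x i + Complex.I)) p *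
        (starRingEnd ℂ) (aeval (Function.update (fun k => (x k : ℂ)) i (x i + Complex.I)) q)).im =
      eval x (pderiv i p) * eval x q - eval x p * eval x (pderiv i q) := by
  simp only [aeval_update_of_pderiv_pderiv_eq_zero hp, aeval_update_of_pderiv_pderiv_eq_zero hq,
    aeval_ofReal, add_sub_cancel_left]
  simp [Complex.mul_im]
  ring

end UpperHalfSpace

section Stability

variable {σ : Type*}

def IsStable (p : MvPolynomial σ ℝ) : Prop :=
  ∀ z ∈ upperHalfSpace σ, aeval z p ≠ 0

def IsRayleigh (p : MvPolynomial σ ℝ) : Prop :=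
  ∀ (x : σ → ℝ) (i j : σ),
    0 ≤ eval x (pderiv i p) * eval x (pderiv j p) - eval x (pderiv i (pderiv j p)) * eval x p

theorem IsStable.im_mul_conj_pderiv_nonneg [DecidableEq σ] {p : MvPolynomial σ ℝ}
    (hs : IsStable p) {j : σ} (hp : pderiv j (pderiv j p) = 0) {z : σ → ℂ}
    (hz : z ∈ upperHalfSpace σ) : 0 ≤ (aeval z p * (starRingEnd ℂ) (aeval z (pderiv j p))).im := by
  set a := aeval z (pderiv j p)
  have hline (t : ℂ) (ht : 0 < t.im) : (aeval z p - z j * a) + t * a ≠ 0 := by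
    convert hs _ (update_mem_upperHalfSpace hz ht) using 1
    rw [aeval_update_of_pderiv_pderiv_eq_zero hp]
    ring
  have hsplit : aeval z p * (starRingEnd ℂ) a =
      (aeval z p - z j * a) * (starRingEnd ℂ) a + z j * (Complex.normSq a : ℂ) := by
    rw [← Complex.mul_conj]
    ring
  rw [hsplit, Complex.add_im, Complex.im_mul_ofReal]
  exact add_nonneg (im_mul_conj_nonneg_of_forall_add_mul_ne_zero hline)
    (mul_nonneg (hz j).le (Complex.normSq_nonneg a))

theorem IsStable.isRayleigh [DecidableEq σ] {p : MvPolynomial σ ℝ} (hp : IsMultiaffine p)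
    (hs : IsStable p) : IsRayleigh p := by
  intro x i j
  have h := le_on_closure (fun w hw => hs.im_mul_conj_pderiv_nonneg (hp j) hw)
    continuousOn_const (continuous_im_aeval_mul_conj _ _).continuousOn
    (update_I_mem_closure_upperHalfSpace x i)
  rw [im_aeval_mul_conj_aeval_update_I (hp i) (hp.pderiv j i)] at h
  linarith

theorem isStable_add_X_mul (m : σ) {g h : MvPolynomial σ ℝ}
    (hstab : ∀ a b : ℝ, (a, b) ≠ 0 → IsStable (a • g + b • h))
    (hpos : ∃ w ∈ upperHalfSpace σ, 0 < (aeval w h * (starRingEnd ℂ) (aeval w g)).im) :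
    IsStable (h + X m * g) := by
  have hgs : IsStable g := by simpa using hstab 1 0 (by simp)
  -- a real value of `h(w) conj g(w)` would make a nontrivial real pencil vanish at `w`
  have hne : ∀ w ∈ upperHalfSpace σ, (aeval w h * (starRingEnd ℂ) (aeval w g)).im ≠ 0 := by
    intro w hw him
    set r := (aeval w h * (starRingEnd ℂ) (aeval w g)).re
    have hr : aeval w h * (starRingEnd ℂ) (aeval w g) = r := Complex.ext rfl (by simpa using him)
    refine hstab (-r) (Complex.normSq (aeval w g)) (by simp [hgs w hw]) w hw ?_
    simp only [map_add, map_smul, Complex.real_smul, Complex.ofReal_neg, ← Complex.mul_conj, ← hr]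
    ring
  intro z hz hfz
  have hneg : (aeval z h * (starRingEnd ℂ) (aeval z g)).im < 0 := by
    have hh : aeval z h = -(z m * aeval z g) := by simpa [add_eq_zero_iff_eq_neg] using hfz
    rw [hh, neg_mul, mul_assoc, Complex.mul_conj, Complex.neg_im, Complex.im_mul_ofReal,
      neg_lt_zero]
    exact mul_pos (hz m) (Complex.normSq_pos.mpr (hgs z hz))
  obtain ⟨w, hw, hposw⟩ := hpos
  obtain ⟨v, hv, hv0⟩ := isPreconnected_upperHalfSpace.intermediate_value hz hw
    (continuous_im_aeval_mul_conj h g).continuousOn ⟨hneg.le, hposw.le⟩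
  exact hne v hv hv0

theorem exists_mem_upperHalfSpace_im_mul_conj_pos [DecidableEq σ] {g h : MvPolynomial σ ℝ}
    {j : σ} (hg : pderiv j (pderiv j g) = 0) (hh : pderiv j (pderiv j h) = 0) {x : σ → ℝ}
    (hW : 0 < eval x (g * pderiv j h - h * pderiv j g)) :
    ∃ w ∈ upperHalfSpace σ, 0 < (aeval w h * (starRingEnd ℂ) (aeval w g)).im := by
  set y := Function.update (fun k => (x k : ℂ)) j (x j + Complex.I) with hy
  have hpos : 0 < (aeval y h * (starRingEnd ℂ) (aeval y g)).im := by
    rw [hy, im_aeval_mul_conj_aeval_update_I hh hg]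
    simpa [mul_comm] using hW
  obtain ⟨w, hw, hwU⟩ := mem_closure_iff.mp (update_I_mem_closure_upperHalfSpace x j) _
    (isOpen_lt continuous_const (continuous_im_aeval_mul_conj h g)) hpos
  exact ⟨w, hwU, hw⟩

section Pencil

variable {m : σ} {g h : MvPolynomial σ ℝ}

theorem IsRayleigh.wronskian_nonneg (hg : pderiv m g = 0) (hh : pderiv m h = 0)
    (hR : IsRayleigh (h + X m * g)) {j : σ} (hjm : j ≠ m) (x : σ → ℝ) :
    0 ≤ eval x (g * pderiv j h - h * pderiv j g) := by
  have hW := hR x m j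
  rw [pderiv_add_X_mul_of_ne hjm, pderiv_add_X_mul_self hg hh,
    pderiv_add_X_mul_self (pderiv_pderiv_eq_zero hg j) (pderiv_pderiv_eq_zero hh j)] at hW
  convert hW using 1
  simp
  ring

variable [DecidableEq σ]

theorem IsRayleigh.smul_add_smul (hg : pderiv m g = 0) (hh : pderiv m h = 0)
    (hR : IsRayleigh (h + X m * g)) (a b : ℝ) : IsRayleigh (a • g + b • h) := by
  intro x i j
  have hP : pderiv m (a • g + b • h) = 0 := by simp [hg, hh]
  rcases eq_or_ne i m with rfl | him
  · rw [pderiv_comm, hP]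
    simp
  rcases eq_or_ne j m with rfl | hjm
  · simp [hP]
  have hline (t : ℝ) := hR (Function.update x m t) i j
  simp only [pderiv_add_X_mul_of_ne him, pderiv_add_X_mul_of_ne hjm] at hline
  simp only [eval_update_add_X_mul, hg, hh, pderiv_pderiv_eq_zero,
    pderiv_pderiv_eq_zero (pderiv_pderiv_eq_zero hg j) i,
    pderiv_pderiv_eq_zero (pderiv_pderiv_eq_zero hh j) i] at hline
  simpa [smul_eval] using mul_sub_mul_nonneg_of_forall_add_mul hline a b

theorem eq_zero_or_isStable_add_X_mul (S : Finset σ) (hg : IsMultiaffine g)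
    (hh : IsMultiaffine h) (hgS : ∀ i ∉ S, pderiv i g = 0) (hhS : ∀ i ∉ S, pderiv i h = 0)
    (hgm : pderiv m g = 0) (hhm : pderiv m h = 0) (hR : IsRayleigh (h + X m * g))
    (hpencil : ∀ a b : ℝ, a • g + b • h = 0 ∨ IsStable (a • g + b • h)) :
    h + X m * g = 0 ∨ IsStable (h + X m * g) := by
  rcases eq_or_ne g 0 with rfl | hg0
  · simpa using hpencil 0 1
  by_cases hprop : ∃ c : ℝ, c • g = h
  · obtain ⟨c, rfl⟩ := hprop
    have hgs : IsStable g := by simpa [hg0] using hpencil 1 0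
    refine Or.inr fun z hz => ?_
    have hfac : aeval z (c • g + X m * g) = (c + z m) * aeval z g := by
      simp [Complex.real_smul]
      ring
    rw [hfac]
    refine mul_ne_zero (fun h0 => (hz m).ne' ?_) (hgs z hz)
    simpa using congrArg Complex.im h0
  simp only [not_exists] at hprop
  have hind := (LinearIndependent.pair_iff' hg0).mpr hprop
  have hstab (a b : ℝ) (hab : (a, b) ≠ 0) : IsStable (a • g + b • h) :=
    (hpencil a b).resolve_left fun h0 => hab (by
      obtain ⟨rfl, rfl⟩ := LinearIndependent.pair_iff.mp hind a b h0
      rfl)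
  obtain ⟨j, hj⟩ : ∃ j, g * pderiv j h - h * pderiv j g ≠ 0 := by
    by_contra! hW
    obtain ⟨c, hc⟩ := exists_smul_eq_of_wronskian_eq_zero S hg hh hgS hhS hg0 hW
    exact hprop c hc
  have hjm : j ≠ m := by
    rintro rfl
    simp [hgm, hhm] at hj
  obtain ⟨x, hx⟩ : ∃ x, eval x (g * pderiv j h - h * pderiv j g) ≠ 0 := by
    by_contra! h0
    exact hj (MvPolynomial.funext fun x => by simpa using h0 x)
  exact Or.inr (isStable_add_X_mul m hstab (exists_mem_upperHalfSpace_im_mul_conj_pos (hg j)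
    (hh j) ((hR.wronskian_nonneg hgm hhm hjm x).lt_of_ne' hx)))

end Pencil

theorem IsRayleigh.eq_zero_or_isStable [DecidableEq σ] (S : Finset σ) {f : MvPolynomial σ ℝ}
    (hf : IsMultiaffine f) (hS : ∀ i ∉ S, pderiv i f = 0) (hR : IsRayleigh f) :
    f = 0 ∨ IsStable f := by
  induction S using Finset.induction_on generalizing f with
  | empty =>
    obtain ⟨a, rfl⟩ : ∃ a, f = C a :=
      ⟨_, eq_C_of_forall_pderiv_eq_zero fun i => hS i (Finset.notMem_empty i)⟩
    rcases eq_or_ne a 0 with rfl | ha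
    · exact Or.inl (map_zero C)
    · exact Or.inr fun z _ => by simpa using ha
  | insert m S _ ih =>
    have hgm : pderiv m (pderiv m f) = 0 := hf m
    have hhm : pderiv m (f - X m * pderiv m f) = 0 := by simp [hf m]
    have hgS := forall_pderiv_eq_zero_of_insert (fun i hi => pderiv_pderiv_eq_zero (hS i hi) m)
      hgm
    have hhS := forall_pderiv_eq_zero_of_insert (S := S) (fun i hi => by
      have hmi : m ≠ i := fun hmi => hi (hmi ▸ Finset.mem_insert_self m S)
      simp [pderiv_X_of_ne hmi, hS i hi, pderiv_comm i m]) hhm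
    rw [← sub_add_cancel f (X m * pderiv m f)] at hR ⊢
    exact eq_zero_or_isStable_add_X_mul S (hf.pderiv m) (hf.sub_X_mul_pderiv m) hgS hhS hgm hhm
      hR fun a b => ih ((hf.pderiv m).smul_add_smul (hf.sub_X_mul_pderiv m) a b)
        (fun i hi => by simp [hgS i hi, hhS i hi]) (hR.smul_add_smul hgm hhm a b)

theorem IsRayleigh.isStable [DecidableEq σ] {f : MvPolynomial σ ℝ} (hf : IsMultiaffine f)
    (hR : IsRayleigh f) (hf0 : f ≠ 0) : IsStable f :=
  (hR.eq_zero_or_isStable f.vars hf fun _ => pderiv_eq_zero_of_notMem_vars).resolve_left hf0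

theorem isStable_iff_isRayleigh [DecidableEq σ] {f : MvPolynomial σ ℝ} (hf : IsMultiaffine f)
    (hf0 : f ≠ 0) : IsStable f ↔ IsRayleigh f :=
  ⟨IsStable.isRayleigh hf, fun hR => hR.isStable hf hf0⟩

end Stability

section HalfPlaneProperty

variable {σ : Type*}

/-- `{ζ | 0 < re (w * ζ)}`, `w ≠ 0`, runs through all open half-planes with `0` on the boundary. -/
def HasHalfPlaneProperty (p : MvPolynomial σ ℝ) : Prop :=
  ∃ w : ℂ, w ≠ 0 ∧ ∀ z : σ → ℂ, (∀ i, 0 < (w * z i).re) → aeval z p ≠ 0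

theorem aeval_smul_of_isHomogeneous {R A : Type*} [CommSemiring R] [CommSemiring A]
    [Algebra R A] {p : MvPolynomial σ R} {n : ℕ} (hp : p.IsHomogeneous n) (c : A) (z : σ → A) :
    aeval (c • z) p = c ^ n * aeval z p := by
  conv_lhs => rw [p.as_sum]
  conv_rhs => rw [p.as_sum]
  simp only [map_sum, aeval_monomial, Finset.mul_sum]
  refine Finset.sum_congr rfl fun d hd => ?_
  have hdeg : d.degree = n := by
    rw [Finsupp.degree_eq_weight_one]
    exact hp (mem_support_iff.mp hd)
  simp only [Pi.smul_apply, smul_eq_mul, mul_pow, Finsupp.prod_mul]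
  rw [Finsupp.prod, Finset.prod_pow_eq_pow_sum, ← Finsupp.degree_apply, hdeg]
  ring

theorem hasHalfPlaneProperty_iff_isStable {p : MvPolynomial σ ℝ} {n : ℕ}
    (hp : p.IsHomogeneous n) : HasHalfPlaneProperty p ↔ IsStable p := by
  constructor
  · rintro ⟨w, hw, hH⟩ z hz h0
    refine hH ((-Complex.I / w) • z) (fun i => ?_) ?_
    · simpa [← mul_assoc, mul_div_cancel₀ _ hw] using hz i
    · rw [aeval_smul_of_isHomogeneous hp, h0, mul_zero]
  · exact fun hs => ⟨-Complex.I, by simp, fun z hz => hs z fun i => by simpa using hz i⟩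

theorem isMultiaffine_sum_prod_X (B : Finset (Finset σ)) :
    IsMultiaffine (∑ b ∈ B, ∏ i ∈ b, X i : MvPolynomial σ ℝ) :=
  IsMultiaffine.sum B fun b _ => isMultiaffine_prod_X b

theorem isHomogeneous_sum_prod_X {B : Finset (Finset σ)} {r : ℕ} (hB : ∀ b ∈ B, b.card = r) :
    (∑ b ∈ B, ∏ i ∈ b, X i : MvPolynomial σ ℝ).IsHomogeneous r :=
  IsHomogeneous.sum _ _ _ fun b hb => by
    simpa [hB b hb] using IsHomogeneous.prod b _ (fun _ => 1) fun i _ => isHomogeneous_X ℝ i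

theorem sum_prod_X_ne_zero {B : Finset (Finset σ)} (hB : B.Nonempty) :
    (∑ b ∈ B, ∏ i ∈ b, X i : MvPolynomial σ ℝ) ≠ 0 := fun h0 => by
  have := congrArg (eval fun _ => (1 : ℝ)) h0
  simp [hB.ne_empty] at this

end HalfPlaneProperty

end MvPolynomial

theorem stmt_15_general {n : ℕ} (B : Finset (Finset (Fin n)))
    (hne : B.Nonempty)
    (hcard : ∀ A ∈ B, ∀ A' ∈ B, A.card = A'.card)
    (M : MvPolynomial (Fin n) ℝ)
    (hM : M = ∑ b ∈ B, ∏ i ∈ b, X i) :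
    (∃ w : ℂ, w ≠ 0 ∧ ∀ z : Fin n → ℂ, (∀ i, 0 < (w * z i).re) → aeval z M ≠ 0) ↔
      ∀ (x : Fin n → ℝ) (i j : Fin n),
        0 ≤ eval x (pderiv i M) * eval x (pderiv j M) -
              eval x (pderiv i (pderiv j M)) * eval x M := by
  subst hM
  obtain ⟨b₀, hb₀⟩ := hne
  exact (hasHalfPlaneProperty_iff_isStable
      (isHomogeneous_sum_prod_X fun b hb => hcard b hb b₀ hb₀)).trans
    (isStable_iff_isRayleigh (isMultiaffine_sum_prod_X B) (sum_prod_X_ne_zero ⟨b₀, hb₀⟩))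

/-- A matroid is strongly Rayleigh if and only if it has the half-plane
property: the basis generating polynomial `M(z) = ∑_{B∈𝔅} ∏_{i∈B} zᵢ` has
the half-plane property iff `Δᵢⱼ(M)(x) ≥ 0` for all `x ∈ ℝⁿ` and `i, j`. -/
theorem stmt_15 {n : ℕ} (B : Finset (Finset (Fin n)))
    (hne : B.Nonempty)
    (hcard : ∀ A ∈ B, ∀ A' ∈ B, A.card = A'.card)
    (hex : ∀ A ∈ B, ∀ A' ∈ B, ∀ x ∈ A \ A', ∃ y ∈ A' \ A, insert y (A.erase x) ∈ B)
    (M : MvPolynomial (Fin n) ℝ)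
    (hM : M = ∑ b ∈ B, ∏ i ∈ b, X i) :
    (∃ w : ℂ, w ≠ 0 ∧ ∀ z : Fin n → ℂ, (∀ i, 0 < (w * z i).re) → aeval z M ≠ 0) ↔
      ∀ (x : Fin n → ℝ) (i j : Fin n),
        0 ≤ eval x (pderiv i M) * eval x (pderiv j M) -
              eval x (pderiv i (pderiv j M)) * eval x M :=
  stmt_15_general B hne hcard M hM
end
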